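/- arXiv:1303.3903 — 16 statements merged into one kernel-verified Lean document; each statement's English description precedes it below -/
import Mathlib

section
/- Let R be a commutative ring, A a commutative R-algebra, and {·,·} a Poisson structure on A. Then there exists a unique R-bilinear map [·,·] : Ω[A⁄R] × Ω[A⁄R] → Ω[A⁄R] such that [a•Du, b•Dv] = a{u,b}•Dv + b{a,v}•Du + (ab)•D{u,v} for all a,b,u,v ∈ A. Moreover this bracket is alternating and satisfies the Jacobi identity, so it makes Ω[A⁄R] a Lie algebra over R; in particular [Du, Dv] = D{u,v} for all u,v ∈ A. (Theorem 3.8, first part.) -/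
/-!
`Ω[A⁄R]` is the quotient of the free module `A →₀ A` by `kerTotal`, so the Lie derivative `L_X`
along a derivation `X` of `A` (with `L_X (b • D v) = X b • D v + b • D (X v)`) descends from the
free module, while the anchor `ρ : Ω[A⁄R] → Der(A)`, `D u ↦ {u, ·}`, and the Poisson bivector
`π(α, β) = ⟨ρ α, β⟩` come from the universal property of `D`. The bracket is the Koszul bracket
`[α, β] = L_{ρα} β - L_{ρβ} α - D (π(α, β))`, bilinear by construction; its value on
`a • D u, b • D v` is the required formula, and these elements span `Ω[A⁄R]`, which gives
uniqueness. Alternation is checked on the spanning elements. For the Jacobi identity, the Leibniz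
rule `[α, f β] = f [α, β] + ρ α f • β` and `ρ [α, β] = [ρ α, ρ β]` make the Jacobiator
`A`-trilinear, and on exact forms it is `D` of the Jacobiator of `{·,·}`.
-/

section

variable {R A : Type*} [CommRing R] [CommRing A] [Algebra R A]

namespace LinearMap

variable {M N Q : Type*} [AddCommGroup M] [AddCommGroup N] [AddCommGroup Q]
  [Module R M] [Module R N] [Module R Q]

noncomputable def descend (e : M →ₗ[R] N) (he : Function.Surjective e) (l : M →ₗ[R] Q)
    (hl : ker e ≤ ker l) : N →ₗ[R] Q :=
  (ker e).liftQ l hl ∘ₗ (e.quotKerEquivOfSurjective he).symm.toLinearMap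

@[simp]
theorem descend_apply (e : M →ₗ[R] N) (he : Function.Surjective e) (l : M →ₗ[R] Q)
    (hl : ker e ≤ ker l) (m : M) : descend e he l hl (e m) = l m := by
  simp [descend]

def jacobiator (B : M →ₗ[R] M →ₗ[R] M) (x y z : M) : M :=
  B x (B y z) + B y (B z x) + B z (B x y)

theorem jacobiator_cyclic (B : M →ₗ[R] M →ₗ[R] M) (x y z : M) :
    B.jacobiator x y z = B.jacobiator z x y := by
  unfold jacobiator
  abel

theorem jacobiator_add_right (B : M →ₗ[R] M →ₗ[R] M) (x y z z' : M) :
    B.jacobiator x y (z + z') = B.jacobiator x y z + B.jacobiator x y z' := by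
  simp only [jacobiator, map_add, add_apply]
  abel

end LinearMap

namespace KaehlerDifferential

theorem smul_D_induction {p : Ω[A⁄R] → Prop} (x : Ω[A⁄R])
    (smul_D : ∀ a u : A, p (a • D R A u)) (add : ∀ x y, p x → p y → p (x + y)) : p x := by
  obtain ⟨ξ, rfl⟩ := linearCombination_surjective R A x
  induction ξ using Finsupp.induction_linear with
  | zero => simpa using smul_D 0 0
  | add ξ η hξ hη => simpa using add _ _ hξ hη
  | single u a => simpa using smul_D a u

theorem linearMap_ext_smul_D {M : Type*} [AddCommGroup M] [Module R M]
    {f g : Ω[A⁄R] →ₗ[R] M} (h : ∀ a u : A, f (a • D R A u) = g (a • D R A u)) : f = g := by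
  refine LinearMap.ext fun x => ?_
  induction x using smul_D_induction with
  | smul_D a u => exact h a u
  | add x y hx hy => simp [hx, hy]

theorem linearMap_ext₂_smul_D {M : Type*} [AddCommGroup M] [Module R M]
    {f g : Ω[A⁄R] →ₗ[R] Ω[A⁄R] →ₗ[R] M}
    (h : ∀ a u b v : A, f (a • D R A u) (b • D R A v) = g (a • D R A u) (b • D R A v)) :
    f = g :=
  linearMap_ext_smul_D fun a u => linearMap_ext_smul_D fun b v => h a u b v

theorem eq_zero_of_cyclic_of_smul_right {M : Type*} [AddCommGroup M] [Module A M]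
    (T : Ω[A⁄R] → Ω[A⁄R] → Ω[A⁄R] → M)
    (cyclic : ∀ α β γ, T α β γ = T γ α β)
    (add_right : ∀ α β γ γ', T α β (γ + γ') = T α β γ + T α β γ')
    (smul_right : ∀ α β (c : A) γ, T α β (c • γ) = c • T α β γ)
    (D_D_D : ∀ u v w : A, T (D R A u) (D R A v) (D R A w) = 0) (α β γ : Ω[A⁄R]) :
    T α β γ = 0 := by
  have of_D_right : ∀ α β, (∀ w, T α β (D R A w) = 0) → ∀ γ, T α β γ = 0 := fun α β h γ => by
    induction γ using smul_D_induction with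
    | smul_D c w => rw [smul_right, h, smul_zero]
    | add γ γ' hγ hγ' => rw [add_right, hγ, hγ', add_zero]
  refine of_D_right α β (fun w => ?_) γ
  rw [cyclic]
  refine of_D_right (D R A w) α (fun v => ?_) β
  rw [cyclic]
  exact of_D_right (D R A v) (D R A w) (D_D_D v w) α

theorem linearCombination_restrictScalars_surjective :
    Function.Surjective ((Finsupp.linearCombination A (D R A)).restrictScalars R) :=
  linearCombination_surjective R A

theorem smul_D_eq_linearCombination (a u : A) :
    a • D R A u = (Finsupp.linearCombination A (D R A)).restrictScalars R (Finsupp.single u a) := by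
  simp

open Finsupp in
noncomputable def lieDerivativeFinsupp (X : Derivation R A A) : (A →₀ A) →ₗ[R] Ω[A⁄R] :=
  (linearCombination A (D R A)).restrictScalars R ∘ₗ mapRange.linearMap X.toLinearMap
    + (linearCombination A fun v => D R A (X v)).restrictScalars R

@[simp]
theorem lieDerivativeFinsupp_single (X : Derivation R A A) (v b : A) :
    lieDerivativeFinsupp X (Finsupp.single v b) = X b • D R A v + b • D R A (X v) := by
  simp [lieDerivativeFinsupp]

theorem lieDerivativeFinsupp_smul (X : Derivation R A A) (c : A) (ξ : A →₀ A) :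
    lieDerivativeFinsupp X (c • ξ)
      = c • lieDerivativeFinsupp X ξ + X c • Finsupp.linearCombination A (D R A) ξ := by
  induction ξ using Finsupp.induction_linear with
  | zero => simp
  | add ξ η hξ hη =>
    simp only [smul_add, map_add, hξ, hη]
    module
  | single v b =>
    rw [Finsupp.smul_single, smul_eq_mul]
    simp only [lieDerivativeFinsupp_single, Derivation.leibniz, Finsupp.linearCombination_single]
    module

theorem ker_linearCombination_le_ker_lieDerivativeFinsupp (X : Derivation R A A) :
    LinearMap.ker ((Finsupp.linearCombination A (D R A)).restrictScalars R)
      ≤ LinearMap.ker (lieDerivativeFinsupp X) := by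
  intro ξ hξ
  rw [LinearMap.ker_restrictScalars, Submodule.restrictScalars_mem, kerTotal_eq] at hξ
  rw [LinearMap.mem_ker]
  induction hξ using Submodule.span_induction with
  | mem ξ hξ =>
    obtain (⟨⟨x, y⟩, rfl⟩ | ⟨⟨x, y⟩, rfl⟩) | ⟨r, rfl⟩ := hξ
    · simp
    · simp only [map_sub, map_add, lieDerivativeFinsupp_single, Derivation.map_one_eq_zero,
        Derivation.leibniz, smul_add, zero_smul, add_zero, smul_eq_mul, one_smul, zero_add]
      module
    · simp
  | zero => simp
  | add ξ η _ _ hξ hη => simp [hξ, hη]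
  | smul c ξ hξ h =>
    rw [lieDerivativeFinsupp_smul, h, LinearMap.mem_ker.mp ((kerTotal_eq R A).ge hξ)]
    simp

noncomputable def lieDerivative : Derivation R A A →ₗ[R] Ω[A⁄R] →ₗ[R] Ω[A⁄R] where
  toFun X := LinearMap.descend _ linearCombination_restrictScalars_surjective
    (lieDerivativeFinsupp X) (ker_linearCombination_le_ker_lieDerivativeFinsupp X)
  map_add' X Y := linearMap_ext_smul_D fun a u => by
    rw [smul_D_eq_linearCombination, LinearMap.add_apply, LinearMap.descend_apply,
      LinearMap.descend_apply, LinearMap.descend_apply]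
    simp only [lieDerivativeFinsupp_single, Derivation.add_apply, map_add]
    module
  map_smul' r X := linearMap_ext_smul_D fun a u => by
    rw [smul_D_eq_linearCombination, LinearMap.smul_apply, LinearMap.descend_apply,
      LinearMap.descend_apply]
    simp only [lieDerivativeFinsupp_single, Derivation.smul_apply, Derivation.map_smul,
      RingHom.id_apply, smul_assoc]
    module

@[simp]
theorem lieDerivative_smul_D (X : Derivation R A A) (b v : A) :
    lieDerivative X (b • D R A v) = X b • D R A v + b • D R A (X v) := by
  rw [smul_D_eq_linearCombination]
  exact (LinearMap.descend_apply _ _ _ _ _).trans (lieDerivativeFinsupp_single X v b)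

end KaehlerDifferential

namespace PoissonBracket

open KaehlerDifferential

variable (P : A →ₗ[R] A →ₗ[R] A)

theorem swap (halt : ∀ a : A, P a a = 0) (x y : A) : P x y = -P y x := by
  have h := halt (x + y)
  simp only [map_add, LinearMap.add_apply, halt, zero_add, add_zero] at h
  exact eq_neg_of_add_eq_zero_right h

theorem leibniz_right (halt : ∀ a : A, P a a = 0)
    (hleib : ∀ a b c : A, P (a * b) c = a * P b c + P a c * b) (x y z : A) :
    P x (y * z) = y * P x z + P x y * z := by
  rw [swap P halt, hleib, swap P halt z, swap P halt y]
  ring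

theorem one_left (hleib : ∀ a b c : A, P (a * b) c = a * P b c + P a c * b) (x : A) :
    P 1 x = 0 := by
  simpa using hleib 1 1 x

theorem one_right (halt : ∀ a : A, P a a = 0)
    (hleib : ∀ a b c : A, P (a * b) c = a * P b c + P a c * b) (x : A) : P x 1 = 0 := by
  rw [swap P halt, one_left P hleib, neg_zero]

variable (halt : ∀ a : A, P a a = 0) (hleib : ∀ a b c : A, P (a * b) c = a * P b c + P a c * b)

noncomputable def hamiltonian (u : A) : Derivation R A A :=
  Derivation.mk' (P u) fun x y => by
    rw [leibniz_right P halt hleib, smul_eq_mul, smul_eq_mul]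
    ring

noncomputable def hamiltonianDerivation : Derivation R A (Derivation R A A) :=
  Derivation.mk'
    { toFun := hamiltonian P halt hleib
      map_add' := fun u v => by ext; simp [hamiltonian]
      map_smul' := fun r u => by ext; simp [hamiltonian] }
    fun u v => by
      ext
      simp only [LinearMap.coe_mk, AddHom.coe_mk, hamiltonian, Derivation.coe_mk', hleib,
        Derivation.coe_add, Derivation.coe_smul, Pi.add_apply, Pi.smul_apply, smul_eq_mul]
      ring

noncomputable def anchor : Ω[A⁄R] →ₗ[A] Derivation R A A :=
  (hamiltonianDerivation P halt hleib).liftKaehlerDifferential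

@[simp]
theorem anchor_D (u f : A) : anchor P halt hleib (D R A u) f = P u f := by
  simp [anchor, hamiltonianDerivation, hamiltonian]

noncomputable def bivector : Ω[A⁄R] →ₗ[R] Ω[A⁄R] →ₗ[R] A :=
  LinearMap.restrictScalarsₗ (S := A) (M := Ω[A⁄R]) (N := A) (R := R) (R₁ := R) ∘ₗ
    ((linearMapEquivDerivation R A).symm.toLinearMap ∘ₗ anchor P halt hleib).restrictScalars R

@[simp]
theorem bivector_smul_D (a u b v : A) :
    bivector P halt hleib (a • D R A u) (b • D R A v) = a * b * P u v := by
  simp only [bivector, LinearMap.restrictScalars_comp, LinearMap.coe_comp,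
    LinearMap.coe_restrictScalars, LinearEquiv.coe_coe, Function.comp_apply, map_smul,
    linearMapEquivDerivation_symm_apply, LinearMap.restrictScalarsₗ_apply,
    LinearMap.restrictScalars_smul, LinearMap.smul_apply,
    Derivation.liftKaehlerDifferential_comp_D, anchor_D, smul_eq_mul]
  ring

noncomputable def koszulBracket : Ω[A⁄R] →ₗ[R] Ω[A⁄R] →ₗ[R] Ω[A⁄R] :=
  lieDerivative ∘ₗ (anchor P halt hleib).restrictScalars R
    - (lieDerivative ∘ₗ (anchor P halt hleib).restrictScalars R).flip
    - (bivector P halt hleib).compr₂ (D R A).toLinearMap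

theorem koszulBracket_apply (α β : Ω[A⁄R]) :
    koszulBracket P halt hleib α β
      = lieDerivative (anchor P halt hleib α) β - lieDerivative (anchor P halt hleib β) α
        - D R A (bivector P halt hleib α β) :=
  rfl

theorem koszulBracket_smul_D (a b u v : A) :
    koszulBracket P halt hleib (a • D R A u) (b • D R A v)
      = (a * P u b) • D R A v + (b * P a v) • D R A u + (a * b) • D R A (P u v) := by
  rw [koszulBracket_apply]
  simp only [map_smul, lieDerivative_smul_D, Derivation.coe_smul, Pi.smul_apply, anchor_D,
    smul_eq_mul, Derivation.leibniz, smul_add, swap P halt v, mul_neg, neg_smul, map_neg,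
    bivector_smul_D]
  module

theorem eq_koszulBracket {B : Ω[A⁄R] →ₗ[R] Ω[A⁄R] →ₗ[R] Ω[A⁄R]}
    (hB : ∀ a b u v : A, B (a • D R A u) (b • D R A v)
      = (a * P u b) • D R A v + (b * P a v) • D R A u + (a * b) • D R A (P u v)) :
    B = koszulBracket P halt hleib :=
  linearMap_ext₂_smul_D fun a u b v =>
    (hB a b u v).trans (koszulBracket_smul_D P halt hleib ..).symm

theorem koszulBracket_D_D (u v : A) :
    koszulBracket P halt hleib (D R A u) (D R A v) = D R A (P u v) := by
  simpa [one_left P hleib, one_right P halt hleib] using koszulBracket_smul_D P halt hleib 1 1 u v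

theorem koszulBracket_swap (α β : Ω[A⁄R]) :
    koszulBracket P halt hleib α β = -koszulBracket P halt hleib β α := by
  have : koszulBracket P halt hleib = -(koszulBracket P halt hleib).flip :=
    linearMap_ext₂_smul_D fun a u b v => by
      simp only [LinearMap.neg_apply, LinearMap.flip_apply, koszulBracket_smul_D,
        swap P halt v u, swap P halt v a, swap P halt b u, map_neg]
      module
  exact LinearMap.congr_fun₂ this α β

theorem koszulBracket_self (α : Ω[A⁄R]) : koszulBracket P halt hleib α α = 0 := by
  induction α using smul_D_induction with
  | smul_D a u =>
    rw [koszulBracket_smul_D, halt, swap P halt a u, map_zero]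
    module
  | add α β hα hβ =>
    simp only [map_add, LinearMap.add_apply, hα, hβ, koszulBracket_swap P halt hleib α β]
    abel

theorem koszulBracket_smul_right (α : Ω[A⁄R]) (f : A) (β : Ω[A⁄R]) :
    koszulBracket P halt hleib α (f • β)
      = f • koszulBracket P halt hleib α β + anchor P halt hleib α f • β := by
  induction α using smul_D_induction with
  | smul_D a u =>
    induction β using smul_D_induction with
    | smul_D b v =>
      rw [smul_smul, koszulBracket_smul_D, koszulBracket_smul_D, leibniz_right P halt hleib,
        map_smul, Derivation.smul_apply, anchor_D, smul_eq_mul]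
      module
    | add β γ hβ hγ =>
      simp only [smul_add, map_add, hβ, hγ]
      module
  | add α α' hα hα' =>
    simp only [map_add, LinearMap.add_apply, Derivation.add_apply, hα, hα']
    module

theorem koszulBracket_smul_left (f : A) (α β : Ω[A⁄R]) :
    koszulBracket P halt hleib (f • α) β
      = f • koszulBracket P halt hleib α β - anchor P halt hleib β f • α := by
  rw [koszulBracket_swap, koszulBracket_smul_right, koszulBracket_swap P halt hleib β]
  module

theorem anchor_koszulBracket
    (hjac : ∀ a b c : A, P a (P b c) + P b (P c a) + P c (P a b) = 0) (α β : Ω[A⁄R]) :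
    anchor P halt hleib (koszulBracket P halt hleib α β)
      = ⁅anchor P halt hleib α, anchor P halt hleib β⁆ := by
  induction α using smul_D_induction with
  | smul_D a u =>
    induction β using smul_D_induction with
    | smul_D b v =>
      ext g
      have hvgu : P v (P g u) = -P v (P u g) := by rw [swap P halt g u, map_neg]
      simp only [koszulBracket_smul_D, map_add, map_smul, Derivation.add_apply,
        Derivation.smul_apply, anchor_D, Derivation.commutator_apply, smul_eq_mul]
      linear_combination (-a) * leibniz_right P halt hleib u b (P v g)
        + b * leibniz_right P halt hleib v a (P u g) + (a * b) * swap P halt (P u v) g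
        + (b * P u g) * swap P halt a v - (a * b) * hjac u v g + (a * b) * hvgu
    | add β γ hβ hγ => simp only [map_add, hβ, hγ, lie_add]
  | add α α' hα hα' => simp only [map_add, LinearMap.add_apply, hα, hα', add_lie]

theorem jacobiator_koszulBracket_smul_right
    (hjac : ∀ a b c : A, P a (P b c) + P b (P c a) + P c (P a b) = 0)
    (α β : Ω[A⁄R]) (c : A) (γ : Ω[A⁄R]) :
    (koszulBracket P halt hleib).jacobiator α β (c • γ)
      = c • (koszulBracket P halt hleib).jacobiator α β γ := by
  simp only [LinearMap.jacobiator, koszulBracket_smul_right, koszulBracket_smul_left, map_add,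
    map_sub, anchor_koszulBracket P halt hleib hjac, Derivation.commutator_apply]
  linear_combination (norm := module)
    (anchor P halt hleib β c) • koszulBracket_swap P halt hleib α γ

theorem jacobiator_koszulBracket_D_D_D
    (hjac : ∀ a b c : A, P a (P b c) + P b (P c a) + P c (P a b) = 0) (u v w : A) :
    (koszulBracket P halt hleib).jacobiator (D R A u) (D R A v) (D R A w) = 0 := by
  simp only [LinearMap.jacobiator, koszulBracket_D_D, ← map_add, hjac, map_zero]

theorem jacobiator_koszulBracket
    (hjac : ∀ a b c : A, P a (P b c) + P b (P c a) + P c (P a b) = 0) (α β γ : Ω[A⁄R]) :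
    (koszulBracket P halt hleib).jacobiator α β γ = 0 :=
  eq_zero_of_cyclic_of_smul_right _ (LinearMap.jacobiator_cyclic _)
    (LinearMap.jacobiator_add_right _) (jacobiator_koszulBracket_smul_right P halt hleib hjac)
    (jacobiator_koszulBracket_D_D_D P halt hleib hjac) α β γ

end PoissonBracket

end

/-- **Theorem 3.8, first part.**
Let `R` be a commutative ring, `A` a commutative `R`-algebra and `P` a Poisson
structure on `A`.  Then there exists a unique `R`-bilinear bracket `B` on the
module of Kähler differentials `Ω[A⁄R]` satisfying
`[a•Du, b•Dv] = a{u,b}•Dv + b{a,v}•Du + (ab)•D{u,v}`.  Moreover this bracket is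
alternating and satisfies the Jacobi identity (so it makes `Ω[A⁄R]` a Lie
algebra over `R`); in particular `[Du, Dv] = D{u,v}`. -/
theorem poisson_rinehart_bracket_exists_unique
    (R A : Type*) [CommRing R] [CommRing A] [Algebra R A]
    (P : A →ₗ[R] A →ₗ[R] A)
    (halt : ∀ a : A, P a a = 0)
    (hjac : ∀ a b c : A, P a (P b c) + P b (P c a) + P c (P a b) = 0)
    (hleib : ∀ a b c : A, P (a * b) c = a * P b c + P a c * b) :
    (∃! B : KaehlerDifferential R A →ₗ[R] KaehlerDifferential R A →ₗ[R]
        KaehlerDifferential R A,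
      ∀ a b u v : A,
        B (a • KaehlerDifferential.D R A u) (b • KaehlerDifferential.D R A v)
          = (a * P u b) • KaehlerDifferential.D R A v
            + (b * P a v) • KaehlerDifferential.D R A u
            + (a * b) • KaehlerDifferential.D R A (P u v)) ∧
    (∀ B : KaehlerDifferential R A →ₗ[R] KaehlerDifferential R A →ₗ[R]
        KaehlerDifferential R A,
      (∀ a b u v : A,
        B (a • KaehlerDifferential.D R A u) (b • KaehlerDifferential.D R A v)
          = (a * P u b) • KaehlerDifferential.D R A v
            + (b * P a v) • KaehlerDifferential.D R A u
            + (a * b) • KaehlerDifferential.D R A (P u v)) →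
      (∀ α, B α α = 0) ∧
      (∀ α β γ, B α (B β γ) + B β (B γ α) + B γ (B α β) = 0) ∧
      (∀ u v : A,
        B (KaehlerDifferential.D R A u) (KaehlerDifferential.D R A v)
          = KaehlerDifferential.D R A (P u v))) := by
  open PoissonBracket in
  refine ⟨⟨koszulBracket P halt hleib, koszulBracket_smul_D P halt hleib,
    fun B hB => eq_koszulBracket P halt hleib hB⟩, fun B hB => ?_⟩
  obtain rfl := PoissonBracket.eq_koszulBracket P halt hleib hB
  exact ⟨PoissonBracket.koszulBracket_self P halt hleib,
    PoissonBracket.jacobiator_koszulBracket P halt hleib hjac,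
    PoissonBracket.koszulBracket_D_D P halt hleib⟩
end

section
/- Let R be a commutative ring, A a commutative R-algebra, {·,·} a Poisson structure on A, π the Poisson 2-form on Ω[A⁄R], and [·,·] the Poisson–Rinehart bracket on Ω[A⁄R]. Then: (a) for every α ∈ Ω[A⁄R] the map α^♯ : A → A, c ↦ π(α, D c), is an R-derivation of A; (b) [α, a•β] = a•[α,β] + π(α, D a)•β for all α,β ∈ Ω[A⁄R] and a ∈ A; (c) the anchor is a morphism of Lie algebras: π([α,β], D c) = π(α, D(π(β, D c))) − π(β, D(π(α, D c))) for all α,β ∈ Ω[A⁄R] and c ∈ A. Hence Ω[A⁄R] with this bracket, its A-module structure and the anchor ♯ is an (R,A)-Lie algebra and ♯ is a morphism into the derivations of A. (Theorem 3.8, second part.) -/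
/-!
Identities (b) and (c) are additive and `R`-homogeneous in `α` and in `β`, and `Ω[A⁄R]` is
spanned over `R` (not just over `A`) by the `a • D u`. So it suffices to check them on such
generators, where they follow from the defining formula of the bracket, the Leibniz rule of
`{·,·}` in its second argument and, for (c), the Jacobi identity.
-/

open scoped Pointwise

namespace KaehlerDifferential

variable {R A : Type*} [CommRing R] [CommRing A] [Algebra R A]

variable (R A) in
theorem span_smul_D_eq_top :
    Submodule.span R ((Set.univ : Set A) • Set.range (D R A)) = ⊤ := by
  rw [Submodule.span_smul_of_span_eq_top Submodule.span_univ, span_range_derivation,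
    Submodule.restrictScalars_top]

@[elab_as_elim]
theorem induction_on_smul_D {p : Ω[A⁄R] → Prop} (x : Ω[A⁄R])
    (smul_D : ∀ a u : A, p (a • D R A u)) (add : ∀ x y, p x → p y → p (x + y))
    (smul : ∀ (r : R) x, p x → p (r • x)) : p x := by
  have hx : x ∈ Submodule.span R ((Set.univ : Set A) • Set.range (D R A)) :=
    span_smul_D_eq_top R A ▸ Submodule.mem_top
  induction hx using Submodule.span_induction with
  | mem y hy =>
    obtain ⟨a, -, _, ⟨u, rfl⟩, rfl⟩ := hy
    exact smul_D a u
  | zero => simpa using smul_D 0 0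
  | add _ _ _ _ hy hz => exact add _ _ hy hz
  | smul r _ _ hy => exact smul r _ hy

end KaehlerDifferential

namespace LinearMap.IsAlt

variable {R A : Type*} [CommRing R] [CommRing A] [Algebra R A] {P : A →ₗ[R] A →ₗ[R] A}

theorem apply_mul_right (halt : P.IsAlt)
    (hleib : ∀ a b c : A, P (a * b) c = a * P b c + P a c * b) (a b c : A) :
    P a (b * c) = b * P a c + P a b * c := by
  rw [← halt.neg, hleib, ← halt.neg b, ← halt.neg c]
  ring

theorem apply_apply_left_of_jacobi (halt : P.IsAlt)
    (hjac : ∀ a b c : A, P a (P b c) + P b (P c a) + P c (P a b) = 0) (u v c : A) :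
    P (P u v) c = P u (P v c) - P v (P u c) := by
  have h := hjac u v c
  rw [← halt.neg u c, map_neg, ← halt.neg (P u v) c] at h
  linear_combination -h

end LinearMap.IsAlt

open KaehlerDifferential

section LieRinehart

variable {R A : Type*} [CommRing R] [CommRing A] [Algebra R A] {P : A →ₗ[R] A →ₗ[R] A}
  {π : Ω[A⁄R] →ₗ[A] Ω[A⁄R] →ₗ[A] A} {B : Ω[A⁄R] →ₗ[R] Ω[A⁄R] →ₗ[R] Ω[A⁄R]}

variable (π) in
noncomputable def anchor : Ω[A⁄R] →ₗ[A] Derivation R A A :=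
  (Derivation.llcomp.flip (D R A)).comp π

@[simp]
theorem anchor_apply (α : Ω[A⁄R]) (c : A) : anchor π α c = π α (D R A c) :=
  rfl

theorem anchor_smul_D_apply (hπD : ∀ u v : A, π (D R A u) (D R A v) = P u v) (x u c : A) :
    anchor π (x • D R A u) c = x * P u c := by
  simp [hπD]

theorem bracket_smul_D_smul_right (halt : P.IsAlt)
    (hleib : ∀ a b c : A, P (a * b) c = a * P b c + P a c * b)
    (hB : ∀ a b u v : A, B (a • D R A u) (b • D R A v)
      = (a * P u b) • D R A v + (b * P a v) • D R A u + (a * b) • D R A (P u v))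
    (x u a : A) (β : Ω[A⁄R]) :
    B (x • D R A u) (a • β) = a • B (x • D R A u) β + (x * P u a) • β := by
  induction β using induction_on_smul_D with
  | smul_D y v => rw [smul_smul, hB, hB, halt.apply_mul_right hleib]; module
  | add β γ hβ hγ => simp only [smul_add, map_add, hβ, hγ]; module
  | smul r β hβ => rw [smul_comm a r, (B _).map_smul, hβ, (B _).map_smul]; module

theorem bracket_smul_right (halt : P.IsAlt)
    (hleib : ∀ a b c : A, P (a * b) c = a * P b c + P a c * b)
    (hπD : ∀ u v : A, π (D R A u) (D R A v) = P u v)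
    (hB : ∀ a b u v : A, B (a • D R A u) (b • D R A v)
      = (a * P u b) • D R A v + (b * P a v) • D R A u + (a * b) • D R A (P u v))
    (α β : Ω[A⁄R]) (a : A) :
    B α (a • β) = a • B α β + anchor π α a • β := by
  induction α using induction_on_smul_D with
  | smul_D x u => rw [bracket_smul_D_smul_right halt hleib hB, anchor_smul_D_apply hπD]
  | add α γ hα hγ =>
    simp only [map_add, LinearMap.add_apply, Derivation.add_apply, hα, hγ, smul_add, add_smul]
    abel
  | smul r α hα =>
    rw [B.map_smul, LinearMap.smul_apply, hα, LinearMap.map_smul_of_tower, LinearMap.smul_apply,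
      Derivation.smul_apply, Algebra.smul_def r (anchor π α a)]
    module

theorem anchor_bracket_smul_D_smul_D (halt : P.IsAlt)
    (hjac : ∀ a b c : A, P a (P b c) + P b (P c a) + P c (P a b) = 0)
    (hleib : ∀ a b c : A, P (a * b) c = a * P b c + P a c * b)
    (hπD : ∀ u v : A, π (D R A u) (D R A v) = P u v)
    (hB : ∀ a b u v : A, B (a • D R A u) (b • D R A v)
      = (a * P u b) • D R A v + (b * P a v) • D R A u + (a * b) • D R A (P u v))
    (x u y v : A) :
    anchor π (B (x • D R A u) (y • D R A v))
      = ⁅anchor π (x • D R A u), anchor π (y • D R A v)⁆ := by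
  ext c
  simp only [Derivation.commutator_apply, anchor_smul_D_apply hπD, hB, map_add,
    Derivation.add_apply, halt.apply_mul_right hleib, halt.apply_apply_left_of_jacobi hjac,
    ← halt.neg x v]
  ring

theorem anchor_bracket_smul_D (halt : P.IsAlt)
    (hjac : ∀ a b c : A, P a (P b c) + P b (P c a) + P c (P a b) = 0)
    (hleib : ∀ a b c : A, P (a * b) c = a * P b c + P a c * b)
    (hπD : ∀ u v : A, π (D R A u) (D R A v) = P u v)
    (hB : ∀ a b u v : A, B (a • D R A u) (b • D R A v)
      = (a * P u b) • D R A v + (b * P a v) • D R A u + (a * b) • D R A (P u v))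
    (x u : A) (β : Ω[A⁄R]) :
    anchor π (B (x • D R A u) β) = ⁅anchor π (x • D R A u), anchor π β⁆ := by
  induction β using induction_on_smul_D with
  | smul_D y v => exact anchor_bracket_smul_D_smul_D halt hjac hleib hπD hB x u y v
  | add β γ hβ hγ => rw [map_add, map_add, hβ, hγ, map_add, lie_add]
  | smul r β hβ =>
    rw [(B _).map_smul, LinearMap.map_smul_of_tower _ r, hβ, LinearMap.map_smul_of_tower _ r]
    exact (lie_smul r _ _).symm

theorem anchor_bracket (halt : P.IsAlt)
    (hjac : ∀ a b c : A, P a (P b c) + P b (P c a) + P c (P a b) = 0)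
    (hleib : ∀ a b c : A, P (a * b) c = a * P b c + P a c * b)
    (hπD : ∀ u v : A, π (D R A u) (D R A v) = P u v)
    (hB : ∀ a b u v : A, B (a • D R A u) (b • D R A v)
      = (a * P u b) • D R A v + (b * P a v) • D R A u + (a * b) • D R A (P u v))
    (α β : Ω[A⁄R]) :
    anchor π (B α β) = ⁅anchor π α, anchor π β⁆ := by
  induction α using induction_on_smul_D with
  | smul_D x u => exact anchor_bracket_smul_D halt hjac hleib hπD hB x u β
  | add α γ hα hγ => rw [map_add, LinearMap.add_apply, map_add, hα, hγ, map_add, add_lie]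
  | smul r α hα =>
    rw [map_smul, LinearMap.smul_apply, LinearMap.map_smul_of_tower, hα,
      LinearMap.map_smul_of_tower, smul_lie]

end LieRinehart

theorem poisson_rinehart_lie_rinehart_structure_general
    (R A : Type*) [CommRing R] [CommRing A] [Algebra R A]
    (P : A →ₗ[R] A →ₗ[R] A)
    (halt : ∀ a : A, P a a = 0)
    (hjac : ∀ a b c : A, P a (P b c) + P b (P c a) + P c (P a b) = 0)
    (hleib : ∀ a b c : A, P (a * b) c = a * P b c + P a c * b)
    (π : KaehlerDifferential R A →ₗ[A] KaehlerDifferential R A →ₗ[A] A)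
    (hπD : ∀ u v : A,
      π (KaehlerDifferential.D R A u) (KaehlerDifferential.D R A v) = P u v)
    (B : KaehlerDifferential R A →ₗ[R] KaehlerDifferential R A →ₗ[R]
        KaehlerDifferential R A)
    (hB : ∀ a b u v : A,
      B (a • KaehlerDifferential.D R A u) (b • KaehlerDifferential.D R A v)
        = (a * P u b) • KaehlerDifferential.D R A v
          + (b * P a v) • KaehlerDifferential.D R A u
          + (a * b) • KaehlerDifferential.D R A (P u v)) :
    (∀ α : KaehlerDifferential R A, ∃ d : Derivation R A A,
        ∀ c : A, d c = π α (KaehlerDifferential.D R A c)) ∧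
    (∀ (α β : KaehlerDifferential R A) (a : A),
        B α (a • β) = a • B α β + (π α (KaehlerDifferential.D R A a)) • β) ∧
    (∀ (α β : KaehlerDifferential R A) (c : A),
        π (B α β) (KaehlerDifferential.D R A c)
          = π α (KaehlerDifferential.D R A (π β (KaehlerDifferential.D R A c)))
            - π β (KaehlerDifferential.D R A
                (π α (KaehlerDifferential.D R A c)))) := by
  refine ⟨fun α => ⟨anchor π α, fun c => rfl⟩, bracket_smul_right halt hleib hπD hB, ?_⟩
  intro α β c
  simpa only [anchor_apply, Derivation.commutator_apply] using
    congr($(anchor_bracket halt hjac hleib hπD hB α β) c)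

/-- **Theorem 3.8, second part.**
With `π` the Poisson 2-form and `B` the Poisson–Rinehart bracket on the Kähler
differentials of a Poisson algebra `(A, P)`:
(a) for every `α` the map `c ↦ π α (D c)` is an `R`-derivation of `A`;
(b) `[α, a•β] = a•[α,β] + π(α, D a)•β`;
(c) the anchor is a morphism of Lie algebras:
`π([α,β], D c) = π(α, D(π(β, D c))) − π(β, D(π(α, D c)))`.
Hence `Ω[A⁄R]` becomes an `(R,A)`-Lie algebra with anchor `♯`. -/
theorem poisson_rinehart_lie_rinehart_structure
    (R A : Type*) [CommRing R] [CommRing A] [Algebra R A]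
    (P : A →ₗ[R] A →ₗ[R] A)
    (halt : ∀ a : A, P a a = 0)
    (hjac : ∀ a b c : A, P a (P b c) + P b (P c a) + P c (P a b) = 0)
    (hleib : ∀ a b c : A, P (a * b) c = a * P b c + P a c * b)
    (π : KaehlerDifferential R A →ₗ[A] KaehlerDifferential R A →ₗ[A] A)
    (hπalt : ∀ α, π α α = 0)
    (hπD : ∀ u v : A,
      π (KaehlerDifferential.D R A u) (KaehlerDifferential.D R A v) = P u v)
    (B : KaehlerDifferential R A →ₗ[R] KaehlerDifferential R A →ₗ[R]
        KaehlerDifferential R A)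
    (hB : ∀ a b u v : A,
      B (a • KaehlerDifferential.D R A u) (b • KaehlerDifferential.D R A v)
        = (a * P u b) • KaehlerDifferential.D R A v
          + (b * P a v) • KaehlerDifferential.D R A u
          + (a * b) • KaehlerDifferential.D R A (P u v)) :
    (∀ α : KaehlerDifferential R A, ∃ d : Derivation R A A,
        ∀ c : A, d c = π α (KaehlerDifferential.D R A c)) ∧
    (∀ (α β : KaehlerDifferential R A) (a : A),
        B α (a • β) = a • B α β + (π α (KaehlerDifferential.D R A a)) • β) ∧
    (∀ (α β : KaehlerDifferential R A) (c : A),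
        π (B α β) (KaehlerDifferential.D R A c)
          = π α (KaehlerDifferential.D R A (π β (KaehlerDifferential.D R A c)))
            - π β (KaehlerDifferential.D R A
                (π α (KaehlerDifferential.D R A c)))) :=
  poisson_rinehart_lie_rinehart_structure_general R A P halt hjac hleib π hπD B hB
end

section
/- Let R be a commutative ring, let (A,{·,·}) and (A',{·,·}') be Poisson algebras over R, and let φ : A → A' be an R-algebra homomorphism with φ({a,b}) = {φ(a), φ(b)}' for all a,b ∈ A. Let φ_* : Ω[A⁄R] → Ω[A'⁄R] be the induced map on Kähler differentials (Mathlib's KaehlerDifferential.map, determined by φ_*(a•D b) = φ(a)•D(φ(b))). Then φ_* is a morphism of Lie algebras over R for the Poisson–Rinehart brackets, φ_*([α,β]) = [φ_*(α), φ_*(β)]' for all α,β ∈ Ω[A⁄R], and the Poisson 2-forms are compatible with the anchors: φ(π(α, D a)) = π'(φ_*(α), D(φ(a))) for all α ∈ Ω[A⁄R] and a ∈ A. (Addendum 3.8.4.) -/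
/-!
Both identities are equalities of maps that are linear in each argument, so it suffices to check
them on generators. The differentials `D u` span `Ω[A⁄R]` over `A`, which settles the anchor
identity, an `A`-linear statement. The bracket is only `R`-bilinear, so there one uses the
`R`-spanning family `a • D u`, on which both sides are given by the defining formula of the
Poisson–Rinehart bracket and `φ_* (a • D u) = φ a • D (φ u)`; the two formulas then match
because `φ` is a ring homomorphism preserving the Poisson brackets.
-/

theorem LinearMap.ext_on_range₂ {R M N P ι κ : Type*} [CommSemiring R]
    [AddCommMonoid M] [AddCommMonoid N] [AddCommMonoid P] [Module R M] [Module R N] [Module R P]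
    {v : ι → M} {w : κ → N} (hv : Submodule.span R (Set.range v) = ⊤)
    (hw : Submodule.span R (Set.range w) = ⊤) {f g : M →ₗ[R] N →ₗ[R] P}
    (h : ∀ i j, f (v i) (w j) = g (v i) (w j)) : f = g :=
  LinearMap.ext_on_range hv fun i => LinearMap.ext_on_range hw (h i)

namespace KaehlerDifferential

theorem span_range_smul_D (R A : Type*) [CommRing R] [CommRing A] [Algebra R A] :
    Submodule.span R (Set.range fun p : A × A => p.1 • D R A p.2) = ⊤ := by
  have h := Submodule.span_smul_of_span_eq_top (R := R) (S := A) Submodule.span_univ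
    (Set.range (D R A))
  rwa [← Set.range_id, Set.range_smul_range, span_range_derivation,
    Submodule.restrictScalars_top] at h

theorem map_smul_D (R A A' : Type*) [CommRing R] [CommRing A] [Algebra R A]
    [CommRing A'] [Algebra R A'] [Algebra A A'] [IsScalarTower R A A'] (a u : A) :
    map R R A A' (a • D R A u) = algebraMap A A' a • D R A' (algebraMap A A' u) := by
  rw [map_smul, map_D, algebraMap_smul]

end KaehlerDifferential

open KaehlerDifferential

theorem poisson_rinehart_functoriality_general
    (R A A' : Type*) [CommRing R] [CommRing A] [Algebra R A]
    [CommRing A'] [Algebra R A'] [Algebra A A'] [IsScalarTower R A A']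
    (P : A →ₗ[R] A →ₗ[R] A)
    (P' : A' →ₗ[R] A' →ₗ[R] A')
    (hφ : ∀ a b : A,
      algebraMap A A' (P a b) = P' (algebraMap A A' a) (algebraMap A A' b))
    (π : KaehlerDifferential R A →ₗ[A] KaehlerDifferential R A →ₗ[A] A)
    (hπD : ∀ u v : A,
      π (KaehlerDifferential.D R A u) (KaehlerDifferential.D R A v) = P u v)
    (π' : KaehlerDifferential R A' →ₗ[A'] KaehlerDifferential R A' →ₗ[A'] A')
    (hπD' : ∀ u v : A',
      π' (KaehlerDifferential.D R A' u) (KaehlerDifferential.D R A' v) = P' u v)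
    (B : KaehlerDifferential R A →ₗ[R] KaehlerDifferential R A →ₗ[R]
        KaehlerDifferential R A)
    (hB : ∀ a b u v : A,
      B (a • KaehlerDifferential.D R A u) (b • KaehlerDifferential.D R A v)
        = (a * P u b) • KaehlerDifferential.D R A v
          + (b * P a v) • KaehlerDifferential.D R A u
          + (a * b) • KaehlerDifferential.D R A (P u v))
    (B' : KaehlerDifferential R A' →ₗ[R] KaehlerDifferential R A' →ₗ[R]
        KaehlerDifferential R A')
    (hB' : ∀ a b u v : A',
      B' (a • KaehlerDifferential.D R A' u) (b • KaehlerDifferential.D R A' v)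
        = (a * P' u b) • KaehlerDifferential.D R A' v
          + (b * P' a v) • KaehlerDifferential.D R A' u
          + (a * b) • KaehlerDifferential.D R A' (P' u v)) :
    (∀ α β : KaehlerDifferential R A,
      KaehlerDifferential.map R R A A' (B α β)
        = B' (KaehlerDifferential.map R R A A' α)
            (KaehlerDifferential.map R R A A' β)) ∧
    (∀ (α : KaehlerDifferential R A) (a : A),
      algebraMap A A' (π α (KaehlerDifferential.D R A a))
        = π' (KaehlerDifferential.map R R A A' α)
            (KaehlerDifferential.D R A' (algebraMap A A' a))) := by
  have hbracket : B.compr₂ ((map R R A A').restrictScalars R)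
      = B'.compl₁₂ ((map R R A A').restrictScalars R) ((map R R A A').restrictScalars R) := by
    refine LinearMap.ext_on_range₂ (span_range_smul_D R A) (span_range_smul_D R A) ?_
    rintro ⟨a, u⟩ ⟨b, v⟩
    simp only [LinearMap.compr₂_apply, LinearMap.compl₁₂_apply, LinearMap.restrictScalars_apply,
      hB, hB', map_add, map_smul_D, map_mul, hφ]
  have hanchor (a : A) : (Algebra.linearMap A A').comp (π.flip (D R A a))
      = ((π'.flip (D R A' (algebraMap A A' a))).restrictScalars A).comp (map R R A A') :=
    LinearMap.ext_on_range (span_range_derivation R A) fun u => by simp [hπD, hπD', hφ]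
  exact ⟨LinearMap.congr_fun₂ hbracket, fun α a => LinearMap.congr_fun (hanchor a) α⟩

/-- **Addendum 3.8.4.**
Let `φ = algebraMap A A'` be an `R`-algebra homomorphism between Poisson
algebras `(A, P)` and `(A', P')` preserving the Poisson brackets.  Then the
induced map `φ_* = KaehlerDifferential.map R R A A'` on Kähler differentials is
a morphism of Lie algebras over `R` for the Poisson–Rinehart brackets, and the
Poisson 2-forms are compatible with the anchors:
`φ (π α (D a)) = π' (φ_* α) (D (φ a))`. -/
theorem poisson_rinehart_functoriality
    (R A A' : Type*) [CommRing R] [CommRing A] [Algebra R A]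
    [CommRing A'] [Algebra R A'] [Algebra A A'] [IsScalarTower R A A']
    (P : A →ₗ[R] A →ₗ[R] A)
    (halt : ∀ a : A, P a a = 0)
    (hjac : ∀ a b c : A, P a (P b c) + P b (P c a) + P c (P a b) = 0)
    (hleib : ∀ a b c : A, P (a * b) c = a * P b c + P a c * b)
    (P' : A' →ₗ[R] A' →ₗ[R] A')
    (halt' : ∀ a : A', P' a a = 0)
    (hjac' : ∀ a b c : A', P' a (P' b c) + P' b (P' c a) + P' c (P' a b) = 0)
    (hleib' : ∀ a b c : A', P' (a * b) c = a * P' b c + P' a c * b)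
    (hφ : ∀ a b : A,
      algebraMap A A' (P a b) = P' (algebraMap A A' a) (algebraMap A A' b))
    (π : KaehlerDifferential R A →ₗ[A] KaehlerDifferential R A →ₗ[A] A)
    (hπalt : ∀ α, π α α = 0)
    (hπD : ∀ u v : A,
      π (KaehlerDifferential.D R A u) (KaehlerDifferential.D R A v) = P u v)
    (π' : KaehlerDifferential R A' →ₗ[A'] KaehlerDifferential R A' →ₗ[A'] A')
    (hπalt' : ∀ α, π' α α = 0)
    (hπD' : ∀ u v : A',
      π' (KaehlerDifferential.D R A' u) (KaehlerDifferential.D R A' v) = P' u v)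
    (B : KaehlerDifferential R A →ₗ[R] KaehlerDifferential R A →ₗ[R]
        KaehlerDifferential R A)
    (hB : ∀ a b u v : A,
      B (a • KaehlerDifferential.D R A u) (b • KaehlerDifferential.D R A v)
        = (a * P u b) • KaehlerDifferential.D R A v
          + (b * P a v) • KaehlerDifferential.D R A u
          + (a * b) • KaehlerDifferential.D R A (P u v))
    (B' : KaehlerDifferential R A' →ₗ[R] KaehlerDifferential R A' →ₗ[R]
        KaehlerDifferential R A')
    (hB' : ∀ a b u v : A',
      B' (a • KaehlerDifferential.D R A' u) (b • KaehlerDifferential.D R A' v)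
        = (a * P' u b) • KaehlerDifferential.D R A' v
          + (b * P' a v) • KaehlerDifferential.D R A' u
          + (a * b) • KaehlerDifferential.D R A' (P' u v)) :
    (∀ α β : KaehlerDifferential R A,
      KaehlerDifferential.map R R A A' (B α β)
        = B' (KaehlerDifferential.map R R A A' α)
            (KaehlerDifferential.map R R A A' β)) ∧
    (∀ (α : KaehlerDifferential R A) (a : A),
      algebraMap A A' (π α (KaehlerDifferential.D R A a))
        = π' (KaehlerDifferential.map R R A A' α)
            (KaehlerDifferential.D R A' (algebraMap A A' a))) :=
  poisson_rinehart_functoriality_general R A A' P P' hφ π hπD π' hπD' B hB B' hB'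
end

section
/- Let R be a commutative ring, A a commutative R-algebra, {·,·} a Poisson structure on A, π the Poisson 2-form on Ω[A⁄R], and [·,·] the Poisson–Rinehart bracket on Ω[A⁄R]. Then π is a 2-cocycle in the Chevalley–Eilenberg complex of A-multilinear alternating forms on Ω[A⁄R]: for all α,β,γ ∈ Ω[A⁄R], π(α, D(π(β,γ))) − π(β, D(π(α,γ))) + π(γ, D(π(α,β))) − π([α,β], γ) + π([α,γ], β) − π([β,γ], α) = 0. (Lemma 3.9.) -/
/-!
The left-hand side is the Chevalley–Eilenberg coboundary of `π`, which is `R`-trilinear because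
`π`, `B` and `D` are `R`-linear; as `Ω[A⁄R]` is `R`-spanned by the forms `a • D u`, it suffices
to check the identity on those. There the Leibniz rule expands everything into brackets of
`u, v, w` with coefficients in `a, b, c`: the `a * b * c` part is twice the Jacobiator of
`u, v, w`, and the remaining terms cancel in pairs by skew-symmetry.
-/

section ChevalleyEilenberg

variable {R M N : Type*} [CommRing R] [AddCommGroup M] [Module R M] [AddCommGroup N] [Module R N]

def ceCoboundary₂ (ρ : M →ₗ[R] N →ₗ[R] N) (B : M →ₗ[R] M →ₗ[R] M) (ω : M →ₗ[R] M →ₗ[R] N)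
    (α β γ : M) : N :=
  ρ α (ω β γ) - ρ β (ω α γ) + ρ γ (ω α β) - ω (B α β) γ + ω (B α γ) β - ω (B β γ) α

variable (ρ : M →ₗ[R] N →ₗ[R] N) (B : M →ₗ[R] M →ₗ[R] M) (ω : M →ₗ[R] M →ₗ[R] N)

theorem isLinearMap_ceCoboundary₂_fst (β γ : M) :
    IsLinearMap R (ceCoboundary₂ ρ B ω · β γ) where
  map_add x y := by simp only [ceCoboundary₂, map_add, LinearMap.add_apply]; abel
  map_smul r x := by simp only [ceCoboundary₂, map_smul, LinearMap.smul_apply, smul_sub, smul_add]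

theorem isLinearMap_ceCoboundary₂_snd (α γ : M) :
    IsLinearMap R (ceCoboundary₂ ρ B ω α · γ) where
  map_add x y := by simp only [ceCoboundary₂, map_add, LinearMap.add_apply]; abel
  map_smul r x := by simp only [ceCoboundary₂, map_smul, LinearMap.smul_apply, smul_sub, smul_add]

theorem isLinearMap_ceCoboundary₂_thd (α β : M) :
    IsLinearMap R (ceCoboundary₂ ρ B ω α β ·) where
  map_add x y := by simp only [ceCoboundary₂, map_add, LinearMap.add_apply]; abel
  map_smul r x := by simp only [ceCoboundary₂, map_smul, LinearMap.smul_apply, smul_sub, smul_add]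

theorem ceCoboundary₂_eq_zero_of_span_eq_top {s : Set M} (hs : Submodule.span R s = ⊤)
    (h : ∀ α ∈ s, ∀ β ∈ s, ∀ γ ∈ s, ceCoboundary₂ ρ B ω α β γ = 0) (α β γ : M) :
    ceCoboundary₂ ρ B ω α β γ = 0 := by
  have vanish {f : M → N} (hf : IsLinearMap R f) (hf₀ : ∀ x ∈ s, f x = 0) (x : M) : f x = 0 :=
    LinearMap.congr_fun (LinearMap.ext_on (f := hf.mk' f) (g := 0) hs hf₀) x
  refine vanish (isLinearMap_ceCoboundary₂_fst ρ B ω β γ) (fun α hα ↦ ?_) α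
  refine vanish (isLinearMap_ceCoboundary₂_snd ρ B ω α γ) (fun β hβ ↦ ?_) β
  exact vanish (isLinearMap_ceCoboundary₂_thd ρ B ω α β) (h α hα β hβ) γ

end ChevalleyEilenberg

section Poisson

variable {R A : Type*} [CommRing R] [CommRing A] [Algebra R A] {P : A →ₗ[R] A →ₗ[R] A}

theorem poisson_leibniz_right (hP : P.IsAlt)
    (hleib : ∀ a b c : A, P (a * b) c = a * P b c + P a c * b) (a b c : A) :
    P a (b * c) = b * P a c + P a b * c := by
  rw [← hP.neg (b * c) a, hleib, ← hP.neg a c, ← hP.neg a b]; ring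

open scoped Pointwise in
theorem KaehlerDifferential.span_smul_range_D_eq_top :
    Submodule.span R ((Set.univ : Set A) • Set.range (KaehlerDifferential.D R A)) = ⊤ := by
  rw [Submodule.span_smul_of_span_eq_top Submodule.span_univ,
    KaehlerDifferential.span_range_derivation]
  rfl

variable (π : Ω[A⁄R] →ₗ[A] Ω[A⁄R] →ₗ[A] A)

noncomputable def twoFormAnchor : Ω[A⁄R] →ₗ[R] A →ₗ[R] A :=
  (π.restrictScalars₁₂ R R).compl₂ (KaehlerDifferential.D R A).toLinearMap

theorem ceCoboundary₂_twoForm_smul_D (hP : P.IsAlt)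
    (hjac : ∀ a b c : A, P a (P b c) + P b (P c a) + P c (P a b) = 0)
    (hleib : ∀ a b c : A, P (a * b) c = a * P b c + P a c * b)
    (hπD : ∀ u v : A,
      π (KaehlerDifferential.D R A u) (KaehlerDifferential.D R A v) = P u v)
    (B : Ω[A⁄R] →ₗ[R] Ω[A⁄R] →ₗ[R] Ω[A⁄R])
    (hB : ∀ a b u v : A,
      B (a • KaehlerDifferential.D R A u) (b • KaehlerDifferential.D R A v)
        = (a * P u b) • KaehlerDifferential.D R A v
          + (b * P a v) • KaehlerDifferential.D R A u
          + (a * b) • KaehlerDifferential.D R A (P u v))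
    (a b c u v w : A) :
    ceCoboundary₂ (twoFormAnchor π) B (π.restrictScalars₁₂ R R) (a • KaehlerDifferential.D R A u)
      (b • KaehlerDifferential.D R A v) (c • KaehlerDifferential.D R A w) = 0 := by
  have skew (x y : A) : P x y = -P y x := (hP.neg y x).symm
  have jac : P u (P v w) - P v (P u w) + P w (P u v) = 0 := by
    rw [← hjac u v w, ← hP.neg u w, map_neg]; ring
  simp only [ceCoboundary₂, twoFormAnchor, LinearMap.compl₂_apply,
    LinearMap.restrictScalars₁₂_apply_apply, Derivation.coeFn_coe, hB, map_add, map_smul,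
    LinearMap.add_apply, LinearMap.smul_apply, smul_eq_mul, hπD, poisson_leibniz_right hP hleib]
  linear_combination
      2 * a * b * c * jac
      - a * b * c * skew (P u v) w
      + a * b * c * skew (P u w) v
      - a * b * c * skew (P v w) u
      + a * b * (P u c) * skew v w
      - a * b * (P v c) * skew u w
      + a * c * (P w b) * skew u v
      - a * c * (P v u) * skew b w
      - b * c * (P u w) * skew v a
      + b * c * (P u v) * skew w a

end Poisson

theorem poisson_two_form_is_two_cocycle_general
    (R A : Type*) [CommRing R] [CommRing A] [Algebra R A]
    (P : A →ₗ[R] A →ₗ[R] A)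
    (halt : ∀ a : A, P a a = 0)
    (hjac : ∀ a b c : A, P a (P b c) + P b (P c a) + P c (P a b) = 0)
    (hleib : ∀ a b c : A, P (a * b) c = a * P b c + P a c * b)
    (π : KaehlerDifferential R A →ₗ[A] KaehlerDifferential R A →ₗ[A] A)
    (hπD : ∀ u v : A,
      π (KaehlerDifferential.D R A u) (KaehlerDifferential.D R A v) = P u v)
    (B : KaehlerDifferential R A →ₗ[R] KaehlerDifferential R A →ₗ[R]
        KaehlerDifferential R A)
    (hB : ∀ a b u v : A,
      B (a • KaehlerDifferential.D R A u) (b • KaehlerDifferential.D R A v)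
        = (a * P u b) • KaehlerDifferential.D R A v
          + (b * P a v) • KaehlerDifferential.D R A u
          + (a * b) • KaehlerDifferential.D R A (P u v)) :
    ∀ α β γ : KaehlerDifferential R A,
      π α (KaehlerDifferential.D R A (π β γ))
        - π β (KaehlerDifferential.D R A (π α γ))
        + π γ (KaehlerDifferential.D R A (π α β))
        - π (B α β) γ + π (B α γ) β - π (B β γ) α = 0 := by
  refine ceCoboundary₂_eq_zero_of_span_eq_top (twoFormAnchor π) B (π.restrictScalars₁₂ R R)
    KaehlerDifferential.span_smul_range_D_eq_top ?_
  rintro _ ⟨a, -, _, ⟨u, rfl⟩, rfl⟩ _ ⟨b, -, _, ⟨v, rfl⟩, rfl⟩ _ ⟨c, -, _, ⟨w, rfl⟩, rfl⟩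
  exact ceCoboundary₂_twoForm_smul_D π halt hjac hleib hπD B hB a b c u v w

/-- **Lemma 3.9.**
The Poisson 2-form `π` of a Poisson algebra `(A, P)` is a 2-cocycle in the
Chevalley–Eilenberg complex of `A`-multilinear alternating forms on the Kähler
differentials, with respect to the Poisson–Rinehart bracket `B`:
`π(α, D(π(β,γ))) − π(β, D(π(α,γ))) + π(γ, D(π(α,β)))
  − π([α,β], γ) + π([α,γ], β) − π([β,γ], α) = 0`. -/
theorem poisson_two_form_is_two_cocycle
    (R A : Type*) [CommRing R] [CommRing A] [Algebra R A]
    (P : A →ₗ[R] A →ₗ[R] A)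
    (halt : ∀ a : A, P a a = 0)
    (hjac : ∀ a b c : A, P a (P b c) + P b (P c a) + P c (P a b) = 0)
    (hleib : ∀ a b c : A, P (a * b) c = a * P b c + P a c * b)
    (π : KaehlerDifferential R A →ₗ[A] KaehlerDifferential R A →ₗ[A] A)
    (hπalt : ∀ α, π α α = 0)
    (hπD : ∀ u v : A,
      π (KaehlerDifferential.D R A u) (KaehlerDifferential.D R A v) = P u v)
    (B : KaehlerDifferential R A →ₗ[R] KaehlerDifferential R A →ₗ[R]
        KaehlerDifferential R A)
    (hB : ∀ a b u v : A,
      B (a • KaehlerDifferential.D R A u) (b • KaehlerDifferential.D R A v)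
        = (a * P u b) • KaehlerDifferential.D R A v
          + (b * P a v) • KaehlerDifferential.D R A u
          + (a * b) • KaehlerDifferential.D R A (P u v)) :
    ∀ α β γ : KaehlerDifferential R A,
      π α (KaehlerDifferential.D R A (π β γ))
        - π β (KaehlerDifferential.D R A (π α γ))
        + π γ (KaehlerDifferential.D R A (π α β))
        - π (B α β) γ + π (B α γ) β - π (B β γ) α = 0 :=
  poisson_two_form_is_two_cocycle_general R A P halt hjac hleib π hπD B hB
end

section
/- Let R be a commutative ring, A a commutative R-algebra, and π an A-bilinear alternating 2-form on Ω[A⁄R]; define {a,b} := π(D a, D b) for a,b ∈ A. Suppose there is an R-bilinear bracket [·,·] on Ω[A⁄R] satisfying [a•Du, b•Dv] = a{u,b}•Dv + b{a,v}•Du + (ab)•D{u,v}, which is alternating, satisfies the Jacobi identity, satisfies [α, a•β] = a•[α,β] + π(α, D a)•β, and whose anchor is a Lie algebra morphism, i.e. π([α,β], D c) = π(α, D(π(β, D c))) − π(β, D(π(α, D c))) for all α,β ∈ Ω[A⁄R], a,c ∈ A. Then the bracket {·,·} on A — which is automatically alternating and satisfies the Leibniz rule {ab,c} = a{b,c} +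 {a,c}b — satisfies the Jacobi identity, and hence is a Poisson structure on A, if and only if π is a 2-cocycle, i.e. π(α, D(π(β,γ))) − π(β, D(π(α,γ))) + π(γ, D(π(α,β))) − π([α,β], γ) + π([α,γ], β) − π([β,γ], α) = 0 for all α,β,γ ∈ Ω[A⁄R]. (Theorem 3.11.) -/
/-!
Write `{a,b} = π (D a) (D b)` and let `cochainDiff π B` be the Lie algebroid differential of the
2-cochain `π` for the bracket `B` and the anchor `α ↦ π α (D ·)`. Expanding it on `D a, D b, D c`
and using that the anchor is a Lie algebra morphism shows that it is minus the Jacobiator of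
`{·,·}` there. On the other hand `cochainDiff π B` is alternating and `A`-linear in its first
argument (the anchor terms cancel the non-linearity of `B`), hence `A`-trilinear, so it vanishes as
soon as it vanishes on exact forms, which span `Ω[A⁄R]`.
-/

local notation "𝒹" => KaehlerDifferential.D

namespace KaehlerDifferential

variable {R A : Type*} [CommRing R] [CommRing A] [Algebra R A]
  (π : Ω[A⁄R] →ₗ[A] Ω[A⁄R] →ₗ[A] A) (B : Ω[A⁄R] →ₗ[R] Ω[A⁄R] →ₗ[R] Ω[A⁄R])

theorem bracket_smul_left (hB : B.IsAlt)
    (hBleib : ∀ α (a : A) β, B α (a • β) = a • B α β + π α (𝒹 R A a) • β)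
    (a : A) (α β : Ω[A⁄R]) : B (a • α) β = a • B α β - π β (𝒹 R A a) • α := by
  rw [← hB.neg, hBleib, ← hB.neg β α]
  module

noncomputable def cochainDiff (α β γ : Ω[A⁄R]) : A :=
  π α (𝒹 R A (π β γ)) - π β (𝒹 R A (π α γ)) + π γ (𝒹 R A (π α β))
    - π (B α β) γ + π (B α γ) β - π (B β γ) α

variable {π B}

theorem cochainDiff_swap_left (hπ : π.IsAlt) (hB : B.IsAlt) (α β γ : Ω[A⁄R]) :
    cochainDiff π B β α γ = -cochainDiff π B α β γ := by
  simp only [cochainDiff, ← hπ.neg β α, ← hB.neg β α, map_neg, LinearMap.neg_apply]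
  ring

theorem cochainDiff_swap_right (hπ : π.IsAlt) (hB : B.IsAlt) (α β γ : Ω[A⁄R]) :
    cochainDiff π B α γ β = -cochainDiff π B α β γ := by
  simp only [cochainDiff, ← hπ.neg γ β, ← hB.neg γ β, map_neg, LinearMap.neg_apply]
  ring

theorem cochainDiff_add_left (α α' β γ : Ω[A⁄R]) :
    cochainDiff π B (α + α') β γ = cochainDiff π B α β γ + cochainDiff π B α' β γ := by
  simp only [cochainDiff, map_add, LinearMap.add_apply]
  ring

theorem cochainDiff_smul_left (hB : B.IsAlt)
    (hBleib : ∀ α (a : A) β, B α (a • β) = a • B α β + π α (𝒹 R A a) • β)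
    (a : A) (α β γ : Ω[A⁄R]) : cochainDiff π B (a • α) β γ = a * cochainDiff π B α β γ := by
  simp only [cochainDiff, bracket_smul_left π B hB hBleib, map_smul, map_sub, map_add,
    LinearMap.smul_apply, LinearMap.sub_apply, smul_eq_mul, Derivation.leibniz]
  ring

theorem cochainDiff_D_D_D (hπ : π.IsAlt)
    (hanch : ∀ α β (c : A), π (B α β) (𝒹 R A c)
      = π α (𝒹 R A (π β (𝒹 R A c))) - π β (𝒹 R A (π α (𝒹 R A c)))) (u v w : A) :
    cochainDiff π B (𝒹 R A u) (𝒹 R A v) (𝒹 R A w)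
      = -(π (𝒹 R A u) (𝒹 R A (π (𝒹 R A v) (𝒹 R A w)))
        + π (𝒹 R A v) (𝒹 R A (π (𝒹 R A w) (𝒹 R A u)))
        + π (𝒹 R A w) (𝒹 R A (π (𝒹 R A u) (𝒹 R A v)))) := by
  simp only [cochainDiff, hanch, ← hπ.neg (𝒹 R A w) (𝒹 R A v), ← hπ.neg (𝒹 R A u) (𝒹 R A w),
    ← hπ.neg (𝒹 R A v) (𝒹 R A u), map_neg]
  ring

theorem cochainDiff_rotate (hπ : π.IsAlt) (hB : B.IsAlt) (α β γ : Ω[A⁄R]) :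
    cochainDiff π B α β γ = cochainDiff π B β γ α := by
  rw [cochainDiff_swap_right hπ hB β α γ, cochainDiff_swap_left hπ hB α β γ, neg_neg]

theorem cochainDiff_eq_zero_of_forall_D_left (hB : B.IsAlt)
    (hBleib : ∀ α (a : A) β, B α (a • β) = a • B α β + π α (𝒹 R A a) • β) {β γ : Ω[A⁄R]}
    (h : ∀ u, cochainDiff π B (𝒹 R A u) β γ = 0) (α : Ω[A⁄R]) : cochainDiff π B α β γ = 0 := by
  let f : Ω[A⁄R] →ₗ[A] A :=
    { toFun α := cochainDiff π B α β γ
      map_add' α α' := cochainDiff_add_left α α' β γ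
      map_smul' a α := cochainDiff_smul_left hB hBleib a α β γ }
  exact LinearMap.congr_fun
    (LinearMap.ext_on_range (span_range_derivation R A) (f := f) (g := 0) h) α

theorem cochainDiff_eq_zero_of_forall_D (hπ : π.IsAlt) (hB : B.IsAlt)
    (hBleib : ∀ α (a : A) β, B α (a • β) = a • B α β + π α (𝒹 R A a) • β)
    (h : ∀ u v w, cochainDiff π B (𝒹 R A u) (𝒹 R A v) (𝒹 R A w) = 0) (α β γ : Ω[A⁄R]) :
    cochainDiff π B α β γ = 0 := by
  have h₁ (v w : A) (α : Ω[A⁄R]) : cochainDiff π B α (𝒹 R A v) (𝒹 R A w) = 0 :=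
    cochainDiff_eq_zero_of_forall_D_left hB hBleib (fun u => h u v w) α
  have h₂ (w : A) (α β : Ω[A⁄R]) : cochainDiff π B α β (𝒹 R A w) = 0 := by
    rw [cochainDiff_rotate hπ hB]
    exact cochainDiff_eq_zero_of_forall_D_left hB hBleib
      (fun u => by rw [← cochainDiff_rotate hπ hB, h₁]) β
  rw [cochainDiff_rotate hπ hB, cochainDiff_rotate hπ hB]
  exact cochainDiff_eq_zero_of_forall_D_left hB hBleib
    (fun u => by rw [cochainDiff_rotate hπ hB, h₂]) γ

end KaehlerDifferential

theorem poisson_structure_iff_two_cocycle_general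
    (R A : Type*) [CommRing R] [CommRing A] [Algebra R A]
    (π : KaehlerDifferential R A →ₗ[A] KaehlerDifferential R A →ₗ[A] A)
    (hπalt : ∀ α, π α α = 0)
    (B : KaehlerDifferential R A →ₗ[R] KaehlerDifferential R A →ₗ[R]
        KaehlerDifferential R A)
    (hBalt : ∀ α, B α α = 0)
    (hBleib : ∀ (α : KaehlerDifferential R A) (a : A)
        (β : KaehlerDifferential R A),
      B α (a • β) = a • B α β + (π α (KaehlerDifferential.D R A a)) • β)
    (hanch : ∀ (α β : KaehlerDifferential R A) (c : A),
      π (B α β) (KaehlerDifferential.D R A c)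
        = π α (KaehlerDifferential.D R A (π β (KaehlerDifferential.D R A c)))
          - π β (KaehlerDifferential.D R A
              (π α (KaehlerDifferential.D R A c)))) :
    (∀ a : A, π (KaehlerDifferential.D R A a) (KaehlerDifferential.D R A a) = 0) ∧
    (∀ a b c : A,
      π (KaehlerDifferential.D R A (a * b)) (KaehlerDifferential.D R A c)
        = a * π (KaehlerDifferential.D R A b) (KaehlerDifferential.D R A c)
          + π (KaehlerDifferential.D R A a) (KaehlerDifferential.D R A c) * b) ∧
    ((∀ a b c : A,
        π (KaehlerDifferential.D R A a)
            (KaehlerDifferential.D R A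
              (π (KaehlerDifferential.D R A b) (KaehlerDifferential.D R A c)))
          + π (KaehlerDifferential.D R A b)
              (KaehlerDifferential.D R A
                (π (KaehlerDifferential.D R A c) (KaehlerDifferential.D R A a)))
          + π (KaehlerDifferential.D R A c)
              (KaehlerDifferential.D R A
                (π (KaehlerDifferential.D R A a) (KaehlerDifferential.D R A b)))
          = 0) ↔
      (∀ α β γ : KaehlerDifferential R A,
        π α (KaehlerDifferential.D R A (π β γ))
          - π β (KaehlerDifferential.D R A (π α γ))
          + π γ (KaehlerDifferential.D R A (π α β))
          - π (B α β) γ + π (B α γ) β - π (B β γ) α = 0)) := by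
  have jacobiator_eq := KaehlerDifferential.cochainDiff_D_D_D (B := B) hπalt hanch
  refine ⟨fun a => hπalt _, fun a b c => ?_, fun hjac => ?_, fun hcocycle a b c => ?_⟩
  · simp only [Derivation.leibniz, map_add, map_smul, LinearMap.add_apply, LinearMap.smul_apply,
      smul_eq_mul]
    ring
  · refine KaehlerDifferential.cochainDiff_eq_zero_of_forall_D hπalt hBalt hBleib fun u v w => ?_
    rw [jacobiator_eq, hjac, neg_zero]
  · rw [← neg_eq_zero, ← jacobiator_eq]
    exact hcocycle _ _ _

/-- **Theorem 3.11.**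
Let `π` be an `A`-bilinear alternating 2-form on the Kähler differentials and
`{a,b} := π (D a) (D b)`.  Suppose `B` is an `R`-bilinear bracket on `Ω[A⁄R]`
satisfying the defining formula of the Poisson–Rinehart bracket, which is
alternating, satisfies the Jacobi identity, satisfies
`[α, a•β] = a•[α,β] + π(α, D a)•β`, and whose anchor is a Lie algebra morphism.
Then `{·,·}` is automatically alternating and satisfies the Leibniz rule, and it
satisfies the Jacobi identity (hence is a Poisson structure on `A`) if and only
if `π` is a 2-cocycle. -/
theorem poisson_structure_iff_two_cocycle
    (R A : Type*) [CommRing R] [CommRing A] [Algebra R A]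
    (π : KaehlerDifferential R A →ₗ[A] KaehlerDifferential R A →ₗ[A] A)
    (hπalt : ∀ α, π α α = 0)
    (B : KaehlerDifferential R A →ₗ[R] KaehlerDifferential R A →ₗ[R]
        KaehlerDifferential R A)
    (hB : ∀ a b u v : A,
      B (a • KaehlerDifferential.D R A u) (b • KaehlerDifferential.D R A v)
        = (a * π (KaehlerDifferential.D R A u) (KaehlerDifferential.D R A b))
              • KaehlerDifferential.D R A v
          + (b * π (KaehlerDifferential.D R A a) (KaehlerDifferential.D R A v))
              • KaehlerDifferential.D R A u
          + (a * b) • KaehlerDifferential.D R A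
              (π (KaehlerDifferential.D R A u) (KaehlerDifferential.D R A v)))
    (hBalt : ∀ α, B α α = 0)
    (hBjac : ∀ α β γ, B α (B β γ) + B β (B γ α) + B γ (B α β) = 0)
    (hBleib : ∀ (α : KaehlerDifferential R A) (a : A)
        (β : KaehlerDifferential R A),
      B α (a • β) = a • B α β + (π α (KaehlerDifferential.D R A a)) • β)
    (hanch : ∀ (α β : KaehlerDifferential R A) (c : A),
      π (B α β) (KaehlerDifferential.D R A c)
        = π α (KaehlerDifferential.D R A (π β (KaehlerDifferential.D R A c)))
          - π β (KaehlerDifferential.D R A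
              (π α (KaehlerDifferential.D R A c)))) :
    (∀ a : A, π (KaehlerDifferential.D R A a) (KaehlerDifferential.D R A a) = 0) ∧
    (∀ a b c : A,
      π (KaehlerDifferential.D R A (a * b)) (KaehlerDifferential.D R A c)
        = a * π (KaehlerDifferential.D R A b) (KaehlerDifferential.D R A c)
          + π (KaehlerDifferential.D R A a) (KaehlerDifferential.D R A c) * b) ∧
    ((∀ a b c : A,
        π (KaehlerDifferential.D R A a)
            (KaehlerDifferential.D R A
              (π (KaehlerDifferential.D R A b) (KaehlerDifferential.D R A c)))
          + π (KaehlerDifferential.D R A b)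
              (KaehlerDifferential.D R A
                (π (KaehlerDifferential.D R A c) (KaehlerDifferential.D R A a)))
          + π (KaehlerDifferential.D R A c)
              (KaehlerDifferential.D R A
                (π (KaehlerDifferential.D R A a) (KaehlerDifferential.D R A b)))
          = 0) ↔
      (∀ α β γ : KaehlerDifferential R A,
        π α (KaehlerDifferential.D R A (π β γ))
          - π β (KaehlerDifferential.D R A (π α γ))
          + π γ (KaehlerDifferential.D R A (π α β))
          - π (B α β) γ + π (B α γ) β - π (B β γ) α = 0)) :=
  poisson_structure_iff_two_cocycle_general R A π hπalt B hBalt hBleib hanch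
end

section
/- Let R be a commutative ring, A and A' commutative R-algebras, and (L,[·,·],ρ) an (R,A)-Lie algebra. Let φ : A → A' be an R-algebra homomorphism and τ : L → Der_R(A') a morphism of Lie algebras over R such that τ(α)(φ(a)) = φ(ρ(α)(a)) and τ(a•α) = φ(a)·τ(α) (as maps A' → A') for all α ∈ L, a ∈ A. Regard A' as an A-algebra via φ and set L' := A' ⊗_A L. Then: there is a unique R-bilinear bracket on L' satisfying [u ⊗ α, v ⊗ β] = (uv) ⊗ [α,β] − (v·τ(β)(u)) ⊗ α + (u·τ(α)(v)) ⊗ β for u,v ∈ A', α,β ∈ L; this bracket is alternating and satisfies the Jacobi identity; the pairing (u ⊗ α, w) ↦ u·τ(α)(w) induces a well-defined A'-linear map ρ' : L' → Der_R(A') which is a morphism of Lie algebras; and [ξ, w•η] = w•[ξ,η] + ρ'(ξ)(w)•η for all ξ,η ∈ L' and w ∈ A'. Thus L' is an (R,A')-Lie algebra, and the map L → L', α ↦ 1 ⊗ α, is a morphism of Lie algebras over R. (Proposition 1.16: induced Lie–Rinehart structure.) -/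
/-!
The formula for the bracket of pure tensors is `A`-balanced in both arguments, thanks to the
Leibniz rule of `L` and the compatibilities of `τ` with `φ`, so it descends to `A' ⊗[A] L`, and
uniquely so since pure tensors span. Skew-symmetry, the anchor identity and the Leibniz rule are
then checked on pure tensors. For the Jacobi identity, the Jacobiator of a skew bracket satisfying
the Leibniz rule for an anchor that preserves brackets is `A'`-trilinear, so on pure tensors
`J(u ⊗ α, v ⊗ β, w ⊗ γ) = uvw • J(1 ⊗ α, 1 ⊗ β, 1 ⊗ γ) = uvw ⊗ J_L(α, β, γ) = 0`.
-/

open TensorProduct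

namespace TensorProduct

section Lift

variable {R A M N P : Type*} [CommSemiring R] [CommSemiring A]
  [AddCommMonoid M] [Module A M] [Module R M] [SMulCommClass A R M]
  [AddCommMonoid N] [Module A N] [AddCommMonoid P] [Module R P]

def liftBalanced [Module R N] (f : M →ₗ[R] N →ₗ[R] P)
    (hf : ∀ (a : A) (m : M) (n : N), f (a • m) n = f m (a • n)) : M ⊗[A] N →ₗ[R] P where
  toAddHom := (liftAddHom (LinearMap.toAddMonoidHom'.comp f.toAddMonoidHom) hf).toAddHom
  map_smul' r x := by
    induction x with
    | zero => simp
    | tmul m n => rw [smul_tmul']; exact f.map_smul₂ r m n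
    | add x y hx hy => simp_all [smul_add]

@[simp]
theorem liftBalanced_tmul [Module R N] (f : M →ₗ[R] N →ₗ[R] P) (hf) (m : M) (n : N) :
    liftBalanced (A := A) f hf (m ⊗ₜ n) = f m n :=
  rfl

theorem linearMap_ext {g h : M ⊗[A] N →ₗ[R] P} (H : ∀ m n, g (m ⊗ₜ n) = h (m ⊗ₜ n)) : g = h :=
  LinearMap.ext fun x => x.induction_on (by simp only [map_zero]) H
    fun x y hx hy => by rw [map_add, map_add, hx, hy]

end Lift

variable {A M N M' N' : Type*} [CommSemiring A] [AddCommMonoid M] [Module A M]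
  [AddCommMonoid N] [Module A N] [AddCommMonoid M'] [Module A M'] [AddCommMonoid N'] [Module A N']

theorem induction_on₂ {motive : M ⊗[A] N → M' ⊗[A] N' → Prop} (x : M ⊗[A] N) (y : M' ⊗[A] N')
    (tmul : ∀ m n m' n', motive (m ⊗ₜ n) (m' ⊗ₜ n'))
    (add_left : ∀ x₁ x₂ y, motive x₁ y → motive x₂ y → motive (x₁ + x₂) y)
    (add_right : ∀ x y₁ y₂, motive x y₁ → motive x y₂ → motive x (y₁ + y₂)) :
    motive x y := by
  have on_tmul : ∀ m n, motive (m ⊗ₜ n) y := fun m n =>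
    y.induction_on (by simpa using tmul m n 0 0) (tmul m n) (add_right _)
  induction x with
  | zero => simpa using on_tmul 0 0
  | tmul m n => exact on_tmul m n
  | add x₁ x₂ h₁ h₂ => exact add_left x₁ x₂ y h₁ h₂

end TensorProduct

section Jacobiator

variable {R M : Type*} [CommRing R] [AddCommGroup M] [Module R M] (B : M →ₗ[R] M →ₗ[R] M)

def jacobiator (x y z : M) : M :=
  B x (B y z) + B y (B z x) + B z (B x y)

theorem jacobiator_cycle (x y z : M) : jacobiator B x y z = jacobiator B y z x := by
  unfold jacobiator; abel

theorem jacobiator_zero_left (y z : M) : jacobiator B 0 y z = 0 := by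
  simp only [jacobiator, map_zero, LinearMap.zero_apply, add_zero]

theorem jacobiator_add_left (x₁ x₂ y z : M) :
    jacobiator B (x₁ + x₂) y z = jacobiator B x₁ y z + jacobiator B x₂ y z := by
  simp only [jacobiator, map_add, LinearMap.add_apply]; abel

variable {A : Type*} [CommRing A] [Algebra R A] [Module A M] {B}

theorem jacobiator_smul_right {ρ : M → Derivation R A A} (hB : B.IsAlt)
    (hleib : ∀ (x y : M) (a : A), B x (a • y) = a • B x y + ρ x a • y)
    (hρ : ∀ (x y : M) (a : A), ρ (B x y) a = ρ x (ρ y a) - ρ y (ρ x a))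
    (x y z : M) (a : A) : jacobiator B x y (a • z) = a • jacobiator B x y z := by
  have hskew : ∀ x y, B y x = -B x y := fun x y => (hB.neg x y).symm
  simp only [jacobiator]
  rw [hskew x (a • z), hskew (B x y) (a • z)]
  simp only [hleib, map_add, map_neg, hρ]
  rw [hskew z x, hskew z (B x y)]
  simp only [map_neg, sub_smul]
  module

theorem jacobiator_smul_smul_smul {ρ : M → Derivation R A A} (hB : B.IsAlt)
    (hleib : ∀ (x y : M) (a : A), B x (a • y) = a • B x y + ρ x a • y)
    (hρ : ∀ (x y : M) (a : A), ρ (B x y) a = ρ x (ρ y a) - ρ y (ρ x a))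
    (x y z : M) (a b c : A) :
    jacobiator B (a • x) (b • y) (c • z) = (a * b * c) • jacobiator B x y z := by
  have h := jacobiator_smul_right hB hleib hρ
  rw [h, jacobiator_cycle, h, jacobiator_cycle, h, jacobiator_cycle]
  module

end Jacobiator

theorem jacobiator_eq_zero_of_tmul {R A N P : Type*} [CommRing R] [CommRing A]
    [AddCommGroup N] [Module A N] [Module R N] [SMulCommClass A R N] [AddCommGroup P] [Module A P]
    {B : N ⊗[A] P →ₗ[R] N ⊗[A] P →ₗ[R] N ⊗[A] P}
    (h : ∀ n₁ p₁ n₂ p₂ n₃ p₃, jacobiator B (n₁ ⊗ₜ p₁) (n₂ ⊗ₜ p₂) (n₃ ⊗ₜ p₃) = 0)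
    (x y z : N ⊗[A] P) : jacobiator B x y z = 0 := by
  have slot_one : ∀ {y z}, (∀ n p, jacobiator B (n ⊗ₜ p) y z = 0) → ∀ x, jacobiator B x y z = 0 :=
    fun on_tmul x => by
      induction x with
      | zero => exact jacobiator_zero_left B _ _
      | tmul n p => exact on_tmul n p
      | add x₁ x₂ h₁ h₂ => rw [jacobiator_add_left, h₁, h₂, add_zero]
  refine slot_one (fun n₁ p₁ => ?_) x
  rw [jacobiator_cycle]
  refine slot_one (fun n₂ p₂ => ?_) y
  rw [jacobiator_cycle]
  refine slot_one (fun n₃ p₃ => ?_) z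
  rw [jacobiator_cycle]
  exact h n₁ p₁ n₂ p₂ n₃ p₃

section Induced

variable {R A A' L : Type*} [CommRing R] [CommRing A] [Algebra R A]
  [CommRing A'] [Algebra R A'] [Algebra A A'] [IsScalarTower R A A']
  [AddCommGroup L] [Module R L] [Module A L]
  {B : L →ₗ[R] L →ₗ[R] L} {ρ : L →ₗ[A] Derivation R A A} {τ : L →ₗ[R] Derivation R A' A'}

def inducedAnchor (hτA : ∀ (a : A) (α : L) (w : A'), τ (a • α) w = algebraMap A A' a * τ α w) :
    A' ⊗[A] L →ₗ[A'] Derivation R A' A' :=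
  LinearMap.liftBaseChange A'
    { toFun := τ
      map_add' := τ.map_add
      map_smul' := fun a α => Derivation.ext fun w => by
        rw [hτA, RingHom.id_apply, Derivation.smul_apply, Algebra.smul_def] }

theorem inducedAnchor_tmul
    (hτA : ∀ (a : A) (α : L) (w : A'), τ (a • α) w = algebraMap A A' a * τ α w)
    (u : A') (α : L) (w : A') : inducedAnchor hτA (u ⊗ₜ α) w = u * τ α w :=
  rfl

variable (B τ) in
def IsInducedBracket (B' : A' ⊗[A] L →ₗ[R] A' ⊗[A] L →ₗ[R] A' ⊗[A] L) : Prop :=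
  ∀ (u v : A') (α β : L),
    B' (u ⊗ₜ α) (v ⊗ₜ β) = (u * v) ⊗ₜ B α β - (v * τ β u) ⊗ₜ α + (u * τ α v) ⊗ₜ β

section Construction

variable [IsScalarTower R A L]

variable (A B τ) in
def inducedBracketTmul (u : A') (α : L) : A' →ₗ[R] L →ₗ[R] A' ⊗[A] L :=
  LinearMap.mk₂ R (fun v β => (u * v) ⊗ₜ B α β - (v * τ β u) ⊗ₜ α + (u * τ α v) ⊗ₜ β)
    (fun v₁ v₂ β => by simp only [mul_add, add_mul, map_add, add_tmul]; abel)
    (fun r v β => by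
      simp only [mul_smul_comm, smul_mul_assoc, Derivation.map_smul, ← smul_tmul', smul_sub,
        smul_add])
    (fun v β₁ β₂ => by
      simp only [map_add, Derivation.add_apply, mul_add, add_tmul, tmul_add]; abel)
    (fun r v β => by
      simp only [map_smul, Derivation.smul_apply, mul_smul_comm, ← smul_tmul', tmul_smul,
        smul_sub, smul_add])

variable (hB : B.IsAlt) (hleib : ∀ (α β : L) (a : A), B α (a • β) = a • B α β + (ρ α a) • β)
  (hτφ : ∀ (α : L) (a : A), τ α (algebraMap A A' a) = algebraMap A A' (ρ α a))
  (hτA : ∀ (a : A) (α : L) (w : A'), τ (a • α) w = algebraMap A A' a * τ α w)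

include hleib hτφ hτA in
theorem inducedBracketTmul_smul_left_eq_smul_right (u : A') (α : L) (a : A) (v : A') (β : L) :
    inducedBracketTmul A B τ u α (a • v) β = inducedBracketTmul A B τ u α v (a • β) := by
  simp only [inducedBracketTmul, LinearMap.mk₂_apply, hleib, hτA, Algebra.smul_def,
    Derivation.leibniz, hτφ, Algebra.algebraMap_self, RingHom.id_apply, tmul_add, tmul_smul,
    smul_tmul']
  ring_nf
  rw [add_tmul]
  abel

include hB hleib hτφ hτA in
theorem inducedBracketTmul_smul_eq (a : A) (u : A') (α : L) :
    inducedBracketTmul A B τ (a • u) α = inducedBracketTmul A B τ u (a • α) := by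
  ext v β
  have hleib_left : B (a • α) β = a • B α β - ρ β a • α := by
    rw [← hB.neg β, hleib, ← hB.neg α β]; module
  simp only [inducedBracketTmul, LinearMap.mk₂_apply, hleib_left, hτA, Algebra.smul_def,
    Derivation.leibniz, hτφ, Algebra.algebraMap_self, RingHom.id_apply, tmul_sub, tmul_smul,
    smul_tmul', mul_add, add_tmul]
  ring_nf
  abel

def inducedBracketLeft (u : A') (α : L) : A' ⊗[A] L →ₗ[R] A' ⊗[A] L :=
  liftBalanced (inducedBracketTmul A B τ u α)
    (inducedBracketTmul_smul_left_eq_smul_right hleib hτφ hτA u α)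

def inducedBracket : A' ⊗[A] L →ₗ[R] A' ⊗[A] L →ₗ[R] A' ⊗[A] L :=
  liftBalanced
    (LinearMap.mk₂ R (inducedBracketLeft hleib hτφ hτA)
      (fun u₁ u₂ α => linearMap_ext fun v β => by
        simp only [inducedBracketLeft, inducedBracketTmul, liftBalanced_tmul, LinearMap.mk₂_apply,
          LinearMap.add_apply, map_add, add_mul, mul_add, add_tmul]
        abel)
      (fun r u α => linearMap_ext fun v β => by
        simp only [inducedBracketLeft, inducedBracketTmul, liftBalanced_tmul, LinearMap.mk₂_apply,
          LinearMap.smul_apply, Derivation.map_smul, smul_mul_assoc, mul_smul_comm, ← smul_tmul',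
          smul_sub, smul_add])
      (fun u α₁ α₂ => linearMap_ext fun v β => by
        simp only [inducedBracketLeft, inducedBracketTmul, liftBalanced_tmul, LinearMap.mk₂_apply,
          LinearMap.add_apply, map_add, Derivation.add_apply, mul_add, add_tmul, tmul_add]
        abel)
      (fun r u α => linearMap_ext fun v β => by
        simp only [inducedBracketLeft, inducedBracketTmul, liftBalanced_tmul, LinearMap.mk₂_apply,
          LinearMap.smul_apply, map_smul, Derivation.smul_apply, mul_smul_comm, ← smul_tmul',
          tmul_smul, smul_sub, smul_add]))
    (fun a u α => by
      simp only [LinearMap.mk₂_apply, inducedBracketLeft,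
        inducedBracketTmul_smul_eq hB hleib hτφ hτA])

theorem isInducedBracket_inducedBracket : IsInducedBracket B τ (inducedBracket hB hleib hτφ hτA) :=
  fun _ _ _ _ => rfl

end Construction

namespace IsInducedBracket

variable {B' : A' ⊗[A] L →ₗ[R] A' ⊗[A] L →ₗ[R] A' ⊗[A] L} (hB' : IsInducedBracket B τ B')
include hB'

theorem unique {B'' : A' ⊗[A] L →ₗ[R] A' ⊗[A] L →ₗ[R] A' ⊗[A] L}
    (hB'' : IsInducedBracket B τ B'') : B' = B'' :=
  linearMap_ext fun u α => linearMap_ext fun v β => by rw [hB', hB'']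

theorem one_tmul_one_tmul (α β : L) : B' (1 ⊗ₜ α) (1 ⊗ₜ β) = (1 : A') ⊗ₜ[A] B α β := by
  rw [hB']
  simp only [Derivation.map_one_eq_zero, mul_one, mul_zero, zero_tmul, sub_zero, add_zero]

theorem isAlt (hB : B.IsAlt) : B'.IsAlt := by
  have hskew : ∀ ξ η, B' η ξ = -B' ξ η := fun ξ η => by
    induction ξ, η using induction_on₂ with
    | tmul u α v β => rw [hB', hB', ← hB.neg α β, tmul_neg, mul_comm v u]; abel
    | add_left x₁ x₂ y h₁ h₂ => simp only [map_add, LinearMap.add_apply, h₁, h₂, neg_add]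
    | add_right x y₁ y₂ h₁ h₂ => simp only [map_add, LinearMap.add_apply, h₁, h₂, neg_add]
  intro ξ
  induction ξ with
  | zero => simp
  | tmul u α => rw [hB', hB α, tmul_zero, zero_sub, neg_add_cancel]
  | add x y hx hy => simp only [map_add, LinearMap.add_apply, hx, hy, hskew x y]; abel

variable (hτA : ∀ (a : A) (α : L) (w : A'), τ (a • α) w = algebraMap A A' a * τ α w)

theorem inducedAnchor_bracket_apply
    (hτlie : ∀ (α β : L) (w : A'), τ (B α β) w = τ α (τ β w) - τ β (τ α w))
    (ξ η : A' ⊗[A] L) (w : A') :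
    inducedAnchor hτA (B' ξ η) w =
      inducedAnchor hτA ξ (inducedAnchor hτA η w) - inducedAnchor hτA η (inducedAnchor hτA ξ w) := by
  induction ξ, η using induction_on₂ with
  | tmul u α v β =>
    rw [hB']
    simp only [map_add, map_sub, Derivation.add_apply, Derivation.sub_apply, inducedAnchor_tmul,
      hτlie, Derivation.leibniz, smul_eq_mul]
    ring
  | add_left x₁ x₂ y h₁ h₂ =>
    simp only [map_add, LinearMap.add_apply, Derivation.add_apply, h₁, h₂]; ring
  | add_right x y₁ y₂ h₁ h₂ =>
    simp only [map_add, Derivation.add_apply, h₁, h₂]; ring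

theorem leibniz (ξ η : A' ⊗[A] L) (w : A') :
    B' ξ (w • η) = w • B' ξ η + inducedAnchor hτA ξ w • η := by
  induction ξ, η using induction_on₂ with
  | tmul u α v β =>
    rw [smul_tmul', smul_eq_mul, hB', hB']
    simp only [smul_sub, smul_add, smul_tmul', smul_eq_mul, inducedAnchor_tmul, Derivation.leibniz]
    ring_nf
    rw [add_tmul]
    abel
  | add_left x₁ x₂ y h₁ h₂ =>
    simp only [map_add, LinearMap.add_apply, Derivation.add_apply, h₁, h₂, smul_add, add_smul]; abel
  | add_right x y₁ y₂ h₁ h₂ =>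
    simp only [smul_add, map_add, h₁, h₂]; abel

include hτA in
theorem jacobiator_eq_zero (hB : B.IsAlt)
    (hjac : ∀ α β γ, B α (B β γ) + B β (B γ α) + B γ (B α β) = 0)
    (hτlie : ∀ (α β : L) (w : A'), τ (B α β) w = τ α (τ β w) - τ β (τ α w))
    (ξ η ζ : A' ⊗[A] L) : jacobiator B' ξ η ζ = 0 := by
  refine jacobiator_eq_zero_of_tmul (fun u α v β w γ => ?_) ξ η ζ
  have smul_one_tmul : ∀ (u : A') (α : L), u ⊗ₜ[A] α = u • ((1 : A') ⊗ₜ[A] α) := fun u α => by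
    rw [smul_tmul', smul_eq_mul, mul_one]
  rw [smul_one_tmul u, smul_one_tmul v, smul_one_tmul w,
    jacobiator_smul_smul_smul (hB'.isAlt hB) (hB'.leibniz hτA)
      (hB'.inducedAnchor_bracket_apply hτA hτlie)]
  simp only [jacobiator, hB'.one_tmul_one_tmul, ← tmul_add, hjac, tmul_zero, smul_zero]

end IsInducedBracket

end Induced

theorem induced_lie_rinehart_structure_general
    (R A A' L : Type*) [CommRing R] [CommRing A] [Algebra R A]
    [CommRing A'] [Algebra R A'] [Algebra A A'] [IsScalarTower R A A']
    [AddCommGroup L] [Module R L] [Module A L] [IsScalarTower R A L]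
    (B : L →ₗ[R] L →ₗ[R] L)
    (ρ : L →ₗ[A] Derivation R A A)
    (halt : ∀ α, B α α = 0)
    (hjac : ∀ α β γ, B α (B β γ) + B β (B γ α) + B γ (B α β) = 0)
    (hleib : ∀ (α β : L) (a : A), B α (a • β) = a • B α β + (ρ α a) • β)
    (τ : L →ₗ[R] Derivation R A' A')
    (hτlie : ∀ (α β : L) (w : A'), τ (B α β) w = τ α (τ β w) - τ β (τ α w))
    (hτφ : ∀ (α : L) (a : A), τ α (algebraMap A A' a) = algebraMap A A' (ρ α a))
    (hτA : ∀ (a : A) (α : L) (w : A'),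
      τ (a • α) w = algebraMap A A' a * τ α w) :
    (∃! B' : (A' ⊗[A] L) →ₗ[R] (A' ⊗[A] L) →ₗ[R] (A' ⊗[A] L),
      ∀ (u v : A') (α β : L),
        B' (u ⊗ₜ[A] α) (v ⊗ₜ[A] β)
          = (u * v) ⊗ₜ[A] B α β - (v * τ β u) ⊗ₜ[A] α + (u * τ α v) ⊗ₜ[A] β) ∧
    (∀ B' : (A' ⊗[A] L) →ₗ[R] (A' ⊗[A] L) →ₗ[R] (A' ⊗[A] L),
      (∀ (u v : A') (α β : L),
        B' (u ⊗ₜ[A] α) (v ⊗ₜ[A] β)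
          = (u * v) ⊗ₜ[A] B α β - (v * τ β u) ⊗ₜ[A] α + (u * τ α v) ⊗ₜ[A] β) →
      (∀ ξ, B' ξ ξ = 0) ∧
      (∀ ξ η ζ, B' ξ (B' η ζ) + B' η (B' ζ ξ) + B' ζ (B' ξ η) = 0) ∧
      (∃ ρ' : (A' ⊗[A] L) →ₗ[A'] Derivation R A' A',
        (∀ (u : A') (α : L) (w : A'), ρ' (u ⊗ₜ[A] α) w = u * τ α w) ∧
        (∀ (ξ η : A' ⊗[A] L) (w : A'),
          ρ' (B' ξ η) w = ρ' ξ (ρ' η w) - ρ' η (ρ' ξ w)) ∧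
        (∀ (ξ η : A' ⊗[A] L) (w : A'),
          B' ξ (w • η) = w • B' ξ η + (ρ' ξ w) • η)) ∧
      (∀ α β : L,
        B' ((1 : A') ⊗ₜ[A] α) ((1 : A') ⊗ₜ[A] β) = (1 : A') ⊗ₜ[A] B α β)) := by
  have hbracket := isInducedBracket_inducedBracket halt hleib hτφ hτA
  refine ⟨⟨_, hbracket, fun B' hB' => IsInducedBracket.unique hB' hbracket⟩, ?_⟩
  intro B' (hB' : IsInducedBracket B τ B')
  exact ⟨hB'.isAlt halt, hB'.jacobiator_eq_zero hτA halt hjac hτlie,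
    ⟨inducedAnchor hτA, inducedAnchor_tmul hτA, hB'.inducedAnchor_bracket_apply hτA hτlie,
      hB'.leibniz hτA⟩,
    hB'.one_tmul_one_tmul⟩

/-- **Proposition 1.16** (induced Lie–Rinehart structure).
Given an `(R,A)`-Lie algebra `(L, B, ρ)`, an `R`-algebra map `φ = algebraMap A A'`,
and a morphism `τ : L → Der_R(A')` of Lie algebras over `R` compatible with `φ`
and satisfying `τ (a • α) = φ a • τ α`, the module `L' = A' ⊗[A] L` carries a
unique `R`-bilinear bracket with
`[u ⊗ α, v ⊗ β] = (uv) ⊗ [α,β] − (v·τ β u) ⊗ α + (u·τ α v) ⊗ β`;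
this bracket is alternating and satisfies the Jacobi identity, the pairing
`(u ⊗ α, w) ↦ u·τ α w` induces an `A'`-linear anchor `ρ'` which is a Lie algebra
morphism, the Leibniz rule `[ξ, w•η] = w•[ξ,η] + ρ' ξ w • η` holds, and
`α ↦ 1 ⊗ α` is a morphism of Lie algebras over `R`. -/
theorem induced_lie_rinehart_structure
    (R A A' L : Type*) [CommRing R] [CommRing A] [Algebra R A]
    [CommRing A'] [Algebra R A'] [Algebra A A'] [IsScalarTower R A A']
    [AddCommGroup L] [Module R L] [Module A L] [IsScalarTower R A L]
    (B : L →ₗ[R] L →ₗ[R] L)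
    (ρ : L →ₗ[A] Derivation R A A)
    (halt : ∀ α, B α α = 0)
    (hjac : ∀ α β γ, B α (B β γ) + B β (B γ α) + B γ (B α β) = 0)
    (hanch : ∀ (α β : L) (a : A), ρ (B α β) a = ρ α (ρ β a) - ρ β (ρ α a))
    (hleib : ∀ (α β : L) (a : A), B α (a • β) = a • B α β + (ρ α a) • β)
    (τ : L →ₗ[R] Derivation R A' A')
    (hτlie : ∀ (α β : L) (w : A'), τ (B α β) w = τ α (τ β w) - τ β (τ α w))
    (hτφ : ∀ (α : L) (a : A), τ α (algebraMap A A' a) = algebraMap A A' (ρ α a))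
    (hτA : ∀ (a : A) (α : L) (w : A'),
      τ (a • α) w = algebraMap A A' a * τ α w) :
    (∃! B' : (A' ⊗[A] L) →ₗ[R] (A' ⊗[A] L) →ₗ[R] (A' ⊗[A] L),
      ∀ (u v : A') (α β : L),
        B' (u ⊗ₜ[A] α) (v ⊗ₜ[A] β)
          = (u * v) ⊗ₜ[A] B α β - (v * τ β u) ⊗ₜ[A] α + (u * τ α v) ⊗ₜ[A] β) ∧
    (∀ B' : (A' ⊗[A] L) →ₗ[R] (A' ⊗[A] L) →ₗ[R] (A' ⊗[A] L),
      (∀ (u v : A') (α β : L),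
        B' (u ⊗ₜ[A] α) (v ⊗ₜ[A] β)
          = (u * v) ⊗ₜ[A] B α β - (v * τ β u) ⊗ₜ[A] α + (u * τ α v) ⊗ₜ[A] β) →
      (∀ ξ, B' ξ ξ = 0) ∧
      (∀ ξ η ζ, B' ξ (B' η ζ) + B' η (B' ζ ξ) + B' ζ (B' ξ η) = 0) ∧
      (∃ ρ' : (A' ⊗[A] L) →ₗ[A'] Derivation R A' A',
        (∀ (u : A') (α : L) (w : A'), ρ' (u ⊗ₜ[A] α) w = u * τ α w) ∧
        (∀ (ξ η : A' ⊗[A] L) (w : A'),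
          ρ' (B' ξ η) w = ρ' ξ (ρ' η w) - ρ' η (ρ' ξ w)) ∧
        (∀ (ξ η : A' ⊗[A] L) (w : A'),
          B' ξ (w • η) = w • B' ξ η + (ρ' ξ w) • η)) ∧
      (∀ α β : L,
        B' ((1 : A') ⊗ₜ[A] α) ((1 : A') ⊗ₜ[A] β) = (1 : A') ⊗ₜ[A] B α β)) :=
  induced_lie_rinehart_structure_general R A A' L B ρ halt hjac hleib τ hτlie hτφ hτA
end

section
/- Let R be a commutative ring, A a commutative R-algebra, (L,[·,·],ρ) an (R,A)-Lie algebra, M an A-module, and ω an L-connection on M with curvature Ω(α,β) := ω(α)∘ω(β) − ω(β)∘ω(α) − ω([α,β]). Then the generalized Bianchi identity holds: for all α,β,γ ∈ L, [ω(α), Ω(β,γ)] − [ω(β), Ω(α,γ)] + [ω(γ), Ω(α,β)] − Ω([α,β], γ) + Ω([α,γ], β) − Ω([β,γ], α) = 0 in End_R(M), where [φ,ψ] := φ∘ψ − ψ∘φ denotes the commutator of endomorphisms. (Bianchi identity (2.10).) -/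
/-! The cross terms `[ω α, ω [β, γ]]` coming from the commutator part of the curvature cancel
against those of `Ω ([β, γ], α)`, and the triple commutators of the `ω`'s vanish by the Jacobi
identity of the associative algebra `End_R(M)`. What is left is `ω` applied to a Jacobiator of
`L`, which vanishes. -/

section Bianchi

variable {R L E : Type*} [CommRing R] [AddCommGroup L] [Module R L] [Ring E] [Module R E]

def curvature (B : L →ₗ[R] L →ₗ[R] L) (ω : L →ₗ[R] E) (α β : L) : E :=
  ω α * ω β - ω β * ω α - ω (B α β)

theorem bianchi_sum_eq_map_jacobiator (B : L →ₗ[R] L →ₗ[R] L) (ω : L →ₗ[R] E) (α β γ : L) :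
    (ω α * curvature B ω β γ - curvature B ω β γ * ω α)
        - (ω β * curvature B ω α γ - curvature B ω α γ * ω β)
        + (ω γ * curvature B ω α β - curvature B ω α β * ω γ)
        - curvature B ω (B α β) γ + curvature B ω (B α γ) β - curvature B ω (B β γ) α
      = ω (B (B α β) γ - B (B α γ) β + B (B β γ) α) := by
  simp only [curvature, map_add, map_sub]
  noncomm_ring

theorem jacobiator_eq_zero {B : L →ₗ[R] L →ₗ[R] L} (halt : B.IsAlt)
    (hjac : ∀ α β γ, B α (B β γ) + B β (B γ α) + B γ (B α β) = 0) (α β γ : L) :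
    B (B α β) γ - B (B α γ) β + B (B β γ) α = 0 := by
  rw [← halt.neg γ (B α β), ← halt.neg β (B α γ), ← halt.neg α (B β γ), ← halt.neg γ α,
    map_neg]
  linear_combination (norm := abel) -hjac α β γ

end Bianchi

theorem generalized_bianchi_identity_general
    (R L M : Type*) [CommRing R]
    [AddCommGroup L] [Module R L]
    [AddCommGroup M] [Module R M]
    (B : L →ₗ[R] L →ₗ[R] L)
    (halt : ∀ α, B α α = 0)
    (hjac : ∀ α β γ, B α (B β γ) + B β (B γ α) + B γ (B α β) = 0)
    (ω : L →ₗ[R] Module.End R M)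
    (Ωc : L → L → Module.End R M)
    (hΩc : ∀ α β : L, Ωc α β = ω α * ω β - ω β * ω α - ω (B α β)) :
    ∀ α β γ : L,
      (ω α * Ωc β γ - Ωc β γ * ω α)
        - (ω β * Ωc α γ - Ωc α γ * ω β)
        + (ω γ * Ωc α β - Ωc α β * ω γ)
        - Ωc (B α β) γ + Ωc (B α γ) β - Ωc (B β γ) α = 0 := by
  intro α β γ
  obtain rfl : Ωc = curvature B ω := funext₂ hΩc
  rw [bianchi_sum_eq_map_jacobiator, jacobiator_eq_zero halt hjac, map_zero]

/-- **Generalized Bianchi identity (2.10).**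
Let `(L, B, ρ)` be an `(R,A)`-Lie algebra, `M` an `A`-module and `ω` an
`L`-connection on `M` with curvature `Ωc α β = ω α * ω β − ω β * ω α − ω (B α β)`
(products in `End_R(M)` are composition).  Then for all `α β γ`:
`[ω α, Ωc β γ] − [ω β, Ωc α γ] + [ω γ, Ωc α β]
  − Ωc [α,β] γ + Ωc [α,γ] β − Ωc [β,γ] α = 0`. -/
theorem generalized_bianchi_identity
    (R A L M : Type*) [CommRing R] [CommRing A] [Algebra R A]
    [AddCommGroup L] [Module R L] [Module A L] [IsScalarTower R A L]
    [AddCommGroup M] [Module R M] [Module A M] [IsScalarTower R A M]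
    (B : L →ₗ[R] L →ₗ[R] L)
    (ρ : L →ₗ[A] Derivation R A A)
    (halt : ∀ α, B α α = 0)
    (hjac : ∀ α β γ, B α (B β γ) + B β (B γ α) + B γ (B α β) = 0)
    (hanch : ∀ (α β : L) (a : A), ρ (B α β) a = ρ α (ρ β a) - ρ β (ρ α a))
    (hleib : ∀ (α β : L) (a : A), B α (a • β) = a • B α β + (ρ α a) • β)
    (ω : L →ₗ[R] Module.End R M)
    (hω1 : ∀ (a : A) (α : L) (m : M), ω (a • α) m = a • ω α m)
    (hω2 : ∀ (α : L) (a : A) (m : M), ω α (a • m) = a • ω α m + (ρ α a) • m)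
    (Ωc : L → L → Module.End R M)
    (hΩc : ∀ α β : L, Ωc α β = ω α * ω β - ω β * ω α - ω (B α β)) :
    ∀ α β γ : L,
      (ω α * Ωc β γ - Ωc β γ * ω α)
        - (ω β * Ωc α γ - Ωc α γ * ω β)
        + (ω γ * Ωc α β - Ωc α β * ω γ)
        - Ωc (B α β) γ + Ωc (B α γ) β - Ωc (B β γ) α = 0 :=
  generalized_bianchi_identity_general R L M B halt hjac ω Ωc hΩc
end

section
/- Let R be a commutative ring, A a commutative R-algebra, (L,[·,·],ρ) an (R,A)-Lie algebra, and let M₁ and M₂ be A-modules carrying L-connections ω₁ and ω₂ whose curvatures are scalar: there are A-bilinear alternating forms Ω₁, Ω₂ : L × L → A with ωᵢ(α)∘ωᵢ(β) − ωᵢ(β)∘ωᵢ(α) − ωᵢ([α,β]) = (scalar multiplication by Ωᵢ(α,β)) on Mᵢ for i = 1,2 and all α,β ∈ L. Then there is a unique R-linear map ω : L → End_R(M₁ ⊗_A M₂) with ω(α)(x ⊗ y) = (ω₁(α)(x)) ⊗ y + x ⊗ (ω₂(α)(y)) for all x ∈ M₁, y ∈ M₂; this ω is an L-connection on M₁ ⊗_A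 M₂; and its curvature is scalar multiplication by Ω₁ + Ω₂: ω(α)∘ω(β) − ω(β)∘ω(α) − ω([α,β]) = (scalar multiplication by Ω₁(α,β) + Ω₂(α,β)). (Key computation in the proof of Theorem 2.15: the curvature class is additive under tensor product of rank-one modules.) -/
/-!
The tensor connection is the unique endomorphism `F` with `F (x ⊗ y) = f x ⊗ y + x ⊗ g y`
(pure tensors span). Such Leibniz extensions add, scale by `A` and, since the cross terms cancel,
commute with commutators. Hence the curvature of `ω` is the Leibniz extension of the pair of
curvatures `(Ω₁ • 1, Ω₂ • 1)`, which by uniqueness is `(Ω₁ + Ω₂) • 1`.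
-/

open TensorProduct

section LeibnizExtension

variable {R A M₁ M₂ : Type*} [CommRing R] [CommRing A] [Algebra R A]
  [AddCommGroup M₁] [Module R M₁] [Module A M₁] [IsScalarTower R A M₁]
  [AddCommGroup M₂] [Module R M₂] [Module A M₂]

def IsLeibnizExtension (f : Module.End R M₁) (g : Module.End R M₂)
    (F : Module.End R (M₁ ⊗[A] M₂)) : Prop :=
  ∀ x y, F (x ⊗ₜ[A] y) = f x ⊗ₜ[A] y + x ⊗ₜ[A] g y

variable {f f' : Module.End R M₁} {g g' : Module.End R M₂} {F F' : Module.End R (M₁ ⊗[A] M₂)}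

namespace IsLeibnizExtension

theorem unique (hF : IsLeibnizExtension f g F) (hF' : IsLeibnizExtension f g F') : F = F' := by
  ext t
  induction t using TensorProduct.induction_on with
  | zero => simp
  | tmul x y => rw [hF, hF']
  | add s t hs ht => rw [map_add, map_add, hs, ht]

theorem add (hF : IsLeibnizExtension f g F) (hF' : IsLeibnizExtension f' g' F') :
    IsLeibnizExtension (f + f') (g + g') (F + F') := by
  intro x y
  simp only [LinearMap.add_apply, hF x y, hF' x y, add_tmul, tmul_add]
  abel

theorem sub (hF : IsLeibnizExtension f g F) (hF' : IsLeibnizExtension f' g' F') :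
    IsLeibnizExtension (f - f') (g - g') (F - F') := by
  intro x y
  simp only [LinearMap.sub_apply, hF x y, hF' x y, sub_tmul, tmul_sub]
  abel

theorem smul [IsScalarTower R A M₂] (a : A) (hF : IsLeibnizExtension f g F) :
    IsLeibnizExtension (a • f) (a • g) (a • F) := by
  intro x y
  simp only [LinearMap.smul_apply, hF x y, smul_add, smul_tmul', tmul_smul]

theorem lie (hF : IsLeibnizExtension f g F) (hF' : IsLeibnizExtension f' g' F') :
    IsLeibnizExtension ⁅f, f'⁆ ⁅g, g'⁆ ⁅F, F'⁆ := by
  intro x y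
  simp only [LieRing.of_associative_ring_bracket, LinearMap.sub_apply, Module.End.mul_apply,
    hF' x y, hF x y, map_add, hF _ _, hF' _ _, sub_tmul, tmul_sub]
  abel

theorem map_smul {d : A → A} (hf : ∀ (a : A) m, f (a • m) = a • f m + d a • m)
    (hF : IsLeibnizExtension f g F) (a : A) (t : M₁ ⊗[A] M₂) :
    F (a • t) = a • F t + d a • t := by
  induction t using TensorProduct.induction_on with
  | zero => simp
  | tmul x y =>
    rw [smul_tmul', hF, hF, hf, add_tmul, smul_add, smul_tmul', smul_tmul', smul_tmul']
    abel
  | add s t hs ht =>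
    rw [smul_add, map_add, hs, ht, map_add, smul_add, smul_add]
    abel

end IsLeibnizExtension

theorem isLeibnizExtension_smul_one [IsScalarTower R A M₂] (a b : A) :
    IsLeibnizExtension (A := A) (a • 1 : Module.End R M₁) (b • 1 : Module.End R M₂)
      ((a + b) • 1) := by
  intro x y
  simp only [add_smul, LinearMap.add_apply, LinearMap.smul_apply, Module.End.one_apply, smul_tmul',
    tmul_smul]

variable (f g) in
/-- Well defined on `M₁ ⊗[A] M₂` because `f` and `g` satisfy the Leibniz rule for the same `d`,
so the `d a` terms of `(a • x) ⊗ y` and `x ⊗ (a • y)` agree. -/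
noncomputable def leibnizExtension (d : A → A) (hf : ∀ (a : A) m, f (a • m) = a • f m + d a • m)
    (hg : ∀ (a : A) m, g (a • m) = a • g m + d a • m) : Module.End R (M₁ ⊗[A] M₂) where
  toFun := TensorProduct.liftAddHom
    { toFun := fun x =>
        { toFun := fun y => f x ⊗ₜ[A] y + x ⊗ₜ[A] g y
          map_zero' := by simp
          map_add' := fun y z => by simp only [map_add, tmul_add]; abel }
      map_zero' := by ext; simp
      map_add' := fun x x' => by
        ext
        simp only [AddMonoidHom.coe_mk, ZeroHom.coe_mk, AddMonoidHom.add_apply, map_add, add_tmul]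
        abel }
    fun a x y => by
      simp only [AddMonoidHom.coe_mk, ZeroHom.coe_mk, hf, hg, add_tmul, tmul_add, smul_tmul]
      abel
  map_add' := map_add _
  map_smul' r t := by
    induction t using TensorProduct.induction_on with
    | zero => simp
    | tmul x y => simp [smul_tmul', smul_add]
    | add s t hs ht => simp_all [smul_add]

theorem isLeibnizExtension_leibnizExtension (d : A → A)
    (hf : ∀ (a : A) m, f (a • m) = a • f m + d a • m)
    (hg : ∀ (a : A) m, g (a • m) = a • g m + d a • m) :
    IsLeibnizExtension f g (leibnizExtension f g d hf hg) :=
  fun _ _ => rfl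

end LeibnizExtension

theorem tensor_product_connection_curvature_additive_general
    (R A L M₁ M₂ : Type*) [CommRing R] [CommRing A] [Algebra R A]
    [AddCommGroup L] [Module R L] [Module A L]
    [AddCommGroup M₁] [Module R M₁] [Module A M₁] [IsScalarTower R A M₁]
    [AddCommGroup M₂] [Module R M₂] [Module A M₂] [IsScalarTower R A M₂]
    (B : L →ₗ[R] L →ₗ[R] L)
    (ρ : L →ₗ[A] Derivation R A A)
    (ω₁ : L →ₗ[R] Module.End R M₁)
    (hω₁1 : ∀ (a : A) (α : L) (m : M₁), ω₁ (a • α) m = a • ω₁ α m)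
    (hω₁2 : ∀ (α : L) (a : A) (m : M₁), ω₁ α (a • m) = a • ω₁ α m + (ρ α a) • m)
    (ω₂ : L →ₗ[R] Module.End R M₂)
    (hω₂1 : ∀ (a : A) (α : L) (m : M₂), ω₂ (a • α) m = a • ω₂ α m)
    (hω₂2 : ∀ (α : L) (a : A) (m : M₂), ω₂ α (a • m) = a • ω₂ α m + (ρ α a) • m)
    (Ω₁ Ω₂ : L →ₗ[A] L →ₗ[A] A)
    (hcurv₁ : ∀ (α β : L) (m : M₁),
      ω₁ α (ω₁ β m) - ω₁ β (ω₁ α m) - ω₁ (B α β) m = (Ω₁ α β) • m)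
    (hcurv₂ : ∀ (α β : L) (m : M₂),
      ω₂ α (ω₂ β m) - ω₂ β (ω₂ α m) - ω₂ (B α β) m = (Ω₂ α β) • m) :
    (∃! ω : L →ₗ[R] Module.End R (M₁ ⊗[A] M₂),
      ∀ (α : L) (x : M₁) (y : M₂),
        ω α (x ⊗ₜ[A] y) = (ω₁ α x) ⊗ₜ[A] y + x ⊗ₜ[A] (ω₂ α y)) ∧
    (∀ ω : L →ₗ[R] Module.End R (M₁ ⊗[A] M₂),
      (∀ (α : L) (x : M₁) (y : M₂),
        ω α (x ⊗ₜ[A] y) = (ω₁ α x) ⊗ₜ[A] y + x ⊗ₜ[A] (ω₂ α y)) →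
      (∀ (a : A) (α : L) (t : M₁ ⊗[A] M₂), ω (a • α) t = a • ω α t) ∧
      (∀ (α : L) (a : A) (t : M₁ ⊗[A] M₂),
        ω α (a • t) = a • ω α t + (ρ α a) • t) ∧
      (∀ (α β : L) (t : M₁ ⊗[A] M₂),
        ω α (ω β t) - ω β (ω α t) - ω (B α β) t
          = (Ω₁ α β + Ω₂ α β) • t)) := by
  have hext (α : L) := isLeibnizExtension_leibnizExtension (ρ α) (hω₁2 α) (hω₂2 α)
  let ω₀ : L →ₗ[R] Module.End R (M₁ ⊗[A] M₂) :=
    { toFun α := leibnizExtension (ω₁ α) (ω₂ α) (ρ α) (hω₁2 α) (hω₂2 α)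
      map_add' α β := (hext (α + β)).unique <| by
        simpa only [map_add] using (hext α).add (hext β)
      map_smul' r α := (hext (r • α)).unique <| by
        simpa only [map_smul, algebraMap_smul, RingHom.id_apply] using
          (hext α).smul (algebraMap R A r) }
  have hω₁ (a : A) (α : L) : ω₁ (a • α) = a • ω₁ α := LinearMap.ext (hω₁1 a α)
  have hω₂ (a : A) (α : L) : ω₂ (a • α) = a • ω₂ α := LinearMap.ext (hω₂1 a α)
  have hΩ₁ (α β : L) : ⁅ω₁ α, ω₁ β⁆ - ω₁ (B α β) = Ω₁ α β • 1 := LinearMap.ext (hcurv₁ α β)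
  have hΩ₂ (α β : L) : ⁅ω₂ α, ω₂ β⁆ - ω₂ (B α β) = Ω₂ α β • 1 := LinearMap.ext (hcurv₂ α β)
  refine ⟨⟨ω₀, hext, fun ω hω => LinearMap.ext fun α => IsLeibnizExtension.unique (hω α) (hext α)⟩,
    fun ω hω => ?_⟩
  change ∀ α, IsLeibnizExtension (ω₁ α) (ω₂ α) (ω α) at hω
  refine ⟨fun a α t => ?_, fun α a t => (hω α).map_smul (hω₁2 α) a t, fun α β t => ?_⟩
  · have := (hω (a • α)).unique (by simpa only [hω₁, hω₂] using (hω α).smul a)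
    exact LinearMap.congr_fun this t
  · have := (((hω α).lie (hω β)).sub (hω (B α β))).unique
      (by simpa only [hΩ₁, hΩ₂] using isLeibnizExtension_smul_one (Ω₁ α β) (Ω₂ α β))
    simpa [LieRing.of_associative_ring_bracket] using LinearMap.congr_fun this t

/-- **Key computation in the proof of Theorem 2.15.**
Let `M₁` and `M₂` be `A`-modules carrying `L`-connections `ω₁`, `ω₂` whose
curvatures are scalar multiplication by `A`-bilinear alternating forms `Ω₁`,
`Ω₂`.  Then there is a unique `R`-linear map `ω : L → End_R (M₁ ⊗[A] M₂)` with
`ω α (x ⊗ y) = (ω₁ α x) ⊗ y + x ⊗ (ω₂ α y)`; this `ω` is an `L`-connection on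
`M₁ ⊗[A] M₂`, and its curvature is scalar multiplication by `Ω₁ + Ω₂`. -/
theorem tensor_product_connection_curvature_additive
    (R A L M₁ M₂ : Type*) [CommRing R] [CommRing A] [Algebra R A]
    [AddCommGroup L] [Module R L] [Module A L] [IsScalarTower R A L]
    [AddCommGroup M₁] [Module R M₁] [Module A M₁] [IsScalarTower R A M₁]
    [AddCommGroup M₂] [Module R M₂] [Module A M₂] [IsScalarTower R A M₂]
    (B : L →ₗ[R] L →ₗ[R] L)
    (ρ : L →ₗ[A] Derivation R A A)
    (halt : ∀ α, B α α = 0)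
    (hjac : ∀ α β γ, B α (B β γ) + B β (B γ α) + B γ (B α β) = 0)
    (hanch : ∀ (α β : L) (a : A), ρ (B α β) a = ρ α (ρ β a) - ρ β (ρ α a))
    (hleib : ∀ (α β : L) (a : A), B α (a • β) = a • B α β + (ρ α a) • β)
    (ω₁ : L →ₗ[R] Module.End R M₁)
    (hω₁1 : ∀ (a : A) (α : L) (m : M₁), ω₁ (a • α) m = a • ω₁ α m)
    (hω₁2 : ∀ (α : L) (a : A) (m : M₁), ω₁ α (a • m) = a • ω₁ α m + (ρ α a) • m)
    (ω₂ : L →ₗ[R] Module.End R M₂)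
    (hω₂1 : ∀ (a : A) (α : L) (m : M₂), ω₂ (a • α) m = a • ω₂ α m)
    (hω₂2 : ∀ (α : L) (a : A) (m : M₂), ω₂ α (a • m) = a • ω₂ α m + (ρ α a) • m)
    (Ω₁ Ω₂ : L →ₗ[A] L →ₗ[A] A)
    (hΩ₁alt : ∀ α, Ω₁ α α = 0) (hΩ₂alt : ∀ α, Ω₂ α α = 0)
    (hcurv₁ : ∀ (α β : L) (m : M₁),
      ω₁ α (ω₁ β m) - ω₁ β (ω₁ α m) - ω₁ (B α β) m = (Ω₁ α β) • m)
    (hcurv₂ : ∀ (α β : L) (m : M₂),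
      ω₂ α (ω₂ β m) - ω₂ β (ω₂ α m) - ω₂ (B α β) m = (Ω₂ α β) • m) :
    (∃! ω : L →ₗ[R] Module.End R (M₁ ⊗[A] M₂),
      ∀ (α : L) (x : M₁) (y : M₂),
        ω α (x ⊗ₜ[A] y) = (ω₁ α x) ⊗ₜ[A] y + x ⊗ₜ[A] (ω₂ α y)) ∧
    (∀ ω : L →ₗ[R] Module.End R (M₁ ⊗[A] M₂),
      (∀ (α : L) (x : M₁) (y : M₂),
        ω α (x ⊗ₜ[A] y) = (ω₁ α x) ⊗ₜ[A] y + x ⊗ₜ[A] (ω₂ α y)) →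
      (∀ (a : A) (α : L) (t : M₁ ⊗[A] M₂), ω (a • α) t = a • ω α t) ∧
      (∀ (α : L) (a : A) (t : M₁ ⊗[A] M₂),
        ω α (a • t) = a • ω α t + (ρ α a) • t) ∧
      (∀ (α β : L) (t : M₁ ⊗[A] M₂),
        ω α (ω β t) - ω β (ω α t) - ω (B α β) t
          = (Ω₁ α β + Ω₂ α β) • t)) :=
  tensor_product_connection_curvature_additive_general R A L M₁ M₂ B ρ ω₁ hω₁1 hω₁2 ω₂ hω₂1 hω₂2 Ω₁
    Ω₂ hcurv₁ hcurv₂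
end

section
/- Let R be a commutative ring, A a commutative R-algebra, (L,[·,·],ρ) an (R,A)-Lie algebra, and M an A-module. Let DO(A,L,M) be the set of pairs (β,α) ∈ End_R(M) × L such that β(a•m) = ρ(α)(a)•m + a•β(m) for all a ∈ A and m ∈ M. Then: (i) if (β,α) and (β',α') lie in DO(A,L,M), then so does (β∘β' − β'∘β, [α,α']); (ii) if (β,α) ∈ DO(A,L,M) and b ∈ A, then (m ↦ b•β(m), b•α) ∈ DO(A,L,M). Consequently DO(A,L,M) is a Lie subalgebra over R of End_R(M) × L with the componentwise commutator bracket, it is stable under the A-action (b,(β,α)) ↦ (b•β, b•α), and for every A-linear endomorphism μ of M the pair (μ, 0) lies in DO(A,L,M). (Construction of the infinitesimal gauge algebra, (2.11.4)–(2.11.8).) -/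
/-! The defining identity of `DO(A,L,M)` sees `α` only through its symbol `ρ α : A → A`.
The commutator of two first-order operators is first order, with the commutator of the symbols
as symbol, and the anchor identity says exactly that this commutator is `ρ [α, α']`. -/

/-- The paper's `DO(A,L,M)` consists of the pairs `(β, α)` with
`IsFirstOrderWithSymbol β (ρ α)`. -/
def IsFirstOrderWithSymbol {R A M : Type*} [CommRing R] [CommRing A]
    [AddCommGroup M] [Module R M] [Module A M] (β : Module.End R M) (D : A → A) : Prop :=
  ∀ (a : A) (m : M), β (a • m) = D a • m + a • β m

namespace IsFirstOrderWithSymbol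

variable {R A M : Type*} [CommRing R] [CommRing A] [AddCommGroup M] [Module R M] [Module A M]

theorem commutator {β β' : Module.End R M} {D D' : A → A}
    (h : IsFirstOrderWithSymbol β D) (h' : IsFirstOrderWithSymbol β' D') :
    IsFirstOrderWithSymbol (β * β' - β' * β) (fun a => D (D' a) - D' (D a)) := by
  rw [IsFirstOrderWithSymbol] at h h'
  intro a m
  simp only [LinearMap.sub_apply, Module.End.mul_apply, h, h', map_add, sub_smul]
  module

theorem smul [SMulCommClass R A M] {β : Module.End R M} {D : A → A}
    (h : IsFirstOrderWithSymbol β D) (b : A) :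
    IsFirstOrderWithSymbol (b • β) (b • D) := by
  intro a m
  simp only [LinearMap.smul_apply, h a m, Pi.smul_apply, smul_eq_mul]
  module

theorem restrictScalars [Algebra R A] [IsScalarTower R A M] (μ : M →ₗ[A] M) :
    IsFirstOrderWithSymbol (μ.restrictScalars R) (0 : A → A) := by
  intro a m
  simp

end IsFirstOrderWithSymbol

theorem infinitesimal_gauge_algebra_closure_general
    (R A L M : Type*) [CommRing R] [CommRing A] [Algebra R A]
    [AddCommGroup L] [Module R L] [Module A L]
    [AddCommGroup M] [Module R M] [Module A M] [IsScalarTower R A M]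
    (B : L →ₗ[R] L →ₗ[R] L)
    (ρ : L →ₗ[A] Derivation R A A)
    (hanch : ∀ (α β : L) (a : A), ρ (B α β) a = ρ α (ρ β a) - ρ β (ρ α a))
    (DO : Module.End R M × L → Prop)
    (hDO : ∀ (β : Module.End R M) (α : L),
      DO (β, α) ↔ ∀ (a : A) (m : M), β (a • m) = (ρ α a) • m + a • β m) :
    (∀ (β β' : Module.End R M) (α α' : L),
      DO (β, α) → DO (β', α') → DO (β * β' - β' * β, B α α')) ∧
    (∀ (b : A) (β : Module.End R M) (α : L),
      DO (β, α) → DO (b • β, b • α)) ∧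
    (∀ μ : M →ₗ[A] M, DO (LinearMap.restrictScalars R μ, 0)) := by
  refine ⟨fun β β' α α' h h' => ?_, fun b β α h => ?_, fun μ => ?_⟩
  · have hsymb : ⇑(ρ (B α α')) = fun a => ρ α (ρ α' a) - ρ α' (ρ α a) := funext (hanch α α')
    exact (hDO _ _).2 <|
      hsymb ▸ IsFirstOrderWithSymbol.commutator ((hDO β α).1 h) ((hDO β' α').1 h')
  · have hsymb : ⇑(ρ (b • α)) = b • ⇑(ρ α) := by rw [map_smul, Derivation.coe_smul]
    exact (hDO _ _).2 (hsymb ▸ IsFirstOrderWithSymbol.smul ((hDO β α).1 h) b)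
  · have hsymb : ⇑(ρ 0) = 0 := by rw [map_zero, Derivation.coe_zero]
    exact (hDO _ _).2 (hsymb ▸ IsFirstOrderWithSymbol.restrictScalars μ)

/-- **Construction of the infinitesimal gauge algebra (2.11.4)–(2.11.8).**
Let `(L, B, ρ)` be an `(R,A)`-Lie algebra and `M` an `A`-module.  Let
`DO` be the predicate on `End_R(M) × L` singling out the pairs `(β, α)` with
`β (a • m) = ρ α a • m + a • β m`.  Then `DO` is closed under the componentwise
commutator bracket, it is stable under the `A`-action `(b, (β,α)) ↦ (b•β, b•α)`,
and for every `A`-linear endomorphism `μ` of `M` the pair `(μ, 0)` belongs to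
`DO`.  Hence `DO(A,L,M)` is a Lie subalgebra over `R` of `End_R(M) × L`, stable
under the `A`-action, containing `End_A(M)`. -/
theorem infinitesimal_gauge_algebra_closure
    (R A L M : Type*) [CommRing R] [CommRing A] [Algebra R A]
    [AddCommGroup L] [Module R L] [Module A L] [IsScalarTower R A L]
    [AddCommGroup M] [Module R M] [Module A M] [IsScalarTower R A M]
    (B : L →ₗ[R] L →ₗ[R] L)
    (ρ : L →ₗ[A] Derivation R A A)
    (halt : ∀ α, B α α = 0)
    (hjac : ∀ α β γ, B α (B β γ) + B β (B γ α) + B γ (B α β) = 0)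
    (hanch : ∀ (α β : L) (a : A), ρ (B α β) a = ρ α (ρ β a) - ρ β (ρ α a))
    (hleib : ∀ (α β : L) (a : A), B α (a • β) = a • B α β + (ρ α a) • β)
    (DO : Module.End R M × L → Prop)
    (hDO : ∀ (β : Module.End R M) (α : L),
      DO (β, α) ↔ ∀ (a : A) (m : M), β (a • m) = (ρ α a) • m + a • β m) :
    (∀ (β β' : Module.End R M) (α α' : L),
      DO (β, α) → DO (β', α') → DO (β * β' - β' * β, B α α')) ∧
    (∀ (b : A) (β : Module.End R M) (α : L),
      DO (β, α) → DO (b • β, b • α)) ∧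
    (∀ μ : M →ₗ[A] M, DO (LinearMap.restrictScalars R μ, 0)) :=
  infinitesimal_gauge_algebra_closure_general R A L M B ρ hanch DO hDO
end

section
/- Let R be a commutative ring, A a commutative R-algebra, (L,[·,·],ρ) an (R,A)-Lie algebra, and M an A-module equipped with a flat L-action σ : L → End_R(M), i.e. σ(a•α)(m) = a•(σ(α)(m)), σ(α)(a•m) = a•(σ(α)(m)) + ρ(α)(a)•m, and σ([α,β]) = σ(α)∘σ(β) − σ(β)∘σ(α) for all α,β ∈ L, a ∈ A, m ∈ M. Let Ω : L × L → M be an A-bilinear alternating map, and endow M × L with the bracket [(x,α),(y,β)] := (σ(α)(y) − σ(β)(x) + Ω(α,β), [α,β]). This bracket is R-bilinear and alternating, and it satisfies the Jacobi identity — so that M × L becomes a Lie algebra over R, giving an extension of L by the abelian Lie algebra M split as A-modules — if and only if Ω is a 2-cocycle: σ(α)(Ω(β,γ)) − σ(β)(Ω(α,γ)) + σ(γ)(Ω(α,β)) − Ω([α,β], γ) + Ω([α,γ], β) − Ω([β,γ], α) = 0 for all α,β,γ ∈ L. (The correspondence between 2-cocycles and extensions underlying Theorem 2.6.) -/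
/-!
Expand the Jacobiator of the bracket at `(x, α), (y, β), (z, γ)`. Its `L`-component is the
Jacobiator of `L`. In its `M`-component the terms in `x`, `y`, `z` cancel because `σ` is flat, and
what remains, after using skew-symmetry of `Ω` and of the bracket of `L`, is the
Chevalley–Eilenberg differential `dΩ(α, β, γ)`. Hence Jacobi holds iff `dΩ = 0`.
-/

section ExtensionBracket

variable {R L M : Type*} [CommRing R] [AddCommGroup L] [Module R L] [AddCommGroup M] [Module R M]

open LinearMap

def cochainD₂ (B : L →ₗ[R] L →ₗ[R] L) (σ : L →ₗ[R] Module.End R M) (Ω : L →ₗ[R] L →ₗ[R] M)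
    (α β γ : L) : M :=
  σ α (Ω β γ) - σ β (Ω α γ) + σ γ (Ω α β) - Ω (B α β) γ + Ω (B α γ) β - Ω (B β γ) α

def extBracket (B : L →ₗ[R] L →ₗ[R] L) (σ : L →ₗ[R] Module.End R M)
    (Ω : L →ₗ[R] L →ₗ[R] M) : M × L →ₗ[R] M × L →ₗ[R] M × L :=
  let act : M × L →ₗ[R] M × L →ₗ[R] M := σ.compl₁₂ (snd R M L) (fst R M L)
  (act - act.flip + Ω.compl₁₂ (snd R M L) (snd R M L)).compr₂ (inl R M L) +
    (B.compl₁₂ (snd R M L) (snd R M L)).compr₂ (inr R M L)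

@[simp]
theorem extBracket_apply (B : L →ₗ[R] L →ₗ[R] L) (σ : L →ₗ[R] Module.End R M)
    (Ω : L →ₗ[R] L →ₗ[R] M) (p q : M × L) :
    extBracket B σ Ω p q = (σ p.2 q.1 - σ q.2 p.1 + Ω p.2 q.2, B p.2 q.2) := by
  ext <;> simp [extBracket]

variable {B : L →ₗ[R] L →ₗ[R] L} {σ : L →ₗ[R] Module.End R M} {Ω : L →ₗ[R] L →ₗ[R] M}

theorem extBracket_self (hB : B.IsAlt) (hΩ : Ω.IsAlt) (p : M × L) :
    extBracket B σ Ω p p = 0 := by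
  simp [hB.self_eq_zero, hΩ.self_eq_zero]

theorem cochainD₂_eq_cyclic_sum (hB : B.IsAlt) (hΩ : Ω.IsAlt) (α β γ : L) :
    cochainD₂ B σ Ω α β γ =
      σ α (Ω β γ) + Ω α (B β γ) + (σ β (Ω γ α) + Ω β (B γ α)) +
        (σ γ (Ω α β) + Ω γ (B α β)) := by
  rw [cochainD₂, ← hΩ.neg γ α, ← hΩ.neg (B β γ) α, ← hB.neg α γ, map_neg (Ω β),
    ← hΩ.neg (B α γ) β, ← hΩ.neg (B α β) γ, map_neg]
  abel

theorem extBracket_jacobi (hB : B.IsAlt) (hΩ : Ω.IsAlt)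
    (hσ : ∀ α β m, σ (B α β) m = σ α (σ β m) - σ β (σ α m)) (p q r : M × L) :
    extBracket B σ Ω p (extBracket B σ Ω q r) + extBracket B σ Ω q (extBracket B σ Ω r p) +
        extBracket B σ Ω r (extBracket B σ Ω p q) =
      (cochainD₂ B σ Ω p.2 q.2 r.2,
        B p.2 (B q.2 r.2) + B q.2 (B r.2 p.2) + B r.2 (B p.2 q.2)) := by
  obtain ⟨⟨x, α⟩, ⟨y, β⟩, ⟨z, γ⟩⟩ := (p, q, r)
  simp only [extBracket_apply, map_add, map_sub, hσ, Prod.mk_add_mk,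
    cochainD₂_eq_cyclic_sum hB hΩ, Prod.mk.injEq, and_true]
  abel

end ExtensionBracket

theorem extension_bracket_jacobi_iff_two_cocycle_general
    (R A L M : Type*) [CommRing R] [CommRing A] [Algebra R A]
    [AddCommGroup L] [Module R L] [Module A L] [IsScalarTower R A L]
    [AddCommGroup M] [Module R M] [Module A M] [IsScalarTower R A M]
    (B : L →ₗ[R] L →ₗ[R] L)
    (halt : ∀ α, B α α = 0)
    (hjac : ∀ α β γ, B α (B β γ) + B β (B γ α) + B γ (B α β) = 0)
    (σ : L →ₗ[R] Module.End R M)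
    (hσflat : ∀ (α β : L) (m : M), σ (B α β) m = σ α (σ β m) - σ β (σ α m))
    (Ω : L →ₗ[A] L →ₗ[A] M)
    (hΩalt : ∀ α, Ω α α = 0)
    (Br : M × L → M × L → M × L)
    (hBr : ∀ (x : M) (α : L) (y : M) (β : L),
      Br (x, α) (y, β) = (σ α y - σ β x + Ω α β, B α β)) :
    (∀ p q q' : M × L, Br (p + q) q' = Br p q' + Br q q') ∧
    (∀ p q q' : M × L, Br p (q + q') = Br p q + Br p q') ∧
    (∀ (r : R) (p q : M × L), Br (r • p) q = r • Br p q) ∧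
    (∀ (r : R) (p q : M × L), Br p (r • q) = r • Br p q) ∧
    (∀ p : M × L, Br p p = 0) ∧
    ((∀ p q r' : M × L, Br p (Br q r') + Br q (Br r' p) + Br r' (Br p q) = 0) ↔
      (∀ α β γ : L,
        σ α (Ω β γ) - σ β (Ω α γ) + σ γ (Ω α β)
          - Ω (B α β) γ + Ω (B α γ) β - Ω (B β γ) α = 0)) := by
  have hΩalt' : (Ω.restrictScalars₁₂ R R).IsAlt := hΩalt
  obtain rfl : Br = fun p q ↦ extBracket B σ (Ω.restrictScalars₁₂ R R) p q := by
    funext ⟨x, α⟩ ⟨y, β⟩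
    rw [hBr, extBracket_apply]
    rfl
  refine ⟨LinearMap.map_add₂ _, fun p ↦ map_add _, LinearMap.map_smul₂ _,
    fun r p ↦ map_smul _ r, extBracket_self halt hΩalt', ?_⟩
  simp only [extBracket_jacobi halt hΩalt' hσflat, Prod.mk_eq_zero]
  exact ⟨fun h α β γ ↦ (h (0, α) (0, β) (0, γ)).1, fun hd p q r ↦ ⟨hd _ _ _, hjac _ _ _⟩⟩

/-- **The correspondence between 2-cocycles and extensions (Theorem 2.6).**
Let `(L, B, ρ)` be an `(R,A)`-Lie algebra, `M` an `A`-module with a flat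
`L`-action `σ`, and `Ω : L × L → M` an `A`-bilinear alternating map.  Endow
`M × L` with the bracket
`Br (x,α) (y,β) = (σ α y − σ β x + Ω α β, B α β)`.  This bracket is `R`-bilinear
and alternating, and it satisfies the Jacobi identity (making `M × L` a Lie
algebra over `R`, an extension of `L` by the abelian Lie algebra `M` split as
`A`-modules) if and only if `Ω` is a 2-cocycle. -/
theorem extension_bracket_jacobi_iff_two_cocycle
    (R A L M : Type*) [CommRing R] [CommRing A] [Algebra R A]
    [AddCommGroup L] [Module R L] [Module A L] [IsScalarTower R A L]
    [AddCommGroup M] [Module R M] [Module A M] [IsScalarTower R A M]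
    (B : L →ₗ[R] L →ₗ[R] L)
    (ρ : L →ₗ[A] Derivation R A A)
    (halt : ∀ α, B α α = 0)
    (hjac : ∀ α β γ, B α (B β γ) + B β (B γ α) + B γ (B α β) = 0)
    (hanch : ∀ (α β : L) (a : A), ρ (B α β) a = ρ α (ρ β a) - ρ β (ρ α a))
    (hleib : ∀ (α β : L) (a : A), B α (a • β) = a • B α β + (ρ α a) • β)
    (σ : L →ₗ[R] Module.End R M)
    (hσ1 : ∀ (a : A) (α : L) (m : M), σ (a • α) m = a • σ α m)
    (hσ2 : ∀ (α : L) (a : A) (m : M), σ α (a • m) = a • σ α m + (ρ α a) • m)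
    (hσflat : ∀ (α β : L) (m : M), σ (B α β) m = σ α (σ β m) - σ β (σ α m))
    (Ω : L →ₗ[A] L →ₗ[A] M)
    (hΩalt : ∀ α, Ω α α = 0)
    (Br : M × L → M × L → M × L)
    (hBr : ∀ (x : M) (α : L) (y : M) (β : L),
      Br (x, α) (y, β) = (σ α y - σ β x + Ω α β, B α β)) :
    (∀ p q q' : M × L, Br (p + q) q' = Br p q' + Br q q') ∧
    (∀ p q q' : M × L, Br p (q + q') = Br p q + Br p q') ∧
    (∀ (r : R) (p q : M × L), Br (r • p) q = r • Br p q) ∧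
    (∀ (r : R) (p q : M × L), Br p (r • q) = r • Br p q) ∧
    (∀ p : M × L, Br p p = 0) ∧
    ((∀ p q r' : M × L, Br p (Br q r') + Br q (Br r' p) + Br r' (Br p q) = 0) ↔
      (∀ α β γ : L,
        σ α (Ω β γ) - σ β (Ω α γ) + σ γ (Ω α β)
          - Ω (B α β) γ + Ω (B α γ) β - Ω (B β γ) α = 0)) :=
  extension_bracket_jacobi_iff_two_cocycle_general R A L M B halt hjac σ hσflat Ω hΩalt Br hBr
end

section
/- Let R be a commutative ring, A a commutative R-algebra, {·,·} a Poisson structure on A, π the Poisson 2-form and [·,·] the Poisson–Rinehart bracket on Ω := Ω[A⁄R]. Endow L̄ := A × Ω with the bracket ⟦(a,α),(b,β)⟧ := (π(α, D b) − π(β, D a) − π(α,β), [α,β]). Then ⟦·,·⟧ is R-bilinear, alternating, and satisfies the Jacobi identity, making L̄ a Lie algebra over R; the map ι : A → L̄, ι(a) = (a, D a), is a morphism of Lie algebras over R from (A,{·,·}) to L̄, i.e. ⟦ι(a), ι(b)⟧ = ι({a,b}) for all a,b ∈ A; and ι satisfies ι(ab) = a•ι(b) + b•ι(a) − (ab, 0),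 where A acts on L̄ = A × Ω componentwise. (Proposition 4.2.) -/
/-!
The cyclic sum `Σ_cyc π(α, [β, γ] + D π(β, γ))` is `A`-linear in each argument although `[·,·]`
is only `R`-bilinear: the anchor terms produced by the Leibniz rules of `[·,·]` and of `D` cancel.
As exact forms span `Ω[A⁄R]`, it vanishes identically, since on `Du, Dv, Dw` it is twice the
Jacobiator of `{·,·}`. This sum is exactly what remains of the first component of the Jacobiator
of `⟦·,·⟧` once the anchor identity `π([α, β], Dc) = π(α, D π(β, Dc)) − π(β, D π(α, Dc))` is
applied; the second component is the Jacobiator of `[·,·]`.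
-/

open KaehlerDifferential

namespace PoissonRinehart

variable {R A : Type*} [CommRing R] [CommRing A] [Algebra R A]
  {P : A →ₗ[R] A →ₗ[R] A} {π : Ω[A⁄R] →ₗ[A] Ω[A⁄R] →ₗ[A] A}
  {B : Ω[A⁄R] →ₗ[R] Ω[A⁄R] →ₗ[R] Ω[A⁄R]}

theorem bracket_D_D (hπD : ∀ u v : A, π (D R A u) (D R A v) = P u v)
    (hB : ∀ a b u v : A, B (a • D R A u) (b • D R A v)
      = (a * P u b) • D R A v + (b * P a v) • D R A u + (a * b) • D R A (P u v))
    (u v : A) : B (D R A u) (D R A v) = D R A (P u v) := by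
  have hP_one : ∀ w : A, P w 1 = 0 ∧ P 1 w = 0 := fun w => by
    simp only [← hπD, (D R A).map_one_eq_zero, map_zero, LinearMap.zero_apply, and_self]
  simpa [(hP_one u).1, (hP_one v).2] using hB 1 1 u v

theorem bracket_smul_left (hBalt : B.IsAlt)
    (hBleib : ∀ (α : Ω[A⁄R]) (a : A) (β : Ω[A⁄R]), B α (a • β) = a • B α β + π α (D R A a) • β)
    (a : A) (α β : Ω[A⁄R]) : B (a • α) β = a • B α β - π β (D R A a) • α := by
  rw [← hBalt.neg, hBleib, ← hBalt.neg]
  module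

variable (π B) in
noncomputable def cyclicDefect (α β γ : Ω[A⁄R]) : A :=
  π α (B β γ + D R A (π β γ)) + π β (B γ α + D R A (π γ α)) + π γ (B α β + D R A (π α β))

theorem cyclicDefect_rotate (α β γ : Ω[A⁄R]) :
    cyclicDefect π B α β γ = cyclicDefect π B β γ α := by
  unfold cyclicDefect
  abel

theorem cyclicDefect_add_left (α α' β γ : Ω[A⁄R]) :
    cyclicDefect π B (α + α') β γ = cyclicDefect π B α β γ + cyclicDefect π B α' β γ := by
  simp only [cyclicDefect, map_add, LinearMap.add_apply]
  abel

theorem cyclicDefect_smul_left (hπalt : π.IsAlt) (hBalt : B.IsAlt)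
    (hBleib : ∀ (α : Ω[A⁄R]) (a : A) (β : Ω[A⁄R]), B α (a • β) = a • B α β + π α (D R A a) • β)
    (a : A) (α β γ : Ω[A⁄R]) :
    cyclicDefect π B (a • α) β γ = a * cyclicDefect π B α β γ := by
  simp only [cyclicDefect, bracket_smul_left hBalt hBleib, hBleib, map_smul, map_sub, map_add,
    LinearMap.smul_apply, smul_eq_mul, Derivation.leibniz]
  linear_combination π γ (D R A a) * (hπalt.neg α β).symm

theorem cyclicDefect_eq_zero_of_forall_D (hπalt : π.IsAlt) (hBalt : B.IsAlt)
    (hBleib : ∀ (α : Ω[A⁄R]) (a : A) (β : Ω[A⁄R]), B α (a • β) = a • B α β + π α (D R A a) • β)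
    {β γ : Ω[A⁄R]} (h : ∀ u : A, cyclicDefect π B (D R A u) β γ = 0) (α : Ω[A⁄R]) :
    cyclicDefect π B α β γ = 0 := by
  let f : Ω[A⁄R] →ₗ[A] A :=
    { toFun := fun α => cyclicDefect π B α β γ
      map_add' := fun α α' => cyclicDefect_add_left α α' β γ
      map_smul' := fun a α => cyclicDefect_smul_left hπalt hBalt hBleib a α β γ }
  have hf : f = 0 := Derivation.liftKaehlerDifferential_unique _ _ (Derivation.ext h)
  exact LinearMap.congr_fun hf α

theorem cyclicDefect_D_D_D (hPjac : ∀ a b c : A, P a (P b c) + P b (P c a) + P c (P a b) = 0)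
    (hπD : ∀ u v : A, π (D R A u) (D R A v) = P u v)
    (hBD : ∀ u v : A, B (D R A u) (D R A v) = D R A (P u v))
    (u v w : A) : cyclicDefect π B (D R A u) (D R A v) (D R A w) = 0 := by
  simp only [cyclicDefect, hBD, map_add, hπD]
  linear_combination 2 * hPjac u v w

theorem cyclicDefect_eq_zero (hPjac : ∀ a b c : A, P a (P b c) + P b (P c a) + P c (P a b) = 0)
    (hπalt : π.IsAlt) (hπD : ∀ u v : A, π (D R A u) (D R A v) = P u v)
    (hBD : ∀ u v : A, B (D R A u) (D R A v) = D R A (P u v))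
    (hBalt : B.IsAlt)
    (hBleib : ∀ (α : Ω[A⁄R]) (a : A) (β : Ω[A⁄R]), B α (a • β) = a • B α β + π α (D R A a) • β)
    (α β γ : Ω[A⁄R]) : cyclicDefect π B α β γ = 0 := by
  refine cyclicDefect_eq_zero_of_forall_D hπalt hBalt hBleib (fun u => ?_) α
  rw [cyclicDefect_rotate]
  refine cyclicDefect_eq_zero_of_forall_D hπalt hBalt hBleib (fun v => ?_) β
  rw [cyclicDefect_rotate]
  refine cyclicDefect_eq_zero_of_forall_D hπalt hBalt hBleib (fun w => ?_) γ
  exact cyclicDefect_D_D_D hPjac hπD hBD w u v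

variable (π B) in
noncomputable def prequantBracket (p q : A × Ω[A⁄R]) : A × Ω[A⁄R] :=
  (π p.2 (D R A q.1) - π q.2 (D R A p.1) - π p.2 q.2, B p.2 q.2)

theorem prequantBracket_add_left (p q q' : A × Ω[A⁄R]) :
    prequantBracket π B (p + q) q' = prequantBracket π B p q' + prequantBracket π B q q' := by
  simp only [prequantBracket, Prod.fst_add, Prod.snd_add, map_add, LinearMap.add_apply,
    Prod.mk_add_mk, Prod.mk.injEq, and_true]
  ring

theorem prequantBracket_add_right (p q q' : A × Ω[A⁄R]) :
    prequantBracket π B p (q + q') = prequantBracket π B p q + prequantBracket π B p q' := by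
  simp only [prequantBracket, Prod.fst_add, Prod.snd_add, map_add, LinearMap.add_apply,
    Prod.mk_add_mk, Prod.mk.injEq, and_true]
  ring

theorem prequantBracket_smul_left (r : R) (p q : A × Ω[A⁄R]) :
    prequantBracket π B (r • p) q = r • prequantBracket π B p q := by
  simp only [prequantBracket, Prod.smul_fst, Prod.smul_snd, Derivation.map_smul,
    LinearMap.map_smul_of_tower, LinearMap.smul_apply, Prod.smul_mk, Prod.mk.injEq, and_true]
  module

theorem prequantBracket_smul_right (r : R) (p q : A × Ω[A⁄R]) :
    prequantBracket π B p (r • q) = r • prequantBracket π B p q := by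
  simp only [prequantBracket, Prod.smul_fst, Prod.smul_snd, Derivation.map_smul,
    LinearMap.map_smul_of_tower, LinearMap.smul_apply, Prod.smul_mk, Prod.mk.injEq, and_true]
  module

theorem prequantBracket_self (hπalt : π.IsAlt) (hBalt : B.IsAlt) (p : A × Ω[A⁄R]) :
    prequantBracket π B p p = 0 := by
  simp [prequantBracket, hπalt.self_eq_zero, hBalt.self_eq_zero]

theorem prequantBracket_jacobi (hPjac : ∀ a b c : A, P a (P b c) + P b (P c a) + P c (P a b) = 0)
    (hπalt : π.IsAlt) (hπD : ∀ u v : A, π (D R A u) (D R A v) = P u v)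
    (hBD : ∀ u v : A, B (D R A u) (D R A v) = D R A (P u v))
    (hBalt : B.IsAlt)
    (hBjac : ∀ α β γ, B α (B β γ) + B β (B γ α) + B γ (B α β) = 0)
    (hBleib : ∀ (α : Ω[A⁄R]) (a : A) (β : Ω[A⁄R]), B α (a • β) = a • B α β + π α (D R A a) • β)
    (hanch : ∀ (α β : Ω[A⁄R]) (c : A),
      π (B α β) (D R A c) = π α (D R A (π β (D R A c))) - π β (D R A (π α (D R A c))))
    (p q s : A × Ω[A⁄R]) :
    prequantBracket π B p (prequantBracket π B q s) + prequantBracket π B q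
      (prequantBracket π B s p) + prequantBracket π B s (prequantBracket π B p q) = 0 := by
  obtain ⟨a, α⟩ := p
  obtain ⟨b, β⟩ := q
  obtain ⟨c, γ⟩ := s
  simp only [prequantBracket, Prod.mk_add_mk, Prod.mk_eq_zero, map_sub]
  refine ⟨?_, hBjac α β γ⟩
  have hdefect := cyclicDefect_eq_zero hPjac hπalt hπD hBD hBalt hBleib α β γ
  simp only [cyclicDefect, map_add] at hdefect
  linear_combination -hanch β γ a - hanch γ α b - hanch α β c - hdefect

theorem prequantBracket_D_D (hπalt : π.IsAlt) (hπD : ∀ u v : A, π (D R A u) (D R A v) = P u v)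
    (hBD : ∀ u v : A, B (D R A u) (D R A v) = D R A (P u v))
    (a b : A) :
    prequantBracket π B (a, D R A a) (b, D R A b) = (P a b, D R A (P a b)) := by
  simp only [prequantBracket, hBD, ← hπalt.neg (D R A a), sub_neg_eq_add,
    add_sub_cancel_right, hπD]

theorem mk_mul_D_mul (a b : A) :
    ((a * b, D R A (a * b)) : A × Ω[A⁄R])
      = a • (b, D R A b) + b • (a, D R A a) - (a * b, 0) := by
  simp only [Prod.smul_mk, Prod.mk_add_mk, Prod.mk_sub_mk, smul_eq_mul, Derivation.leibniz,
    sub_zero, Prod.mk.injEq, and_true]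
  ring

end PoissonRinehart

theorem prequantization_extension_proposition_general
    (R A : Type*) [CommRing R] [CommRing A] [Algebra R A]
    (P : A →ₗ[R] A →ₗ[R] A)
    (hPjac : ∀ a b c : A, P a (P b c) + P b (P c a) + P c (P a b) = 0)
    (π : KaehlerDifferential R A →ₗ[A] KaehlerDifferential R A →ₗ[A] A)
    (hπalt : ∀ α, π α α = 0)
    (hπD : ∀ u v : A,
      π (KaehlerDifferential.D R A u) (KaehlerDifferential.D R A v) = P u v)
    (B : KaehlerDifferential R A →ₗ[R] KaehlerDifferential R A →ₗ[R]
        KaehlerDifferential R A)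
    (hB : ∀ a b u v : A,
      B (a • KaehlerDifferential.D R A u) (b • KaehlerDifferential.D R A v)
        = (a * P u b) • KaehlerDifferential.D R A v
          + (b * P a v) • KaehlerDifferential.D R A u
          + (a * b) • KaehlerDifferential.D R A (P u v))
    (hBalt : ∀ α, B α α = 0)
    (hBjac : ∀ α β γ, B α (B β γ) + B β (B γ α) + B γ (B α β) = 0)
    (hBleib : ∀ (α : KaehlerDifferential R A) (a : A)
        (β : KaehlerDifferential R A),
      B α (a • β) = a • B α β + (π α (KaehlerDifferential.D R A a)) • β)
    (hanch : ∀ (α β : KaehlerDifferential R A) (c : A),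
      π (B α β) (KaehlerDifferential.D R A c)
        = π α (KaehlerDifferential.D R A (π β (KaehlerDifferential.D R A c)))
          - π β (KaehlerDifferential.D R A
              (π α (KaehlerDifferential.D R A c))))
    (Br : A × KaehlerDifferential R A → A × KaehlerDifferential R A →
        A × KaehlerDifferential R A)
    (hBr : ∀ (a : A) (α : KaehlerDifferential R A) (b : A)
        (β : KaehlerDifferential R A),
      Br (a, α) (b, β)
        = (π α (KaehlerDifferential.D R A b)
            - π β (KaehlerDifferential.D R A a) - π α β, B α β)) :
    (∀ p q q' : A × KaehlerDifferential R A,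
      Br (p + q) q' = Br p q' + Br q q') ∧
    (∀ p q q' : A × KaehlerDifferential R A,
      Br p (q + q') = Br p q + Br p q') ∧
    (∀ (r : R) (p q : A × KaehlerDifferential R A), Br (r • p) q = r • Br p q) ∧
    (∀ (r : R) (p q : A × KaehlerDifferential R A), Br p (r • q) = r • Br p q) ∧
    (∀ p : A × KaehlerDifferential R A, Br p p = 0) ∧
    (∀ p q r' : A × KaehlerDifferential R A,
      Br p (Br q r') + Br q (Br r' p) + Br r' (Br p q) = 0) ∧
    (∀ a b : A,
      Br (a, KaehlerDifferential.D R A a) (b, KaehlerDifferential.D R A b)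
        = (P a b, KaehlerDifferential.D R A (P a b))) ∧
    (∀ a b : A,
      ((a * b, KaehlerDifferential.D R A (a * b)) :
          A × KaehlerDifferential R A)
        = a • ((b, KaehlerDifferential.D R A b) : A × KaehlerDifferential R A)
          + b • ((a, KaehlerDifferential.D R A a) : A × KaehlerDifferential R A)
          - (a * b, 0)) := by
  open PoissonRinehart in
  have hBD := bracket_D_D hπD hB
  obtain rfl : Br = prequantBracket π B := funext₂ fun p q => hBr p.1 p.2 q.1 q.2
  exact ⟨prequantBracket_add_left, prequantBracket_add_right, prequantBracket_smul_left,
    prequantBracket_smul_right, prequantBracket_self hπalt hBalt,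
    prequantBracket_jacobi hPjac hπalt hπD hBD hBalt hBjac hBleib hanch,
    prequantBracket_D_D hπalt hπD hBD, mk_mul_D_mul⟩

/-- **Proposition 4.2.**
Let `(A, P)` be a Poisson algebra over `R`, with Poisson 2-form `π` and
Poisson–Rinehart bracket `B` on `Ω := Ω[A⁄R]`.  Endow `L̄ := A × Ω` with the
bracket `Br (a,α) (b,β) = (π α (D b) − π β (D a) − π α β, B α β)`.  Then `Br`
is `R`-bilinear, alternating and satisfies the Jacobi identity, making `L̄` a
Lie algebra over `R`; the map `ι a = (a, D a)` is a morphism of Lie algebras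
over `R` from `(A, P)` to `L̄`; and `ι (a b) = a • ι b + b • ι a − (a b, 0)`. -/
theorem prequantization_extension_proposition
    (R A : Type*) [CommRing R] [CommRing A] [Algebra R A]
    (P : A →ₗ[R] A →ₗ[R] A)
    (hPalt : ∀ a : A, P a a = 0)
    (hPjac : ∀ a b c : A, P a (P b c) + P b (P c a) + P c (P a b) = 0)
    (hPleib : ∀ a b c : A, P (a * b) c = a * P b c + P a c * b)
    (π : KaehlerDifferential R A →ₗ[A] KaehlerDifferential R A →ₗ[A] A)
    (hπalt : ∀ α, π α α = 0)
    (hπD : ∀ u v : A,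
      π (KaehlerDifferential.D R A u) (KaehlerDifferential.D R A v) = P u v)
    (B : KaehlerDifferential R A →ₗ[R] KaehlerDifferential R A →ₗ[R]
        KaehlerDifferential R A)
    (hB : ∀ a b u v : A,
      B (a • KaehlerDifferential.D R A u) (b • KaehlerDifferential.D R A v)
        = (a * P u b) • KaehlerDifferential.D R A v
          + (b * P a v) • KaehlerDifferential.D R A u
          + (a * b) • KaehlerDifferential.D R A (P u v))
    (hBalt : ∀ α, B α α = 0)
    (hBjac : ∀ α β γ, B α (B β γ) + B β (B γ α) + B γ (B α β) = 0)
    (hBleib : ∀ (α : KaehlerDifferential R A) (a : A)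
        (β : KaehlerDifferential R A),
      B α (a • β) = a • B α β + (π α (KaehlerDifferential.D R A a)) • β)
    (hanch : ∀ (α β : KaehlerDifferential R A) (c : A),
      π (B α β) (KaehlerDifferential.D R A c)
        = π α (KaehlerDifferential.D R A (π β (KaehlerDifferential.D R A c)))
          - π β (KaehlerDifferential.D R A
              (π α (KaehlerDifferential.D R A c))))
    (Br : A × KaehlerDifferential R A → A × KaehlerDifferential R A →
        A × KaehlerDifferential R A)
    (hBr : ∀ (a : A) (α : KaehlerDifferential R A) (b : A)
        (β : KaehlerDifferential R A),
      Br (a, α) (b, β)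
        = (π α (KaehlerDifferential.D R A b)
            - π β (KaehlerDifferential.D R A a) - π α β, B α β)) :
    (∀ p q q' : A × KaehlerDifferential R A,
      Br (p + q) q' = Br p q' + Br q q') ∧
    (∀ p q q' : A × KaehlerDifferential R A,
      Br p (q + q') = Br p q + Br p q') ∧
    (∀ (r : R) (p q : A × KaehlerDifferential R A), Br (r • p) q = r • Br p q) ∧
    (∀ (r : R) (p q : A × KaehlerDifferential R A), Br p (r • q) = r • Br p q) ∧
    (∀ p : A × KaehlerDifferential R A, Br p p = 0) ∧
    (∀ p q r' : A × KaehlerDifferential R A,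
      Br p (Br q r') + Br q (Br r' p) + Br r' (Br p q) = 0) ∧
    (∀ a b : A,
      Br (a, KaehlerDifferential.D R A a) (b, KaehlerDifferential.D R A b)
        = (P a b, KaehlerDifferential.D R A (P a b))) ∧
    (∀ a b : A,
      ((a * b, KaehlerDifferential.D R A (a * b)) :
          A × KaehlerDifferential R A)
        = a • ((b, KaehlerDifferential.D R A b) : A × KaehlerDifferential R A)
          + b • ((a, KaehlerDifferential.D R A a) : A × KaehlerDifferential R A)
          - (a * b, 0)) :=
  prequantization_extension_proposition_general R A P hPjac π hπalt hπD B hB hBalt hBjac hBleib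
    hanch Br hBr
end

section
/- Let R be a commutative ring, A a commutative R-algebra, {·,·} a Poisson structure on A, π the Poisson 2-form and [·,·] the Poisson–Rinehart bracket on Ω := Ω[A⁄R]. Let M be an A-module and ∇ : Ω → End_R(M) an R-linear map satisfying ∇(a•α)(m) = a•(∇(α)(m)), ∇(α)(a•m) = a•(∇(α)(m)) + π(α, D a)•m, and having curvature −π: ∇(α)∘∇(β) − ∇(β)∘∇(α) − ∇([α,β]) = (scalar multiplication by −π(α,β)) for all α,β ∈ Ω, a ∈ A, m ∈ M. Define ρ : A → End_R(M) by ρ(a)(m) := ∇(D a)(m) + a•m. Then ρ is a representation of the Lie algebra (A,{·,·}) under which the elements of R act as scalars: ρ({a,b}) = ρ(a)∘ρ(b) − ρ(b)∘ρ(a) for all a,b ∈ A, and ρ(algebraMap R A r) = r•id_M for all r ∈ R. If moreover M is a faithful A-module and π is non-degenerate in the sense that the only α ∈ Ω with π(α, D c) = 0 for all c ∈ A is α = 0, then ρ is injective. (Theorem 4.3.) -/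
/-!
On exact forms the Poisson–Rinehart bracket is `[D a, D b] = D {a, b}` (take `a = b = 1` in its
defining formula; `{u, 1} = π (D u) (D 1) = 0`), so the curvature identity reads
`[∇(D a), ∇(D b)] = ∇(D {a, b}) - {a, b}`. The Leibniz rule of `∇` in the module variable
contributes `{a, b} - {b, a} = 2 {a, b}` to `[ρ a, ρ b]`, which turns this into
`[ρ a, ρ b] = ρ {a, b}`.

For faithfulness, `ρ a = ρ b` says that `∇(D c)` is multiplication by `-c` for `c = a - b`, hence
`A`-linear, so the Leibniz rule forces `π (D c) (D x) = 0` for all `x`; non-degeneracy gives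
`D c = 0`, so `c` acts by `0` on `M` and `c = 0`.
-/

open KaehlerDifferential

section PoissonRinehart

variable {R A : Type*} [CommRing R] [CommRing A] [Algebra R A]
  {P : A →ₗ[R] A →ₗ[R] A} {π : Ω[A⁄R] →ₗ[A] Ω[A⁄R] →ₗ[A] A}

theorem poisson_one_left (hπD : ∀ u v, π (D R A u) (D R A v) = P u v) (v : A) : P 1 v = 0 := by
  rw [← hπD, Derivation.map_one_eq_zero, map_zero, LinearMap.zero_apply]

theorem poisson_one_right (hπD : ∀ u v, π (D R A u) (D R A v) = P u v) (u : A) : P u 1 = 0 := by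
  rw [← hπD, Derivation.map_one_eq_zero, map_zero]

theorem rinehart_D_D (hπD : ∀ u v, π (D R A u) (D R A v) = P u v)
    {B : Ω[A⁄R] →ₗ[R] Ω[A⁄R] →ₗ[R] Ω[A⁄R]}
    (hB : ∀ a b u v : A, B (a • D R A u) (b • D R A v)
      = (a * P u b) • D R A v + (b * P a v) • D R A u + (a * b) • D R A (P u v))
    (u v : A) : B (D R A u) (D R A v) = D R A (P u v) := by
  simpa [poisson_one_left hπD, poisson_one_right hπD] using hB 1 1 u v

end PoissonRinehart

section Connection

variable {R A M : Type*} [CommRing R] [CommRing A] [Algebra R A]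
  [AddCommGroup M] [Module R M] [Module A M]
  {P : A →ₗ[R] A →ₗ[R] A} {π : Ω[A⁄R] →ₗ[A] Ω[A⁄R] →ₗ[A] A}
  {conn : Ω[A⁄R] →ₗ[R] Module.End R M}
  (hconn : ∀ (α : Ω[A⁄R]) (a : A) (m : M), conn α (a • m) = a • conn α m + π α (D R A a) • m)
include hconn

theorem pi_D_eq_zero_of_conn_eq_smul [FaithfulSMul A M] {α : Ω[A⁄R]} {c : A}
    (hα : ∀ m, conn α m = c • m) (x : A) : π α (D R A x) = 0 := by
  refine eq_of_smul_eq_smul (α := M) fun m => ?_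
  have hLeibniz := hconn α x m
  rw [hα, hα, smul_comm c x m] at hLeibniz
  rw [zero_smul]
  linear_combination (norm := module) -hLeibniz

theorem poissonRep_bracket (hPalt : P.IsAlt) (hπD : ∀ u v, π (D R A u) (D R A v) = P u v)
    {B : Ω[A⁄R] →ₗ[R] Ω[A⁄R] →ₗ[R] Ω[A⁄R]} (hBD : ∀ u v, B (D R A u) (D R A v) = D R A (P u v))
    (hcurv : ∀ α β (m : M), conn α (conn β m) - conn β (conn α m) - conn (B α β) m = -π α β • m)
    {T : A → M → M} (hT : ∀ a m, T a m = conn (D R A a) m + a • m) (a b : A) (m : M) :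
    T (P a b) m = T a (T b m) - T b (T a m) := by
  have hcurvD := hcurv (D R A a) (D R A b) m
  rw [hBD, hπD] at hcurvD
  simp only [hT, map_add, hconn, hπD, ← hPalt.neg a b]
  linear_combination (norm := module) -hcurvD

theorem poissonRep_injective [FaithfulSMul A M]
    (hnd : ∀ α : Ω[A⁄R], (∀ c : A, π α (D R A c) = 0) → α = 0)
    {T : A → M → M} (hT : ∀ a m, T a m = conn (D R A a) m + a • m) {a b : A}
    (hab : ∀ m, T a m = T b m) : a = b := by
  have hconn_sub : ∀ m, conn (D R A (a - b)) m = -(a - b) • m := fun m => by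
    have h := hab m
    rw [hT, hT] at h
    rw [map_sub, map_sub, LinearMap.sub_apply]
    linear_combination (norm := module) h
  have hD_sub : D R A (a - b) = 0 := hnd _ (pi_D_eq_zero_of_conn_eq_smul hconn hconn_sub)
  refine sub_eq_zero.mp (eq_of_smul_eq_smul (α := M) fun m => ?_)
  have h := hconn_sub m
  rw [hD_sub, map_zero, LinearMap.zero_apply] at h
  rw [zero_smul]
  linear_combination (norm := module) h

end Connection

theorem representable_poisson_representation_general
    (R A M : Type*) [CommRing R] [CommRing A] [Algebra R A]
    [AddCommGroup M] [Module R M] [Module A M] [IsScalarTower R A M]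
    (P : A →ₗ[R] A →ₗ[R] A)
    (hPalt : ∀ a : A, P a a = 0)
    (π : KaehlerDifferential R A →ₗ[A] KaehlerDifferential R A →ₗ[A] A)
    (hπD : ∀ u v : A,
      π (KaehlerDifferential.D R A u) (KaehlerDifferential.D R A v) = P u v)
    (B : KaehlerDifferential R A →ₗ[R] KaehlerDifferential R A →ₗ[R]
        KaehlerDifferential R A)
    (hB : ∀ a b u v : A,
      B (a • KaehlerDifferential.D R A u) (b • KaehlerDifferential.D R A v)
        = (a * P u b) • KaehlerDifferential.D R A v
          + (b * P a v) • KaehlerDifferential.D R A u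
          + (a * b) • KaehlerDifferential.D R A (P u v))
    (conn : KaehlerDifferential R A →ₗ[R] Module.End R M)
    (hconn2 : ∀ (α : KaehlerDifferential R A) (a : A) (m : M),
      conn α (a • m) = a • conn α m + (π α (KaehlerDifferential.D R A a)) • m)
    (hcurv : ∀ (α β : KaehlerDifferential R A) (m : M),
      conn α (conn β m) - conn β (conn α m) - conn (B α β) m = (-(π α β)) • m)
    (T : A → M → M)
    (hT : ∀ (a : A) (m : M), T a m = conn (KaehlerDifferential.D R A a) m + a • m) :
    (∀ (a b : A) (m : M), T (P a b) m = T a (T b m) - T b (T a m)) ∧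
    (∀ (r : R) (m : M), T (algebraMap R A r) m = r • m) ∧
    ((∀ a b : A, (∀ m : M, a • m = b • m) → a = b) →
      (∀ α : KaehlerDifferential R A,
        (∀ c : A, π α (KaehlerDifferential.D R A c) = 0) → α = 0) →
      ∀ a b : A, (∀ m : M, T a m = T b m) → a = b) := by
  refine ⟨poissonRep_bracket hconn2 hPalt hπD (rinehart_D_D hπD hB) hcurv hT, ?_, ?_⟩
  · intro r m
    rw [hT, Derivation.map_algebraMap, map_zero, LinearMap.zero_apply, zero_add, algebraMap_smul]
  · intro hfaith hnd a b
    have : FaithfulSMul A M := ⟨hfaith _ _⟩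
    exact poissonRep_injective hconn2 hnd hT

/-- **Theorem 4.3.**
Let `(A, P)` be a representable Poisson algebra: `M` is an `A`-module and `conn`
is a connection on `M` along the Poisson–Rinehart `(R,A)`-Lie algebra of Kähler
differentials with curvature `−π`.  Then `T a m := conn (D a) m + a • m` defines a
representation of the Lie algebra `(A, P)` on `M` under which the elements of
`R` act as scalars; moreover if `M` is faithful and `π` is non-degenerate then
the representation is faithful. -/
theorem representable_poisson_representation
    (R A M : Type*) [CommRing R] [CommRing A] [Algebra R A]
    [AddCommGroup M] [Module R M] [Module A M] [IsScalarTower R A M]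
    (P : A →ₗ[R] A →ₗ[R] A)
    (hPalt : ∀ a : A, P a a = 0)
    (hPjac : ∀ a b c : A, P a (P b c) + P b (P c a) + P c (P a b) = 0)
    (hPleib : ∀ a b c : A, P (a * b) c = a * P b c + P a c * b)
    (π : KaehlerDifferential R A →ₗ[A] KaehlerDifferential R A →ₗ[A] A)
    (hπalt : ∀ α, π α α = 0)
    (hπD : ∀ u v : A,
      π (KaehlerDifferential.D R A u) (KaehlerDifferential.D R A v) = P u v)
    (B : KaehlerDifferential R A →ₗ[R] KaehlerDifferential R A →ₗ[R]
        KaehlerDifferential R A)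
    (hB : ∀ a b u v : A,
      B (a • KaehlerDifferential.D R A u) (b • KaehlerDifferential.D R A v)
        = (a * P u b) • KaehlerDifferential.D R A v
          + (b * P a v) • KaehlerDifferential.D R A u
          + (a * b) • KaehlerDifferential.D R A (P u v))
    (conn : KaehlerDifferential R A →ₗ[R] Module.End R M)
    (hconn1 : ∀ (a : A) (α : KaehlerDifferential R A) (m : M),
      conn (a • α) m = a • conn α m)
    (hconn2 : ∀ (α : KaehlerDifferential R A) (a : A) (m : M),
      conn α (a • m) = a • conn α m + (π α (KaehlerDifferential.D R A a)) • m)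
    (hcurv : ∀ (α β : KaehlerDifferential R A) (m : M),
      conn α (conn β m) - conn β (conn α m) - conn (B α β) m = (-(π α β)) • m)
    (T : A → M → M)
    (hT : ∀ (a : A) (m : M), T a m = conn (KaehlerDifferential.D R A a) m + a • m) :
    (∀ (a b : A) (m : M), T (P a b) m = T a (T b m) - T b (T a m)) ∧
    (∀ (r : R) (m : M), T (algebraMap R A r) m = r • m) ∧
    ((∀ a b : A, (∀ m : M, a • m = b • m) → a = b) →
      (∀ α : KaehlerDifferential R A,
        (∀ c : A, π α (KaehlerDifferential.D R A c) = 0) → α = 0) →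
      ∀ a b : A, (∀ m : M, T a m = T b m) → a = b) :=
  representable_poisson_representation_general R A M P hPalt π hπD B hB conn hconn2 hcurv T hT
end

section
/- Let A be a commutative ℂ-algebra with a Poisson structure {·,·} (a ℂ-bilinear alternating bracket satisfying the Jacobi identity and the Leibniz rule), π its Poisson 2-form and [·,·] the Poisson–Rinehart bracket on Ω := Ω[A⁄ℂ]. Let M be an A-module and ∇ : Ω → End_ℂ(M) a ℂ-linear map satisfying ∇(a•α)(m) = a•(∇(α)(m)) and ∇(α)(a•m) = a•(∇(α)(m)) + π(α, D a)•m, whose curvature equals −i·π: ∇(α)∘∇(β) − ∇(β)∘∇(α) − ∇([α,β]) = (scalar multiplication by −i·π(α,β)) for all α,β ∈ Ω. For a ∈ A define the operator â : M → M by â(m) := −i•(∇(D a)(m)) + a•m. Then Dirac's quantization rule holds: for all a,b ∈ A, the operator associated to the Poisson bracket is i times the commutator, \widehat{\{a,b\}} = i•(â∘b̂ − b̂∘â), and for every c ∈ ℂ the operator associated to c·1_A is scalar multiplication by c. (Corollary 4.5.) -/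
/-!
The operators `â = -i ∇_{D a} + a` are the Kostant–Souriau prequantum operators. Expanding
`[â, b̂]`, the Leibniz rule `∇_{D a}(b m) = b ∇_{D a} m + {a,b} m` contributes `-2i {a,b}`, while
the curvature condition `[∇_{D a}, ∇_{D b}] = ∇_{D{a,b}} - i {a,b}` (using `[D a, D b] = D{a,b}`)
contributes the rest; together `i [â, b̂] = -i ∇_{D{a,b}} + {a,b}`. Constants are killed by `D`.
-/

open KaehlerDifferential

theorem LinearMap.apply_one_left_eq_zero_of_leibniz {R A : Type*} [CommSemiring R] [Ring A]
    [Module R A] {P : A →ₗ[R] A →ₗ[R] A}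
    (hPleib : ∀ a b c : A, P (a * b) c = a * P b c + P a c * b) (c : A) : P 1 c = 0 := by
  have h := hPleib 1 1 c
  rw [one_mul, one_mul, mul_one] at h
  exact left_eq_add.mp h

theorem poissonRinehart_D_D {R A : Type*} [CommRing R] [CommRing A] [Algebra R A]
    {P : A →ₗ[R] A →ₗ[R] A} (hPalt : P.IsAlt)
    (hPleib : ∀ a b c : A, P (a * b) c = a * P b c + P a c * b)
    {B : Ω[A⁄R] →ₗ[R] Ω[A⁄R] →ₗ[R] Ω[A⁄R]}
    (hB : ∀ a b u v : A,
      B (a • D R A u) (b • D R A v)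
        = (a * P u b) • D R A v + (b * P a v) • D R A u + (a * b) • D R A (P u v))
    (u v : A) : B (D R A u) (D R A v) = D R A (P u v) := by
  have hP1 := LinearMap.apply_one_left_eq_zero_of_leibniz hPleib
  have hP1' : P u 1 = 0 := by rw [← hPalt.neg, hP1, neg_zero]
  simpa [hP1, hP1'] using hB 1 1 u v

section Prequantization

variable {k A M : Type*} [CommRing k] [CommRing A] [Algebra k A]
  [AddCommGroup M] [Module k M] [Module A M] [IsScalarTower k A M]

def prequantumOp (i : k) (X : Module.End k M) (a : A) (m : M) : M :=
  (-i) • X m + a • m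

theorem commutator_prequantumOp {i : k} (hi : i * i = -1) {X Y Z : Module.End k M} {a b p : A}
    (hX : ∀ m : M, X (b • m) = b • X m + p • m)
    (hY : ∀ m : M, Y (a • m) = a • Y m - p • m)
    (hXY : ∀ m : M, X (Y m) - Y (X m) = Z m - i • p • m) (m : M) :
    i • (prequantumOp i X a (prequantumOp i Y b m) - prequantumOp i Y b (prequantumOp i X a m))
      = prequantumOp i Z p m := by
  simp only [prequantumOp, map_add, map_smul, hX, hY]
  -- `i³` is the coefficient of the commutator; what remains is a multiple of `i² + 1`.
  linear_combination (norm := module) (i * i * i) • hXY m + hi • (i • Z m - (i * i + 1) • p • m)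

theorem prequantumOp_zero_algebraMap (i c : k) (m : M) :
    prequantumOp i (0 : Module.End k M) (algebraMap k A c) m = c • m := by
  rw [prequantumOp, LinearMap.zero_apply, smul_zero, zero_add, algebraMap_smul]

end Prequantization

theorem dirac_quantization_rule_general
    (A M : Type*) [CommRing A] [Algebra ℂ A]
    [AddCommGroup M] [Module ℂ M] [Module A M] [IsScalarTower ℂ A M]
    (P : A →ₗ[ℂ] A →ₗ[ℂ] A)
    (hPalt : ∀ a : A, P a a = 0)
    (hPleib : ∀ a b c : A, P (a * b) c = a * P b c + P a c * b)
    (π : KaehlerDifferential ℂ A →ₗ[A] KaehlerDifferential ℂ A →ₗ[A] A)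
    (hπD : ∀ u v : A,
      π (KaehlerDifferential.D ℂ A u) (KaehlerDifferential.D ℂ A v) = P u v)
    (B : KaehlerDifferential ℂ A →ₗ[ℂ] KaehlerDifferential ℂ A →ₗ[ℂ]
        KaehlerDifferential ℂ A)
    (hB : ∀ a b u v : A,
      B (a • KaehlerDifferential.D ℂ A u) (b • KaehlerDifferential.D ℂ A v)
        = (a * P u b) • KaehlerDifferential.D ℂ A v
          + (b * P a v) • KaehlerDifferential.D ℂ A u
          + (a * b) • KaehlerDifferential.D ℂ A (P u v))
    (conn : KaehlerDifferential ℂ A →ₗ[ℂ] Module.End ℂ M)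
    (hconn2 : ∀ (α : KaehlerDifferential ℂ A) (a : A) (m : M),
      conn α (a • m) = a • conn α m + (π α (KaehlerDifferential.D ℂ A a)) • m)
    (hcurv : ∀ (α β : KaehlerDifferential ℂ A) (m : M),
      conn α (conn β m) - conn β (conn α m) - conn (B α β) m
        = ((-Complex.I) • π α β) • m)
    (hat : A → M → M)
    (hhat : ∀ (a : A) (m : M),
      hat a m = (-Complex.I) • (conn (KaehlerDifferential.D ℂ A a) m) + a • m) :
    (∀ (a b : A) (m : M),
      hat (P a b) m = Complex.I • (hat a (hat b m) - hat b (hat a m))) ∧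
    (∀ (c : ℂ) (m : M), hat (algebraMap ℂ A c) m = c • m) := by
  obtain rfl : hat = fun a => prequantumOp Complex.I (conn (D ℂ A a)) a := funext₂ hhat
  constructor
  · intro a b m
    refine (commutator_prequantumOp Complex.I_mul_I (fun n => ?_) (fun n => ?_) (fun n => ?_) m).symm
    · rw [hconn2, hπD]
    · rw [hconn2, hπD, ← LinearMap.IsAlt.neg hPalt, neg_smul, sub_eq_add_neg]
    · have h := hcurv (D ℂ A a) (D ℂ A b) n
      rw [poissonRinehart_D_D hPalt hPleib hB, hπD, smul_assoc] at h
      linear_combination (norm := module) h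
  · intro c m
    simpa using prequantumOp_zero_algebraMap (A := A) Complex.I c m

/-- **Corollary 4.5** (Dirac's quantization rule).
Let `A` be a commutative `ℂ`-algebra with a Poisson structure `P`, with Poisson
2-form `π` and Poisson–Rinehart bracket `B` on `Ω := Ω[A⁄ℂ]`.  Let `M` be an
`A`-module and `conn` a connection on `M` along `Ω` whose curvature equals
`−i·π`.  For `a : A` define `hat a m := −i • (conn (D a) m) + a • m`.  Then
`hat {a,b} = i • (hat a ∘ hat b − hat b ∘ hat a)`, and for every `c : ℂ` the
operator associated to `c • 1` is scalar multiplication by `c`. -/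
theorem dirac_quantization_rule
    (A M : Type*) [CommRing A] [Algebra ℂ A]
    [AddCommGroup M] [Module ℂ M] [Module A M] [IsScalarTower ℂ A M]
    (P : A →ₗ[ℂ] A →ₗ[ℂ] A)
    (hPalt : ∀ a : A, P a a = 0)
    (hPjac : ∀ a b c : A, P a (P b c) + P b (P c a) + P c (P a b) = 0)
    (hPleib : ∀ a b c : A, P (a * b) c = a * P b c + P a c * b)
    (π : KaehlerDifferential ℂ A →ₗ[A] KaehlerDifferential ℂ A →ₗ[A] A)
    (hπalt : ∀ α, π α α = 0)
    (hπD : ∀ u v : A,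
      π (KaehlerDifferential.D ℂ A u) (KaehlerDifferential.D ℂ A v) = P u v)
    (B : KaehlerDifferential ℂ A →ₗ[ℂ] KaehlerDifferential ℂ A →ₗ[ℂ]
        KaehlerDifferential ℂ A)
    (hB : ∀ a b u v : A,
      B (a • KaehlerDifferential.D ℂ A u) (b • KaehlerDifferential.D ℂ A v)
        = (a * P u b) • KaehlerDifferential.D ℂ A v
          + (b * P a v) • KaehlerDifferential.D ℂ A u
          + (a * b) • KaehlerDifferential.D ℂ A (P u v))
    (conn : KaehlerDifferential ℂ A →ₗ[ℂ] Module.End ℂ M)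
    (hconn1 : ∀ (a : A) (α : KaehlerDifferential ℂ A) (m : M),
      conn (a • α) m = a • conn α m)
    (hconn2 : ∀ (α : KaehlerDifferential ℂ A) (a : A) (m : M),
      conn α (a • m) = a • conn α m + (π α (KaehlerDifferential.D ℂ A a)) • m)
    (hcurv : ∀ (α β : KaehlerDifferential ℂ A) (m : M),
      conn α (conn β m) - conn β (conn α m) - conn (B α β) m
        = ((-Complex.I) • π α β) • m)
    (hat : A → M → M)
    (hhat : ∀ (a : A) (m : M),
      hat a m = (-Complex.I) • (conn (KaehlerDifferential.D ℂ A a) m) + a • m) :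
    (∀ (a b : A) (m : M),
      hat (P a b) m = Complex.I • (hat a (hat b m) - hat b (hat a m))) ∧
    (∀ (c : ℂ) (m : M), hat (algebraMap ℂ A c) m = c • m) :=
  dirac_quantization_rule_general A M P hPalt hPleib π hπD B hB conn hconn2 hcurv hat hhat
end

section
/- Let R be a commutative ring, A a commutative R-algebra, {·,·} a Poisson structure on A, π the Poisson 2-form and [·,·] the Poisson–Rinehart bracket on Ω := Ω[A⁄R] (satisfying in particular π([α,β], Dc) = π(α, D(π(β,Dc))) − π(β, D(π(α,Dc)))). Suppose θ : Ω → A is an A-linear map which is a Poisson potential, i.e. π(α,β) = π(α, D(θ(β))) − π(β, D(θ(α))) − θ([α,β]) for all α,β ∈ Ω. Define ∇ : Ω → End_R(A) by ∇(α)(a) := π(α, D a) − a·θ(α). Then ∇ is a connection on the rank-one free A-module A: ∇(b•α)(a) = b·(∇(α)(a)) and ∇(α)(b·a) = b·(∇(α)(a)) + π(α, D b)·a for all a,b ∈ A, α ∈ Ω; and its curvature equals −π: ∇(α)∘∇(β) − ∇(β)∘∇(α) − ∇([α,β]) = (multiplication by −π(α,β)) for all α,β ∈ Ω. In particular a Poisson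 algebra whose Poisson 2-form admits a Poisson potential is representable. (Construction (4.3.1).) -/
/-!
Expanding `∇α ∘ ∇β − ∇β ∘ ∇α − ∇[α,β]` on `a`, the second-order terms
`π(α, D π(β, D a)) − π(β, D π(α, D a)) − π([α,β], D a)` cancel by the anchor identity, and
what remains is `−a` times `π(α, D θβ) − π(β, D θα) − θ[α,β]`, which the potential identity
identifies with `π(α,β)`.  Beyond these two identities only the Leibniz rule for `D` is used,
so `D` may be any derivation into an `A`-module.
-/

namespace PoissonPotential

variable {R A M : Type*} [CommRing R] [CommRing A] [Algebra R A]
  [AddCommGroup M] [Module A M] [Module R M]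

def connection (π : M →ₗ[A] M →ₗ[A] A) (θ : M →ₗ[A] A) (d : Derivation R A M)
    (α : M) (a : A) : A :=
  π α (d a) - a * θ α

variable (π : M →ₗ[A] M →ₗ[A] A) (θ : M →ₗ[A] A) (d : Derivation R A M)

theorem connection_smul (b : A) (α : M) (a : A) :
    connection π θ d (b • α) a = b * connection π θ d α a := by
  simp only [connection, map_smul, LinearMap.smul_apply, smul_eq_mul]
  ring

theorem connection_mul (α : M) (b a : A) :
    connection π θ d α (b * a) = b * connection π θ d α a + π α (d b) * a := by
  simp only [connection, Derivation.leibniz, map_add, map_smul, smul_eq_mul]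
  ring

theorem connection_curvature {α β γ : M} (a : A)
    (hanch : π γ (d a) = π α (d (π β (d a))) - π β (d (π α (d a))))
    (hθ : π α β = π α (d (θ β)) - π β (d (θ α)) - θ γ) :
    connection π θ d α (connection π θ d β a) - connection π θ d β (connection π θ d α a)
      - connection π θ d γ a = -(π α β) * a := by
  simp only [connection, map_sub, Derivation.leibniz, map_add, map_smul, smul_eq_mul]
  linear_combination a * hθ - hanch

end PoissonPotential

open PoissonPotential in
theorem poisson_potential_gives_connection_general
    (R A : Type*) [CommRing R] [CommRing A] [Algebra R A]
    (π : KaehlerDifferential R A →ₗ[A] KaehlerDifferential R A →ₗ[A] A)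
    (B : KaehlerDifferential R A →ₗ[R] KaehlerDifferential R A →ₗ[R]
        KaehlerDifferential R A)
    (hanch : ∀ (α β : KaehlerDifferential R A) (c : A),
      π (B α β) (KaehlerDifferential.D R A c)
        = π α (KaehlerDifferential.D R A (π β (KaehlerDifferential.D R A c)))
          - π β (KaehlerDifferential.D R A
              (π α (KaehlerDifferential.D R A c))))
    (θ : KaehlerDifferential R A →ₗ[A] A)
    (hθ : ∀ α β : KaehlerDifferential R A,
      π α β = π α (KaehlerDifferential.D R A (θ β))
        - π β (KaehlerDifferential.D R A (θ α)) - θ (B α β))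
    (conn : KaehlerDifferential R A → A → A)
    (hconn : ∀ (α : KaehlerDifferential R A) (a : A),
      conn α a = π α (KaehlerDifferential.D R A a) - a * θ α) :
    (∀ (b : A) (α : KaehlerDifferential R A) (a : A),
      conn (b • α) a = b * conn α a) ∧
    (∀ (α : KaehlerDifferential R A) (b a : A),
      conn α (b * a) = b * conn α a + π α (KaehlerDifferential.D R A b) * a) ∧
    (∀ (α β : KaehlerDifferential R A) (a : A),
      conn α (conn β a) - conn β (conn α a) - conn (B α β) a
        = -(π α β) * a) := by
  obtain rfl : conn = connection π θ (KaehlerDifferential.D R A) :=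
    funext fun α => funext fun a => hconn α a
  exact ⟨connection_smul π θ _, connection_mul π θ _,
    fun α β a => connection_curvature π θ _ a (hanch α β a) (hθ α β)⟩

/-- **Construction (4.3.1).**
Let `(A, P)` be a Poisson algebra with Poisson 2-form `π` and Poisson–Rinehart
bracket `B` on `Ω := Ω[A⁄R]`, and let `θ : Ω → A` be an `A`-linear Poisson
potential: `π α β = π (α, D (θ β)) − π (β, D (θ α)) − θ [α,β]`.  Define
`conn α a := π α (D a) − a * θ α`.  Then `conn` is a connection on the rank-one
free `A`-module `A` and its curvature equals `−π`; in particular a Poisson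
algebra whose Poisson 2-form admits a Poisson potential is representable. -/
theorem poisson_potential_gives_connection
    (R A : Type*) [CommRing R] [CommRing A] [Algebra R A]
    (P : A →ₗ[R] A →ₗ[R] A)
    (hPalt : ∀ a : A, P a a = 0)
    (hPjac : ∀ a b c : A, P a (P b c) + P b (P c a) + P c (P a b) = 0)
    (hPleib : ∀ a b c : A, P (a * b) c = a * P b c + P a c * b)
    (π : KaehlerDifferential R A →ₗ[A] KaehlerDifferential R A →ₗ[A] A)
    (hπalt : ∀ α, π α α = 0)
    (hπD : ∀ u v : A,
      π (KaehlerDifferential.D R A u) (KaehlerDifferential.D R A v) = P u v)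
    (B : KaehlerDifferential R A →ₗ[R] KaehlerDifferential R A →ₗ[R]
        KaehlerDifferential R A)
    (hB : ∀ a b u v : A,
      B (a • KaehlerDifferential.D R A u) (b • KaehlerDifferential.D R A v)
        = (a * P u b) • KaehlerDifferential.D R A v
          + (b * P a v) • KaehlerDifferential.D R A u
          + (a * b) • KaehlerDifferential.D R A (P u v))
    (hanch : ∀ (α β : KaehlerDifferential R A) (c : A),
      π (B α β) (KaehlerDifferential.D R A c)
        = π α (KaehlerDifferential.D R A (π β (KaehlerDifferential.D R A c)))
          - π β (KaehlerDifferential.D R A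
              (π α (KaehlerDifferential.D R A c))))
    (θ : KaehlerDifferential R A →ₗ[A] A)
    (hθ : ∀ α β : KaehlerDifferential R A,
      π α β = π α (KaehlerDifferential.D R A (θ β))
        - π β (KaehlerDifferential.D R A (θ α)) - θ (B α β))
    (conn : KaehlerDifferential R A → A → A)
    (hconn : ∀ (α : KaehlerDifferential R A) (a : A),
      conn α a = π α (KaehlerDifferential.D R A a) - a * θ α) :
    (∀ (b : A) (α : KaehlerDifferential R A) (a : A),
      conn (b • α) a = b * conn α a) ∧
    (∀ (α : KaehlerDifferential R A) (b a : A),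
      conn α (b * a) = b * conn α a + π α (KaehlerDifferential.D R A b) * a) ∧
    (∀ (α β : KaehlerDifferential R A) (a : A),
      conn α (conn β a) - conn β (conn α a) - conn (B α β) a
        = -(π α β) * a) :=
  poisson_potential_gives_connection_general R A π B hanch θ hθ conn hconn
end

section
/- Let R be a commutative ring and A = R[u₁,u₂] the polynomial algebra in two variables (Mathlib's MvPolynomial (Fin 2) R, with u₁ = X 0 and u₂ = X 1). For every polynomial p ∈ A there is exactly one R-bilinear bracket {·,·} : A × A → A that is a derivation in each argument (i.e. {fg,h} = f{g,h} + g{f,h} and {f,gh} = g{f,h} + h{f,g}), is alternating ({f,f} = 0), and satisfies {u₁,u₂} = p. Moreover this bracket satisfies the Jacobi identity, and hence defines a Poisson structure on A. (Example 3.19: Poisson structures on the polynomial algebra in two variables.) -/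
/-!
The bracket is `{f, g} = p · (∂₀f · ∂₁g - ∂₁f · ∂₀g)`. A derivation of a polynomial ring is
determined by its values on the variables, so a bilinear map that is a derivation in each
argument is determined by its values on pairs of variables; if it is moreover alternating and
there are only two variables, it is determined by `{u₁, u₂}`. Hence every bracket with the
required properties is the one above, and its Jacobi identity is a direct computation in which
the only input beyond ring arithmetic is that partial derivatives commute.
-/

open MvPolynomial

theorem LinearMap.IsAlt.apply_fin_two_eq {R M N : Type*} [CommSemiring R] [AddCommMonoid M]
    [Module R M] [AddCommGroup N] [Module R N] {B B' : M →ₗ[R] M →ₗ[R] N}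
    (hB : B.IsAlt) (hB' : B'.IsAlt) (v : Fin 2 → M) (h : B (v 0) (v 1) = B' (v 0) (v 1))
    (i j : Fin 2) : B (v i) (v j) = B' (v i) (v j) :=
  match i, j with
  | 0, 0 | 1, 1 => by rw [hB.self_eq_zero, hB'.self_eq_zero]
  | 0, 1 => h
  | 1, 0 => by rw [← hB.neg, ← hB'.neg, h]

namespace MvPolynomial

variable {R σ : Type*} [CommRing R]

theorem pderiv_pderiv_comm (i j : σ) (f : MvPolynomial σ R) :
    pderiv i (pderiv j f) = pderiv j (pderiv i f) := by
  have hcomm : ⁅pderiv i, pderiv j⁆ = (0 : Derivation R (MvPolynomial σ R) (MvPolynomial σ R)) :=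
    derivation_ext fun k => by
      classical
      rw [Derivation.commutator_apply, pderiv_X, pderiv_X]
      simp [Pi.single_apply, apply_ite]
  simpa [Derivation.commutator_apply, sub_eq_zero] using congr($hcomm f)

theorem linearMap_ext_of_leibniz {D D' : MvPolynomial σ R →ₗ[R] MvPolynomial σ R}
    (hD : ∀ f g, D (f * g) = f * D g + g * D f) (hD' : ∀ f g, D' (f * g) = f * D' g + g * D' f)
    (h : ∀ i, D (X i) = D' (X i)) : D = D' :=
  congr_arg Derivation.toLinearMap (derivation_ext (D₁ := .mk' D hD) (D₂ := .mk' D' hD') h)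

theorem bilinear_ext_of_leibniz
    {B B' : MvPolynomial σ R →ₗ[R] MvPolynomial σ R →ₗ[R] MvPolynomial σ R}
    (hB₁ : ∀ f g h, B (f * g) h = f * B g h + g * B f h)
    (hB₂ : ∀ f g h, B f (g * h) = g * B f h + h * B f g)
    (hB'₁ : ∀ f g h, B' (f * g) h = f * B' g h + g * B' f h)
    (hB'₂ : ∀ f g h, B' f (g * h) = g * B' f h + h * B' f g)
    (h : ∀ i j, B (X i) (X j) = B' (X i) (X j)) : B = B' := by
  have hX : ∀ i, B (X i) = B' (X i) := fun i =>
    linearMap_ext_of_leibniz (hB₂ (X i)) (hB'₂ (X i)) (h i)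
  refine LinearMap.ext₂ fun f g => ?_
  have hflip : B.flip g = B'.flip g :=
    linearMap_ext_of_leibniz (hB₁ · · g) (hB'₁ · · g) fun i => congr($(hX i) g)
  exact congr($hflip f)

noncomputable def jacobianBracket (p : MvPolynomial (Fin 2) R) :
    MvPolynomial (Fin 2) R →ₗ[R] MvPolynomial (Fin 2) R →ₗ[R] MvPolynomial (Fin 2) R :=
  ((LinearMap.mul R _).compl₁₂ (pderiv (0 : Fin 2)).toLinearMap (pderiv 1).toLinearMap -
    (LinearMap.mul R _).compl₁₂ (pderiv (1 : Fin 2)).toLinearMap (pderiv 0).toLinearMap).compr₂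
      (LinearMap.mulLeft R p)

variable (p : MvPolynomial (Fin 2) R)

theorem jacobianBracket_apply (f g : MvPolynomial (Fin 2) R) :
    jacobianBracket p f g = p * (pderiv 0 f * pderiv 1 g - pderiv 1 f * pderiv 0 g) :=
  rfl

theorem jacobianBracket_mul_left (f g h : MvPolynomial (Fin 2) R) :
    jacobianBracket p (f * g) h = f * jacobianBracket p g h + g * jacobianBracket p f h := by
  simp only [jacobianBracket_apply, pderiv_mul]
  ring

theorem jacobianBracket_mul_right (f g h : MvPolynomial (Fin 2) R) :
    jacobianBracket p f (g * h) = g * jacobianBracket p f h + h * jacobianBracket p f g := by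
  simp only [jacobianBracket_apply, pderiv_mul]
  ring

theorem jacobianBracket_isAlt : (jacobianBracket p).IsAlt := fun f => by
  rw [jacobianBracket_apply, mul_comm (pderiv 1 f), sub_self, mul_zero]

theorem jacobianBracket_X_zero_X_one : jacobianBracket p (X 0) (X 1) = p := by
  simp [jacobianBracket_apply, pderiv_X]

theorem jacobianBracket_jacobi (f g h : MvPolynomial (Fin 2) R) :
    jacobianBracket p f (jacobianBracket p g h) + jacobianBracket p g (jacobianBracket p h f) +
      jacobianBracket p h (jacobianBracket p f g) = 0 := by
  simp only [jacobianBracket_apply, map_sub, pderiv_mul, pderiv_pderiv_comm (1 : Fin 2) 0]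
  ring

theorem eq_jacobianBracket
    {B : MvPolynomial (Fin 2) R →ₗ[R] MvPolynomial (Fin 2) R →ₗ[R] MvPolynomial (Fin 2) R}
    (hB₁ : ∀ f g h, B (f * g) h = f * B g h + g * B f h)
    (hB₂ : ∀ f g h, B f (g * h) = g * B f h + h * B f g)
    (hB : B.IsAlt) (hp : B (X 0) (X 1) = p) : B = jacobianBracket p :=
  bilinear_ext_of_leibniz hB₁ hB₂ (jacobianBracket_mul_left p) (jacobianBracket_mul_right p)
    (hB.apply_fin_two_eq (jacobianBracket_isAlt p) X (by rw [hp, jacobianBracket_X_zero_X_one]))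

end MvPolynomial

/-- **Example 3.19** (Poisson structures on the polynomial algebra in two
variables).  Let `A = R[u₁, u₂] = MvPolynomial (Fin 2) R` and `p ∈ A`.  There
is exactly one `R`-bilinear bracket on `A` that is a derivation in each
argument, is alternating, and satisfies `{u₁, u₂} = p`; moreover this bracket
satisfies the Jacobi identity, hence defines a Poisson structure on `A`. -/
theorem polynomial_two_variables_poisson_structure
    (R : Type*) [CommRing R] (p : MvPolynomial (Fin 2) R) :
    (∃! Br : MvPolynomial (Fin 2) R →ₗ[R] MvPolynomial (Fin 2) R →ₗ[R]
        MvPolynomial (Fin 2) R,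
      (∀ f g h : MvPolynomial (Fin 2) R,
        Br (f * g) h = f * Br g h + g * Br f h) ∧
      (∀ f g h : MvPolynomial (Fin 2) R,
        Br f (g * h) = g * Br f h + h * Br f g) ∧
      (∀ f : MvPolynomial (Fin 2) R, Br f f = 0) ∧
      Br (MvPolynomial.X 0) (MvPolynomial.X 1) = p) ∧
    (∀ Br : MvPolynomial (Fin 2) R →ₗ[R] MvPolynomial (Fin 2) R →ₗ[R]
        MvPolynomial (Fin 2) R,
      (∀ f g h : MvPolynomial (Fin 2) R,
        Br (f * g) h = f * Br g h + g * Br f h) →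
      (∀ f g h : MvPolynomial (Fin 2) R,
        Br f (g * h) = g * Br f h + h * Br f g) →
      (∀ f : MvPolynomial (Fin 2) R, Br f f = 0) →
      Br (MvPolynomial.X 0) (MvPolynomial.X 1) = p →
      ∀ f g h : MvPolynomial (Fin 2) R,
        Br f (Br g h) + Br g (Br h f) + Br h (Br f g) = 0) := by
  refine ⟨⟨jacobianBracket p, ⟨jacobianBracket_mul_left p, jacobianBracket_mul_right p,
    jacobianBracket_isAlt p, jacobianBracket_X_zero_X_one p⟩,
    fun _ ⟨hB₁, hB₂, hB, hp⟩ => eq_jacobianBracket p hB₁ hB₂ hB hp⟩, ?_⟩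
  intro Br hB₁ hB₂ hB hp
  obtain rfl := eq_jacobianBracket p hB₁ hB₂ hB hp
  exact jacobianBracket_jacobi p
end

section
/- On the phase space E = (Fin 4 → ℝ) × (Fin 4 → ℝ) with points written (x,p), define for smooth functions g, h : E → ℝ the canonical Poisson bracket {g,h}(z) = Σ_{j∈Fin 4} ( ∂g/∂p_j(z) · ∂h/∂x_j(z) − ∂g/∂x_j(z) · ∂h/∂p_j(z) ), the operator V by (V f)(z) = Σ_{j∈Fin 4} p_j · ∂f/∂p_j(z), and J(x,p) = (p 0)² − (p 1)² − (p 2)² − (p 3)². Then for every infinitely differentiable f : E → ℝ the identity {J, V f} = V({J, f}) − {J, f} holds at every point of E. (Identity (5.4.2), the key step in the proof of Theorem 5.4 that the symplectic potential descends to a Poisson potential for the reduced Poisson algebra.) -/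
noncomputable section PhaseSpace

/-- The phase space of four-dimensional Minkowski space, with points `(x, p)`. -/
abbrev PhaseSpace : Type := (Fin 4 → ℝ) × (Fin 4 → ℝ)

/-- Partial derivative in the `j`-th position variable `x_j`. -/
def partialX (g : PhaseSpace → ℝ) (j : Fin 4) (z : PhaseSpace) : ℝ :=
  fderiv ℝ g z (Pi.single j 1, 0)

/-- Partial derivative in the `j`-th momentum variable `p_j`. -/
def partialP (g : PhaseSpace → ℝ) (j : Fin 4) (z : PhaseSpace) : ℝ :=
  fderiv ℝ g z (0, Pi.single j 1)

/-- The canonical Poisson bracket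
`{g,h}(z) = Σ_j (∂g/∂p_j · ∂h/∂x_j − ∂g/∂x_j · ∂h/∂p_j)(z)`. -/
def poissonBracket (g h : PhaseSpace → ℝ) (z : PhaseSpace) : ℝ :=
  ∑ j : Fin 4, (partialP g j z * partialX h j z - partialX g j z * partialP h j z)

/-- The operator `(V f)(z) = Σ_j p_j · ∂f/∂p_j (z)`. -/
def momentumEuler (f : PhaseSpace → ℝ) (z : PhaseSpace) : ℝ :=
  ∑ j : Fin 4, z.2 j * partialP f j z

/-- The zero-rest-mass constraint `J (x,p) = p₀² − p₁² − p₂² − p₃²`. -/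
def constraintJ (z : PhaseSpace) : ℝ :=
  (z.2 0) ^ 2 - (z.2 1) ^ 2 - (z.2 2) ^ 2 - (z.2 3) ^ 2

end PhaseSpace

/-! Since `J` does not depend on `x`, `{J, g} = Σ_j ∂J/∂p_j · ∂g/∂x_j`. Applying `V` to `{J, f}`
with the product rule gives `{J, V f}`, once `∂/∂p_k` and `∂/∂x_j` are commuted, plus
`Σ_j V(∂J/∂p_j) · ∂f/∂x_j`; the latter is `{J, f}` because each `∂J/∂p_j` is linear in `p`,
so that Euler's identity `V(∂J/∂p_j) = ∂J/∂p_j` holds. -/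

section DirectionalDerivatives

variable {E F : Type*} [NormedAddCommGroup E] [NormedSpace ℝ E]
  [NormedAddCommGroup F] [NormedSpace ℝ F]

theorem ContDiff.differentiable_fderiv_apply {f : E → F} (hf : ContDiff ℝ 2 f) (v : E) :
    Differentiable ℝ (fun w => fderiv ℝ f w v) :=
  ((hf.fderiv_right (m := 1) (by norm_num)).differentiable (by norm_num)).clm_apply
    (differentiable_const v)

theorem fderiv_fderiv_apply_comm {f : E → F} (hf : ContDiff ℝ 2 f) (z u v : E) :
    fderiv ℝ (fun w => fderiv ℝ f w u) z v = fderiv ℝ (fun w => fderiv ℝ f w v) z u := by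
  have hf' : DifferentiableAt ℝ (fderiv ℝ f) z :=
    (hf.fderiv_right (m := 1) (by norm_num)).differentiable (by norm_num) z
  simp only [fderiv_clm_apply hf' (differentiableAt_const _), fderiv_fun_const, Pi.zero_apply,
    ContinuousLinearMap.comp_zero, zero_add, ContinuousLinearMap.flip_apply]
  exact (hf.contDiffAt.isSymmSndFDerivAt (by simp)) v u

theorem fderiv_sum_mul_apply {ι : Type*} [Fintype ι] {a b : ι → E → ℝ} {z : E}
    (ha : ∀ i, DifferentiableAt ℝ (a i) z) (hb : ∀ i, DifferentiableAt ℝ (b i) z) (v : E) :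
    fderiv ℝ (fun w => ∑ i, a i w * b i w) z v
      = ∑ i, (a i z * fderiv ℝ (b i) z v + b i z * fderiv ℝ (a i) z v) := by
  rw [fderiv_fun_sum (A := fun i w => a i w * b i w) fun i _ => (ha i).mul (hb i)]
  simp [fderiv_fun_mul (ha _) (hb _)]

end DirectionalDerivatives

section PoissonCalculus

variable {f J : PhaseSpace → ℝ}

theorem ContDiff.differentiable_partialX (hf : ContDiff ℝ 2 f) (j : Fin 4) :
    Differentiable ℝ (partialX f j) :=
  hf.differentiable_fderiv_apply _

theorem ContDiff.differentiable_partialP (hf : ContDiff ℝ 2 f) (j : Fin 4) :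
    Differentiable ℝ (partialP f j) :=
  hf.differentiable_fderiv_apply _

theorem partialX_partialP_comm (hf : ContDiff ℝ 2 f) (j k : Fin 4) (z : PhaseSpace) :
    partialX (partialP f k) j z = partialP (partialX f j) k z :=
  fderiv_fderiv_apply_comm hf z _ _

theorem fderiv_momentum_apply (k : Fin 4) (z v : PhaseSpace) :
    fderiv ℝ (fun w : PhaseSpace => w.2 k) z v = v.2 k := by
  simp [fderiv_apply, fderiv_snd]

theorem fderiv_const_mul_momentum_apply (c : ℝ) (k : Fin 4) (z v : PhaseSpace) :
    fderiv ℝ (fun w : PhaseSpace => c * w.2 k) z v = c * v.2 k := by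
  rw [fderiv_const_mul (by fun_prop), smul_apply, fderiv_momentum_apply, smul_eq_mul]

theorem poissonBracket_apply_of_partialX_eq_zero (hJ : ∀ j w, partialX J j w = 0)
    (g : PhaseSpace → ℝ) (w : PhaseSpace) :
    poissonBracket J g w = ∑ j, partialP J j w * partialX g j w := by
  simp [poissonBracket, hJ]

theorem partialX_momentumEuler (hf : ContDiff ℝ 2 f) (j : Fin 4) (z : PhaseSpace) :
    partialX (momentumEuler f) j z = ∑ k, z.2 k * partialX (partialP f k) j z := by
  have hp : ∀ k, DifferentiableAt ℝ (fun w : PhaseSpace => w.2 k) z := fun k => by fun_prop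
  unfold partialX momentumEuler
  rw [fderiv_sum_mul_apply hp (fun k => hf.differentiable_partialP k z)]
  simp [fderiv_momentum_apply]

theorem partialP_poissonBracket (hJ : ContDiff ℝ 2 J) (hf : ContDiff ℝ 2 f)
    (hJx : ∀ j w, partialX J j w = 0) (k : Fin 4) (z : PhaseSpace) :
    partialP (poissonBracket J f) k z
      = ∑ j, (partialP J j z * partialP (partialX f j) k z
          + partialX f j z * partialP (partialP J j) k z) := by
  have hbracket : poissonBracket J f = fun w => ∑ j, partialP J j w * partialX f j w :=
    funext (poissonBracket_apply_of_partialX_eq_zero hJx f)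
  rw [hbracket]
  exact fderiv_sum_mul_apply (fun j => hJ.differentiable_partialP j z)
    (fun j => hf.differentiable_partialX j z) _

theorem poissonBracket_momentumEuler (hJ : ContDiff ℝ 2 J) (hf : ContDiff ℝ 2 f)
    (hJx : ∀ j w, partialX J j w = 0) {z : PhaseSpace}
    (hJV : ∀ j, momentumEuler (partialP J j) z = partialP J j z) :
    poissonBracket J (momentumEuler f) z
      = momentumEuler (poissonBracket J f) z - poissonBracket J f z := by
  rw [eq_sub_iff_add_eq]
  symm
  calc momentumEuler (poissonBracket J f) z
      = ∑ j, partialP J j z * ∑ k, z.2 k * partialP (partialX f j) k z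
          + ∑ j, partialX f j z * momentumEuler (partialP J j) z := by
        simp only [momentumEuler, partialP_poissonBracket hJ hf hJx, Finset.mul_sum, mul_add,
          Finset.sum_add_distrib]
        congr 1 <;> rw [Finset.sum_comm] <;>
          exact Finset.sum_congr rfl fun _ _ => Finset.sum_congr rfl fun _ _ => by ring
    _ = poissonBracket J (momentumEuler f) z + poissonBracket J f z := by
        simp only [hJV, poissonBracket_apply_of_partialX_eq_zero hJx, partialX_momentumEuler hf,
          partialX_partialP_comm hf, mul_comm (partialX f _ z)]

end PoissonCalculus

section Constraint

def minkowskiSign : Fin 4 → ℝ := ![1, -1, -1, -1]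

theorem constraintJ_eq_sum :
    constraintJ = fun w => ∑ k, minkowskiSign k * w.2 k * w.2 k := by
  ext w
  simp only [constraintJ, minkowskiSign, Fin.sum_univ_four, Matrix.cons_val]
  ring

theorem contDiff_constraintJ {n : WithTop ℕ∞} : ContDiff ℝ n constraintJ := by
  unfold constraintJ
  fun_prop

theorem fderiv_constraintJ_apply (z v : PhaseSpace) :
    fderiv ℝ constraintJ z v = ∑ k, 2 * minkowskiSign k * z.2 k * v.2 k := by
  rw [constraintJ_eq_sum, fderiv_sum_mul_apply (fun k => by fun_prop) (fun k => by fun_prop)]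
  simp only [fderiv_momentum_apply, fderiv_const_mul_momentum_apply]
  exact Finset.sum_congr rfl fun k _ => by ring

theorem partialX_constraintJ (j : Fin 4) (z : PhaseSpace) : partialX constraintJ j z = 0 := by
  simp [partialX, fderiv_constraintJ_apply]

theorem partialP_constraintJ (j : Fin 4) :
    partialP constraintJ j = fun w => 2 * minkowskiSign j * w.2 j := by
  ext w
  simp [partialP, fderiv_constraintJ_apply, Pi.single_apply]

theorem momentumEuler_partialP_constraintJ (j : Fin 4) (z : PhaseSpace) :
    momentumEuler (partialP constraintJ j) z = partialP constraintJ j z := by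
  rw [partialP_constraintJ]
  simp [momentumEuler, partialP, fderiv_const_mul_momentum_apply, Pi.single_apply, mul_comm]

end Constraint

/-- **Identity (5.4.2).**
For every infinitely differentiable `f` on the phase space and every point `z`,
`{J, V f}(z) = V ({J, f})(z) − {J, f}(z)`. -/
theorem constraint_bracket_identity
    (f : PhaseSpace → ℝ) (hf : ContDiff ℝ (⊤ : ℕ∞) f) (z : PhaseSpace) :
    poissonBracket constraintJ (fun w => momentumEuler f w) z
      = momentumEuler (fun w => poissonBracket constraintJ f w) z
        - poissonBracket constraintJ f z :=
  poissonBracket_momentumEuler contDiff_constraintJ (hf.of_le (WithTop.coe_le_coe.2 le_top))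
    partialX_constraintJ (momentumEuler_partialP_constraintJ · z)
end
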